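/- arXiv:2310.09579 — 7 statements merged into one kernel-verified Lean document; each statement's English description precedes it below -/
import Mathlib

section
/- Let Ω ⊂ ℝⁿ be a bounded domain, n ≥ 3, 1 ≤ k ≤ n, 0 < γ < k, and let b be a positive continuous function on cl Ω. Then there is no positive function u ∈ Φ^k(Ω) satisfying S_k(D²u) = b(x) u^γ in Ω and u(x) → ∞ as x → ∂Ω (i.e. u(x) → ∞ as dist(x, ∂Ω) → 0). -/
open scoped Classical
open MeasureTheory Real Filter

noncomputable section

/-- The `k`-th elementary symmetric function `σ_k` of `v : Fin n → ℝ`. -/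
def esymm {n : ℕ} (k : ℕ) (v : Fin n → ℝ) : ℝ :=
  ∑ s ∈ Finset.univ.powersetCard k, ∏ i ∈ s, v i

/-- The Hessian matrix `D²u(x)`. -/
def hess {n : ℕ} (u : EuclideanSpace ℝ (Fin n) → ℝ) (x : EuclideanSpace ℝ (Fin n)) :
    Matrix (Fin n) (Fin n) ℝ := Matrix.of fun i j =>
  iteratedFDeriv ℝ 2 u x ![EuclideanSpace.single i 1, EuclideanSpace.single j 1]

/-- The eigenvalues `λ(D²u(x))` of the Hessian (which is symmetric for `C²` functions). -/
def hessEigen {n : ℕ} (u : EuclideanSpace ℝ (Fin n) → ℝ) (x : EuclideanSpace ℝ (Fin n)) :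
    Fin n → ℝ :=
  if h : (hess u x).IsHermitian then h.eigenvalues else 0

/-- `S_k(D²u)(x) := σ_k(λ(D²u(x)))`. -/
def Sk {n : ℕ} (k : ℕ) (u : EuclideanSpace ℝ (Fin n) → ℝ) (x : EuclideanSpace ℝ (Fin n)) : ℝ :=
  esymm k (hessEigen u x)

/-- Membership in the Gårding cone `Γ_k = {λ : σ_l(λ) > 0, 1 ≤ l ≤ k}`. -/
def inGamma {n : ℕ} (k : ℕ) (v : Fin n → ℝ) : Prop :=
  ∀ l : ℕ, 1 ≤ l → l ≤ k → 0 < esymm l v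

lemma secondDeriv_nonneg_of_isLocalMin {g : ℝ → ℝ} {I : Set ℝ} (hI : IsOpen I) (h0 : (0:ℝ) ∈ I)
    (hg : ContDiffOn ℝ 2 g I) (hmin : IsLocalMin g 0) : 0 ≤ deriv (deriv g) 0 := by
  by_contra hneg
  push_neg at hneg
  have hg1 : ContDiffOn ℝ 1 (deriv g) I := hg.deriv_of_isOpen hI (by norm_num)
  have hc2 : ContinuousOn (deriv (deriv g)) I :=
    hg1.continuousOn_deriv_of_isOpen hI le_rfl
  have hc2at : ContinuousAt (deriv (deriv g)) 0 := hc2.continuousAt (hI.mem_nhds h0)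
  have hev : ∀ᶠ t in nhds (0:ℝ), t ∈ I ∧ deriv (deriv g) t < 0 ∧ g 0 ≤ g t := by
    have h1 : ∀ᶠ t in nhds (0:ℝ), t ∈ I := hI.mem_nhds h0
    have h2 : ∀ᶠ t in nhds (0:ℝ), deriv (deriv g) t < 0 :=
      hc2at.eventually_lt continuousAt_const hneg
    exact h1.and (h2.and hmin)
  obtain ⟨ε, hε, hball⟩ := Metric.eventually_nhds_iff_ball.mp hev
  have hball' : Metric.ball (0:ℝ) ε ⊆ I := fun t ht => (hball t ht).1
  have hanti : StrictAntiOn (deriv g) (Metric.ball (0:ℝ) ε) := by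
    apply strictAntiOn_of_deriv_neg (convex_ball 0 ε) (hg1.continuousOn.mono hball')
    intro t ht
    rw [Metric.isOpen_ball.interior_eq] at ht
    exact (hball t ht).2.1
  have hd0 : deriv g 0 = 0 := hmin.deriv_eq_zero
  have hmemb : ∀ t, t ∈ Set.Ico (0:ℝ) ε → t ∈ Metric.ball (0:ℝ) ε := by
    intro t ht
    rw [Real.ball_eq_Ioo]
    constructor <;> simp at ht ⊢ <;> [linarith [ht.1, ht.2]; exact ht.2]
  have hganti : StrictAntiOn g (Set.Ico (0:ℝ) ε) := by
    apply strictAntiOn_of_deriv_neg (convex_Ico 0 ε)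
      (hg.continuousOn.mono (fun t ht => hball' (hmemb t ht)))
    intro t ht
    rw [interior_Ico] at ht
    have h0b : (0:ℝ) ∈ Metric.ball (0:ℝ) ε := by simpa using hε
    have htb : t ∈ Metric.ball (0:ℝ) ε := hmemb t ⟨ht.1.le, ht.2⟩
    have := hanti h0b htb ht.1
    rwa [hd0] at this
  have h1 : g (ε/2) < g 0 := hganti ⟨le_rfl, hε⟩ ⟨by positivity, by linarith⟩ (by positivity)
  have h2 : g 0 ≤ g (ε/2) :=
    (hball (ε/2) (by rw [Real.ball_eq_Ioo]; constructor <;> simp <;> linarith)).2.2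
  linarith

lemma quad_lower_bound {n : ℕ} {u : EuclideanSpace ℝ (Fin n) → ℝ}
    {Ω : Set (EuclideanSpace ℝ (Fin n))}
    (hΩ : IsOpen Ω) (hu : ContDiffOn ℝ 2 u Ω) {a : ℝ} {x1 : EuclideanSpace ℝ (Fin n)}
    (hx1 : x1 ∈ Ω)
    (hmin : ∀ x ∈ Ω, u x1 - a * ‖x1‖^2 ≤ u x - a * ‖x‖^2)
    (ξ : EuclideanSpace ℝ (Fin n)) :
    2*a*‖ξ‖^2 ≤ fderiv ℝ (fderiv ℝ u) x1 ξ ξ := by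
  set L : ℝ → EuclideanSpace ℝ (Fin n) := fun t => x1 + t • ξ with hLdef
  set c0 : ℝ := a*‖x1‖^2 with hc0
  set c1 : ℝ := 2*a*(inner ℝ x1 ξ : ℝ) with hc1
  set c2 : ℝ := a*‖ξ‖^2 with hc2
  have hL0 : L 0 = x1 := by simp [hLdef]
  have hLnorm : ∀ t : ℝ, a * ‖L t‖^2 = c0 + c1*t + c2*t^2 := by
    intro t
    simp only [hLdef]
    rw [norm_add_sq_real, norm_smul, real_inner_smul_right]
    simp only [Real.norm_eq_abs, mul_pow, sq_abs, hc0, hc1, hc2]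
    ring
  set g : ℝ → ℝ := fun t => u (L t) - (c0 + c1*t + c2*t^2) with hgdef
  set I : Set ℝ := L ⁻¹' Ω with hIdef
  have hLcont : Continuous L := by fun_prop
  have hLcd : ContDiff ℝ 2 L := by fun_prop
  have hI : IsOpen I := hΩ.preimage hLcont
  have h0 : (0:ℝ) ∈ I := by simp [hIdef, hL0, hx1]
  have hgI : ContDiffOn ℝ 2 g I := by
    apply ContDiffOn.sub
    · exact hu.comp hLcd.contDiffOn (fun t ht => ht)
    · exact (by fun_prop : ContDiff ℝ 2 (fun t : ℝ => c0 + c1*t + c2*t^2)).contDiffOn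
  have hminloc : IsLocalMin g 0 := by
    filter_upwards [hI.mem_nhds h0] with t ht
    have h1 := hmin (L t) ht
    have h2 := hLnorm t
    have h3 := hLnorm 0
    simp only [hL0] at h3
    simp only [hgdef, hL0]
    nlinarith [h1, h2, h3]
  have hdd := secondDeriv_nonneg_of_isLocalMin hI h0 hgI hminloc
  have hLd : ∀ t : ℝ, HasDerivAt L ξ t := by
    intro t
    have := ((hasDerivAt_id t).smul_const ξ).const_add x1
    simpa [hLdef] using this
  set ψ : ℝ → ℝ := fun t => fderiv ℝ u (L t) ξ - (c1 + 2*c2*t) with hψdef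
  have hpoly : ∀ t : ℝ, HasDerivAt (fun s : ℝ => c0 + c1*s + c2*s^2) (c1 + 2*c2*t) t := by
    intro t
    have h := ((((hasDerivAt_id t).const_mul c1).const_add c0).add
      ((hasDerivAt_pow 2 t).const_mul c2))
    refine h.congr_deriv ?_
    push_cast
    ring
  have hψ : ∀ t ∈ I, HasDerivAt g (ψ t) t := by
    intro t ht
    have hud : DifferentiableAt ℝ u (L t) :=
      (hu.contDiffAt (hΩ.mem_nhds ht)).differentiableAt (by norm_num)
    have h1 : HasDerivAt (fun s => u (L s)) (fderiv ℝ u (L t) ξ) t :=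
      hud.hasFDerivAt.comp_hasDerivAt t (hLd t)
    exact h1.sub (hpoly t)
  set D := fderiv ℝ (fderiv ℝ u) x1 with hDdef
  have hD : DifferentiableAt ℝ (fderiv ℝ u) x1 :=
    ((hu.contDiffAt (hΩ.mem_nhds hx1)).fderiv_right (m := 1)
      (by norm_num)).differentiableAt one_ne_zero
  have hcomp : HasDerivAt (fun t => fderiv ℝ u (L t)) (D ξ) 0 := by
    have hf : HasFDerivAt (fderiv ℝ u) D (L 0) := by rw [hL0]; exact hD.hasFDerivAt
    exact hf.comp_hasDerivAt 0 (hLd 0)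
  have happly : HasDerivAt (fun t => fderiv ℝ u (L t) ξ) (D ξ ξ) 0 := by
    have h := ((ContinuousLinearMap.apply ℝ ℝ ξ).hasFDerivAt).comp_hasDerivAt 0 hcomp
    exact h
  have hlin : HasDerivAt (fun t : ℝ => c1 + 2*c2*t) (2*c2) 0 := by
    have := ((hasDerivAt_id (0:ℝ)).const_mul (2*c2)).const_add c1
    simpa using this
  have hψ0 : HasDerivAt ψ (D ξ ξ - 2*c2) 0 := happly.sub hlin
  have heq : deriv g =ᶠ[nhds (0:ℝ)] ψ := by
    filter_upwards [hI.mem_nhds h0] with t ht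
    exact (hψ t ht).deriv
  have hfinal : deriv (deriv g) 0 = D ξ ξ - 2*c2 := by
    rw [heq.deriv_eq, hψ0.deriv]
  rw [hfinal] at hdd
  simp only [hc2] at hdd
  linarith

lemma hess_apply {n : ℕ} (u : EuclideanSpace ℝ (Fin n) → ℝ) (x : EuclideanSpace ℝ (Fin n))
    (i j : Fin n) : hess u x i j =
    fderiv ℝ (fderiv ℝ u) x (EuclideanSpace.single i 1) (EuclideanSpace.single j 1) := by
  simp [hess, iteratedFDeriv_two_apply]

lemma hess_herm {n : ℕ} {u : EuclideanSpace ℝ (Fin n) → ℝ} {Ω : Set (EuclideanSpace ℝ (Fin n))}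
    (hΩ : IsOpen Ω) (hu : ContDiffOn ℝ 2 u Ω) {x1 : EuclideanSpace ℝ (Fin n)} (hx1 : x1 ∈ Ω) :
    (hess u x1).IsHermitian := by
  have hs : IsSymmSndFDerivAt ℝ u x1 :=
    (hu.contDiffAt (hΩ.mem_nhds hx1)).isSymmSndFDerivAt (by norm_num)
  rw [Matrix.IsHermitian]
  ext i j
  simp only [Matrix.conjTranspose_apply, RCLike.star_def, starRingEnd_apply, star_trivial,
    hess_apply]
  exact hs.eq _ _

lemma euclidean_eq_sum_single {n : ℕ} (w : EuclideanSpace ℝ (Fin n)) :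
    w = ∑ i, w i • EuclideanSpace.single i 1 := by
  ext j
  rw [show (∑ i, w i • EuclideanSpace.single i (1:ℝ)) j
      = ∑ i, (w i • EuclideanSpace.single i (1:ℝ)) j from by rw [WithLp.ofLp_sum]; exact Finset.sum_apply j Finset.univ _]
  simp [EuclideanSpace.single_apply]

lemma esymm_ge {n k : ℕ} (hkn : k ≤ n) {c : ℝ} (hc : 0 ≤ c) {v : Fin n → ℝ} (hv : ∀ j, c ≤ v j) :
    c^k ≤ esymm k v := by
  have hcard0 : k ≤ (Finset.univ : Finset (Fin n)).card := by
    simpa using hkn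
  obtain ⟨s0, hs0⟩ := Finset.powersetCard_nonempty.2 hcard0
  have hterm : ∀ s ∈ Finset.univ.powersetCard k, (0:ℝ) ≤ ∏ i ∈ s, v i :=
    fun s _ => Finset.prod_nonneg (fun i _ => le_trans hc (hv i))
  have h0 : c^k ≤ ∏ i ∈ s0, v i := by
    have hcard : s0.card = k := (Finset.mem_powersetCard.1 hs0).2
    calc c^k = ∏ _i ∈ s0, c := by rw [Finset.prod_const, hcard]
    _ ≤ ∏ i ∈ s0, v i := Finset.prod_le_prod (fun _ _ => hc) (fun i _ => hv i)
  exact h0.trans (Finset.single_le_sum hterm hs0)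

lemma eigen_ge {n : ℕ} {u : EuclideanSpace ℝ (Fin n) → ℝ} {x1 : EuclideanSpace ℝ (Fin n)} {a : ℝ}
    (hherm : (hess u x1).IsHermitian)
    (hquad : ∀ ξ : EuclideanSpace ℝ (Fin n), 2*a*‖ξ‖^2 ≤ fderiv ℝ (fderiv ℝ u) x1 ξ ξ)
    (j : Fin n) : 2*a ≤ hessEigen u x1 j := by
  set v : EuclideanSpace ℝ (Fin n) := hherm.eigenvectorBasis j with hv
  have hnorm : ‖v‖ = 1 := hherm.eigenvectorBasis.orthonormal.1 j
  have hval : hessEigen u x1 j = hherm.eigenvalues j := by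
    rw [hessEigen, dif_pos hherm]
  have heig : hherm.eigenvalues j
      = dotProduct (⇑v) (Matrix.mulVec (hess u x1) ⇑v) := by
    have := hherm.eigenvalues_eq j
    simpa using this
  have hD : fderiv ℝ (fderiv ℝ u) x1 v v
      = dotProduct (⇑v) (Matrix.mulVec (hess u x1) ⇑v) := by
    conv_lhs => rw [euclidean_eq_sum_single v]
    simp only [map_sum, _root_.map_smul, ContinuousLinearMap.sum_apply, ContinuousLinearMap.smul_apply,
      smul_eq_mul]
    simp only [dotProduct, Matrix.mulVec, hess_apply]
    apply Finset.sum_congr rfl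
    intro i _
    rw [Finset.mul_sum, Finset.mul_sum]
    apply Finset.sum_congr rfl
    intro l _
    have hsym : fderiv ℝ (fderiv ℝ u) x1 (EuclideanSpace.single l 1) (EuclideanSpace.single i 1)
        = fderiv ℝ (fderiv ℝ u) x1 (EuclideanSpace.single i 1) (EuclideanSpace.single l 1) := by
      have h := hherm.apply l i
      simp only [star_trivial] at h
      rw [hess_apply, hess_apply] at h
      exact h.symm
    rw [hsym]
    ring
  have h2 := hquad v
  rw [hnorm] at h2
  rw [hval, heig, ← hD]
  simpa using h2

/-- **Lemma 2.2 (nonexistence of boundary blow-up solutions).** In a bounded domain `Ω`,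
the problem `S_k(D²u) = b(x) u^γ` in `Ω`, `u(x) → ∞` as `x → ∂Ω`, has no positive
solution `u ∈ Φ^k(Ω)`. -/
theorem no_large_solution_in_bounded_domain
    (n k : ℕ) (hn : 3 ≤ n) (hk1 : 1 ≤ k) (hkn : k ≤ n)
    (γ : ℝ) (hγ0 : 0 < γ) (hγk : γ < k)
    (Ω : Set (EuclideanSpace ℝ (Fin n)))
    (hΩ_open : IsOpen Ω) (hΩ_conn : IsConnected Ω) (hΩ_bdd : Bornology.IsBounded Ω)
    (b : EuclideanSpace ℝ (Fin n) → ℝ)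
    (hb_pos : ∀ x ∈ closure Ω, 0 < b x) (hb_cont : ContinuousOn b (closure Ω)) :
    ¬ ∃ u : EuclideanSpace ℝ (Fin n) → ℝ,
      ContDiffOn ℝ 2 u Ω ∧ (∀ x ∈ Ω, inGamma k (hessEigen u x)) ∧
      (∀ x ∈ Ω, 0 < u x) ∧ (∀ x ∈ Ω, Sk k u x = b x * u x ^ γ) ∧
      (∀ M : ℝ, ∃ δ > (0:ℝ), ∀ x ∈ Ω, Metric.infDist x (frontier Ω) < δ → M ≤ u x) := by
  rintro ⟨u, hu_smooth, -, hu_pos, hu_eq, hu_blow⟩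
  obtain ⟨p, hp⟩ := hΩ_conn.nonempty
  obtain ⟨R, hR⟩ := hΩ_bdd.subset_closedBall 0
  have hR0 : 0 ≤ R := by
    have := hR hp
    rw [Metric.mem_closedBall] at this
    exact le_trans dist_nonneg this
  have hxR : ∀ x ∈ Ω, ‖x‖ ≤ R := by
    intro x hx
    have := hR hx
    rwa [Metric.mem_closedBall, dist_zero_right] at this
  have hclΩ : IsCompact (closure Ω) :=
    Metric.isCompact_of_isClosed_isBounded isClosed_closure hΩ_bdd.closure
  obtain ⟨xB, hxB, hBmax⟩ := hclΩ.exists_isMaxOn ⟨p, subset_closure hp⟩ hb_cont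
  set B := b xB with hBdef
  have hB0 : 0 < B := hb_pos xB hxB
  have hup : 0 < u p := hu_pos p hp
  -- step 1 : interior minimum of u - a‖x‖²
  have key : ∀ a : ℝ, 0 < a → ∃ x1 ∈ Ω, ∀ x ∈ Ω, u x1 - a*‖x1‖^2 ≤ u x - a*‖x‖^2 := by
    intro a ha
    set W := a * R^2 with hW
    have hW0 : 0 ≤ W := by positivity
    have hbnd : ∀ x ∈ Ω, 0 ≤ a*‖x‖^2 ∧ a*‖x‖^2 ≤ W := by
      intro x hx
      constructor
      · positivity
      · have h1 := hxR x hx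
        have h2 : ‖x‖^2 ≤ R^2 := by nlinarith [norm_nonneg x]
        nlinarith
    obtain ⟨δ, hδ0, hδ⟩ := hu_blow (u p + 2*W + 1)
    set K := {x | x ∈ Ω ∧ δ ≤ Metric.infDist x (frontier Ω)} with hKdef
    have hpK : p ∈ K := by
      refine ⟨hp, ?_⟩
      by_contra hlt
      push_neg at hlt
      have := hδ p hp hlt
      linarith
    have hKΩ : K ⊆ Ω := fun x hx => hx.1
    have hKclosed : IsClosed K := by
      have hEq : K = closure Ω ∩ {x | δ ≤ Metric.infDist x (frontier Ω)} := by
        apply Set.Subset.antisymm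
        · rintro x ⟨h1, h2⟩
          exact ⟨subset_closure h1, h2⟩
        · rintro x ⟨h1, h2⟩
          refine ⟨?_, h2⟩
          by_contra hxΩ
          have hxf : x ∈ frontier Ω := by
            rw [frontier, hΩ_open.interior_eq]
            exact ⟨h1, hxΩ⟩
          have h0 := Metric.infDist_zero_of_mem hxf
          have h2' : δ ≤ Metric.infDist x (frontier Ω) := h2
          rw [h0] at h2'
          linarith
      rw [hEq]
      exact isClosed_closure.inter
        (isClosed_le continuous_const (Metric.continuous_infDist_pt _))
    have hKcpt : IsCompact K :=
      Metric.isCompact_of_isClosed_isBounded hKclosed (hΩ_bdd.subset hKΩ)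
    have hcontK : ContinuousOn (fun x => u x - a*‖x‖^2) K := by
      apply ContinuousOn.sub
      · exact hu_smooth.continuousOn.mono hKΩ
      · exact (by fun_prop : Continuous fun x : EuclideanSpace ℝ (Fin n) =>
          a*‖x‖^2).continuousOn
    obtain ⟨x1, hx1K, hmin1⟩ := hKcpt.exists_isMinOn ⟨p, hpK⟩ hcontK
    refine ⟨x1, hKΩ hx1K, ?_⟩
    intro x hx
    by_cases hxK : x ∈ K
    · exact hmin1 hxK
    · have hxd : Metric.infDist x (frontier Ω) < δ := by
        by_contra h
        push_neg at h
        exact hxK ⟨hx, h⟩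
      have hux := hδ x hx hxd
      have h1 : u x1 - a*‖x1‖^2 ≤ u p - a*‖p‖^2 := hmin1 hpK
      have h2 := (hbnd x hx).2
      have h3 := (hbnd p hp).1
      linarith
  -- step 2 : master inequality
  have master : ∀ a : ℝ, 1 ≤ a → a^(k:ℝ) ≤ (B * (u p + R^2)^γ) * a^γ := by
    intro a ha1
    have ha : (0:ℝ) < a := lt_of_lt_of_le one_pos ha1
    obtain ⟨x1, hx1, hmin⟩ := key a ha
    have hquad := fun ξ => quad_lower_bound hΩ_open hu_smooth hx1 hmin ξ
    have hherm := hess_herm hΩ_open hu_smooth hx1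
    have heig := eigen_ge hherm hquad
    have hesymm : (2*a)^k ≤ esymm k (hessEigen u x1) :=
      esymm_ge hkn (by positivity) heig
    have hak : a^k ≤ (2*a)^k := pow_le_pow_left₀ ha.le (by linarith) k
    have hu1 : 0 < u x1 := hu_pos x1 hx1
    have hux1 : u x1 ≤ u p + a * R^2 := by
      have h := hmin p hp
      have h1 : ‖x1‖ ≤ R := hxR x1 hx1
      have hx1s : ‖x1‖^2 ≤ R^2 := by nlinarith [norm_nonneg x1]
      have h4 : a*‖x1‖^2 ≤ a*R^2 := by nlinarith
      have h5 : (0:ℝ) ≤ a*‖p‖^2 := by positivity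
      linarith
    have hb1 : b x1 ≤ B := hBmax (subset_closure hx1)
    have hb1' : 0 < b x1 := hb_pos x1 (subset_closure hx1)
    have hRHS : b x1 * u x1 ^ γ ≤ B * (a * (u p + R^2)) ^ γ := by
      apply mul_le_mul hb1 ?_ (Real.rpow_nonneg hu1.le γ) hB0.le
      apply Real.rpow_le_rpow hu1.le ?_ hγ0.le
      nlinarith
    have hfin : a^k ≤ B * (a*(u p + R^2))^γ := by
      calc a^k ≤ (2*a)^k := hak
      _ ≤ esymm k (hessEigen u x1) := hesymm
      _ = Sk k u x1 := rfl
      _ = b x1 * u x1 ^ γ := hu_eq x1 hx1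
      _ ≤ B * (a*(u p + R^2))^γ := hRHS
    have hupR : 0 < u p + R^2 := by positivity
    rw [Real.mul_rpow ha.le hupR.le] at hfin
    calc a^(k:ℝ) = a^k := by rw [Real.rpow_natCast]
    _ ≤ B * (a^γ * (u p + R^2)^γ) := hfin
    _ = (B * (u p + R^2)^γ) * a^γ := by ring
  -- step 3 : contradiction as a → ∞
  set Kc := B * (u p + R^2)^γ with hKc
  have hexp : (0:ℝ) < (k:ℝ) - γ := by linarith
  have htend : Tendsto (fun a : ℝ => a ^ ((k:ℝ) - γ)) atTop atTop := tendsto_rpow_atTop hexp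
  obtain ⟨a, haK, ha1⟩ :=
    ((htend.eventually_gt_atTop Kc).and (eventually_ge_atTop (1:ℝ))).exists
  have ha : (0:ℝ) < a := lt_of_lt_of_le one_pos ha1
  have hm := master a ha1
  have hγa : (0:ℝ) < a^γ := Real.rpow_pos_of_pos ha γ
  have hcon : a ^ ((k:ℝ) - γ) ≤ Kc := by
    rw [Real.rpow_sub ha, div_le_iff₀ hγa]
    exact hm
  linarith
end
end

section
/- Let n ≥ 3, 1 ≤ k ≤ n, 0 < γ < k, let b be a positive continuous function on [0, ∞), let a > 0, and let u : [0, ∞) → ℝ be a continuous nondecreasing function with u(0) = a satisfying u(r) = a + ∫_0^r ((n s^{k−n}/C_n^k) ∫_0^s t^{n−1} b(t) u(t)^γ dt)^{1/k} ds for all r ≥ 0. If I := ∫_0^∞ ((n r^{k−n}/C_n^k) ∫_0^r s^{n−1} b(s) ds)^{1/k} dr < ∞, then u is bounded, with u(r) ≤ (a^{(k−γ)/k} + ((k−γ)/k) · I)^{k/(k−γ)} for all r ≥ 0. -/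
open MeasureTheory Real Filter Topology

noncomputable section

/-- If `∫_0^∞ ((n r^{k-n}/C_n^k) ∫_0^r s^{n-1} b(s) ds)^{1/k} dr =: I < ∞`, then any
continuous nondecreasing solution of the integral equation is bounded, with
`u(r) ≤ (a^{(k-γ)/k} + ((k-γ)/k) I)^{k/(k-γ)}`. -/
theorem bounded_solution_of_integral_finite
    (n k : ℕ) (hn : 3 ≤ n) (hk1 : 1 ≤ k) (hkn : k ≤ n)
    (γ : ℝ) (hγ0 : 0 < γ) (hγk : γ < k)
    (b : ℝ → ℝ) (hb_cont : ContinuousOn b (Set.Ici 0)) (hb_pos : ∀ r : ℝ, 0 ≤ r → 0 < b r)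
    (a : ℝ) (ha : 0 < a)
    (u : ℝ → ℝ) (hu_cont : ContinuousOn u (Set.Ici 0)) (hu_mono : MonotoneOn u (Set.Ici 0))
    (hu0 : u 0 = a)
    (hu_eq : ∀ r : ℝ, 0 ≤ r → u r = a + ∫ s in (0:ℝ)..r,
      ((n : ℝ) * s ^ ((k : ℝ) - n) / (n.choose k) *
        ∫ t in (0:ℝ)..s, t ^ (n - 1) * b t * u t ^ γ) ^ ((1 : ℝ) / k))
    (hI : IntegrableOn (fun r : ℝ =>
      ((n : ℝ) * r ^ ((k : ℝ) - n) / (n.choose k) *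
        ∫ s in (0:ℝ)..r, s ^ (n - 1) * b s) ^ ((1 : ℝ) / k)) (Set.Ioi 0)) :
    ∀ r : ℝ, 0 ≤ r → u r ≤
      (a ^ (((k : ℝ) - γ) / k) + (((k : ℝ) - γ) / k) *
        ∫ r in Set.Ioi (0:ℝ),
          ((n : ℝ) * r ^ ((k : ℝ) - n) / (n.choose k) *
            ∫ s in (0:ℝ)..r, s ^ (n - 1) * b s) ^ ((1 : ℝ) / k)) ^
        ((k : ℝ) / ((k : ℝ) - γ)) := by
  -- basic numeric facts
  have hk0 : (0:ℝ) < k := by exact_mod_cast hk1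
  have hkne : (k:ℝ) ≠ 0 := hk0.ne'
  have hcnk : (0:ℝ) < (n.choose k : ℝ) := by exact_mod_cast Nat.choose_pos hkn
  -- abbreviations
  set C : ℝ → ℝ := fun s => (n : ℝ) * s ^ ((k : ℝ) - n) / (n.choose k) with hCdef
  set Bf : ℝ → ℝ := fun s => ∫ t in (0:ℝ)..s, t ^ (n - 1) * b t with hBdef
  set J : ℝ → ℝ := fun s => ∫ t in (0:ℝ)..s, t ^ (n - 1) * b t * u t ^ γ with hJdef
  set G : ℝ → ℝ := fun s => (C s * Bf s) ^ ((1:ℝ)/k) with hGdef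
  set F : ℝ → ℝ := fun s => (C s * J s) ^ ((1:ℝ)/k) with hFdef
  have hu_eq' : ∀ r : ℝ, 0 ≤ r → u r = a + ∫ s in (0:ℝ)..r, F s := by
    intro r hr
    rw [hu_eq r hr]
  have hI' : IntegrableOn G (Set.Ioi 0) := by
    simpa only [hGdef, hCdef, hBdef] using hI
  set β : ℝ := ((k : ℝ) - γ) / k with hβdef
  have hβ0 : 0 < β := div_pos (by linarith) hk0
  have hIfold : (∫ r in Set.Ioi (0:ℝ),
      ((n : ℝ) * r ^ ((k : ℝ) - n) / (n.choose k) *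
        ∫ s in (0:ℝ)..r, s ^ (n - 1) * b s) ^ ((1 : ℝ) / k)) = ∫ r in Set.Ioi (0:ℝ), G r := by
    simp only [hGdef, hCdef, hBdef]
  rw [hIfold]
  set I : ℝ := ∫ r in Set.Ioi (0:ℝ), G r with hIdef
  -- u ≥ a on Ici 0
  have hua : ∀ s : ℝ, 0 ≤ s → a ≤ u s := fun s hs => by
    have := hu_mono Set.self_mem_Ici hs hs
    rwa [hu0] at this
  have hupos : ∀ s : ℝ, 0 ≤ s → 0 < u s := fun s hs => lt_of_lt_of_le ha (hua s hs)
  -- nonnegativity facts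
  have hC0 : ∀ s : ℝ, 0 ≤ s → 0 ≤ C s := fun s hs =>
    div_nonneg (mul_nonneg (Nat.cast_nonneg n) (Real.rpow_nonneg hs _)) hcnk.le
  have hcb : ContinuousOn (fun t : ℝ => (t:ℝ) ^ (n - 1) * b t) (Set.Ici 0) :=
    (continuous_pow (n-1)).continuousOn.mul hb_cont
  have hcbu : ContinuousOn (fun t : ℝ => t ^ (n - 1) * b t * u t ^ γ) (Set.Ici 0) :=
    hcb.mul (hu_cont.rpow_const fun t ht => Or.inl (hupos t ht).ne')
  have hcb_nn : ∀ t : ℝ, 0 ≤ t → 0 ≤ t ^ (n-1) * b t := fun t ht =>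
    mul_nonneg (pow_nonneg ht _) (hb_pos t ht).le
  have hcbu_nn : ∀ t : ℝ, 0 ≤ t → 0 ≤ t ^ (n-1) * b t * u t ^ γ := fun t ht =>
    mul_nonneg (hcb_nn t ht) (Real.rpow_nonneg (hupos t ht).le _)
  have hB_nn : ∀ s : ℝ, 0 ≤ s → 0 ≤ Bf s := fun s hs =>
    intervalIntegral.integral_nonneg hs (fun t ht => hcb_nn t ht.1)
  have hJ_nn : ∀ s : ℝ, 0 ≤ s → 0 ≤ J s := fun s hs =>
    intervalIntegral.integral_nonneg hs (fun t ht => hcbu_nn t ht.1)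
  have hG_nn : ∀ s : ℝ, 0 ≤ s → 0 ≤ G s := fun s hs =>
    Real.rpow_nonneg (mul_nonneg (hC0 s hs) (hB_nn s hs)) _
  have hF_nn : ∀ s : ℝ, 0 ≤ s → 0 ≤ F s := fun s hs =>
    Real.rpow_nonneg (mul_nonneg (hC0 s hs) (hJ_nn s hs)) _
  have hI_nn : 0 ≤ I := setIntegral_nonneg measurableSet_Ioi (fun s hs => hG_nn s (le_of_lt hs))
  -- continuity of the primitives J and Bf at positive points
  have hJ_ca : ∀ x : ℝ, 0 < x → ContinuousAt J x := by
    intro x hx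
    have h1 : IntegrableOn (fun t : ℝ => t ^ (n-1) * b t * u t ^ γ) (Set.uIcc 0 (x+1)) := by
      apply (hcbu.mono ?_).integrableOn_compact isCompact_uIcc
      rw [Set.uIcc_of_le (by linarith)]
      exact fun t ht => ht.1
    have h2 := intervalIntegral.continuousOn_primitive_interval (a := 0) (b := x+1) h1
    apply h2.continuousAt
    rw [Set.uIcc_of_le (by linarith)]
    exact Icc_mem_nhds hx (by linarith)
  have hB_ca : ∀ x : ℝ, 0 < x → ContinuousAt Bf x := by
    intro x hx
    have h1 : IntegrableOn (fun t : ℝ => t ^ (n-1) * b t) (Set.uIcc 0 (x+1)) := by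
      apply (hcb.mono ?_).integrableOn_compact isCompact_uIcc
      rw [Set.uIcc_of_le (by linarith)]
      exact fun t ht => ht.1
    have h2 := intervalIntegral.continuousOn_primitive_interval (a := 0) (b := x+1) h1
    apply h2.continuousAt
    rw [Set.uIcc_of_le (by linarith)]
    exact Icc_mem_nhds hx (by linarith)
  have hC_ca : ∀ x : ℝ, 0 < x → ContinuousAt C x := by
    intro x hx
    exact (continuousAt_const.mul
      (Real.continuousAt_rpow_const x _ (Or.inl hx.ne'))).div_const _
  have hF_ca : ∀ x : ℝ, 0 < x → ContinuousAt F x := fun x hx =>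
    ((hC_ca x hx).mul (hJ_ca x hx)).rpow_const (Or.inr (by positivity))
  have hG_ca : ∀ x : ℝ, 0 < x → ContinuousAt G x := fun x hx =>
    ((hC_ca x hx).mul (hB_ca x hx)).rpow_const (Or.inr (by positivity))
  -- the key pointwise inequality F ≤ u^{γ/k} G
  have hFG : ∀ s : ℝ, 0 < s → F s ≤ u s ^ (γ/k) * G s := by
    intro s hs
    have hs0 : (0:ℝ) ≤ s := hs.le
    have h1 : J s ≤ u s ^ γ * Bf s := by
      have heq : u s ^ γ * Bf s = ∫ t in (0:ℝ)..s, u s ^ γ * (t ^ (n-1) * b t) := by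
        rw [hBdef]; exact (intervalIntegral.integral_const_mul _ _).symm
      rw [heq, hJdef]
      apply intervalIntegral.integral_mono_on hs0
      · apply (hcbu.mono ?_).intervalIntegrable
        rw [Set.uIcc_of_le hs0]; exact fun t ht => ht.1
      · apply ((continuousOn_const.mul hcb).mono ?_).intervalIntegrable
        rw [Set.uIcc_of_le hs0]; exact fun t ht => ht.1
      · intro t ht
        calc t ^ (n-1) * b t * u t ^ γ ≤ t ^ (n-1) * b t * u s ^ γ := by
              apply mul_le_mul_of_nonneg_left ?_ (hcb_nn t ht.1)
              exact Real.rpow_le_rpow (hupos t ht.1).le (hu_mono ht.1 hs0 ht.2) hγ0.le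
          _ = u s ^ γ * (t ^ (n-1) * b t) := mul_comm _ _
    have h2 : C s * J s ≤ u s ^ γ * (C s * Bf s) := by
      calc C s * J s ≤ C s * (u s ^ γ * Bf s) := mul_le_mul_of_nonneg_left h1 (hC0 s hs0)
        _ = u s ^ γ * (C s * Bf s) := by ring
    calc F s ≤ (u s ^ γ * (C s * Bf s)) ^ ((1:ℝ)/k) :=
          Real.rpow_le_rpow (mul_nonneg (hC0 s hs0) (hJ_nn s hs0)) h2 (by positivity)
      _ = (u s ^ γ) ^ ((1:ℝ)/k) * (C s * Bf s) ^ ((1:ℝ)/k) :=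
          Real.mul_rpow (Real.rpow_nonneg (hupos s hs0).le _)
            (mul_nonneg (hC0 s hs0) (hB_nn s hs0))
      _ = u s ^ (γ/k) * G s := by
          rw [← Real.rpow_mul (hupos s hs0).le, mul_one_div, hGdef]
  -- integrability of F near 0
  have hGint : ∀ R : ℝ, IntegrableOn G (Set.Ioc 0 R) := fun R =>
    hI'.mono_set Set.Ioc_subset_Ioi_self
  have hFint : ∀ R : ℝ, 0 < R → IntegrableOn F (Set.Ioc 0 R) := by
    intro R hR
    have hmeas : AEStronglyMeasurable F (volume.restrict (Set.Ioc 0 R)) := by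
      have : ContinuousOn F (Set.Ioc 0 R) := fun x hx => (hF_ca x hx.1).continuousWithinAt
      exact this.aestronglyMeasurable measurableSet_Ioc
    have hg : Integrable (fun s => u R ^ (γ/k) * G s) (volume.restrict (Set.Ioc 0 R)) :=
      (hGint R).const_mul _
    refine Integrable.mono' hg hmeas ?_
    filter_upwards [ae_restrict_mem measurableSet_Ioc] with s hs
    have h1 : F s ≤ u s ^ (γ/k) * G s := hFG s hs.1
    have h2 : u s ^ (γ/k) ≤ u R ^ (γ/k) :=
      Real.rpow_le_rpow (hupos s hs.1.le).le (hu_mono hs.1.le (hs.1.le.trans hs.2) hs.2)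
        (by positivity)
    rw [Real.norm_of_nonneg (hF_nn s hs.1.le)]
    exact h1.trans (mul_le_mul_of_nonneg_right h2 (hG_nn s hs.1.le))
  have hFii0 : ∀ ε : ℝ, 0 < ε → IntervalIntegrable F volume 0 ε := fun ε hε => by
    rw [intervalIntegrable_iff_integrableOn_Ioc_of_le hε.le]
    exact hFint ε hε
  have hFii : ∀ c d : ℝ, 0 < c → c ≤ d → IntervalIntegrable F volume c d := fun c d hc hcd => by
    rw [intervalIntegrable_iff_integrableOn_Ioc_of_le hcd]
    exact (hFint d (hc.trans_le hcd)).mono_set (Set.Ioc_subset_Ioc hc.le le_rfl)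
  -- splitting the integral equation
  have hsplit : ∀ ε x : ℝ, 0 < ε → ε ≤ x → u x = u ε + ∫ s in ε..x, F s := by
    intro ε x hε hεx
    have h0x : (0:ℝ) ≤ x := hε.le.trans hεx
    have hadd := intervalIntegral.integral_add_adjacent_intervals
      (hFii0 ε hε) (hFii ε x hε hεx)
    rw [hu_eq' x h0x, hu_eq' ε hε.le, ← hadd]; ring
  -- main derivative estimate
  intro r hr
  have key : ∀ ε : ℝ, 0 < ε → ε < r → u r ^ β ≤ u ε ^ β + β * I := by
    intro ε hε hεr
    have hr0 : 0 < r := hε.trans hεr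
    have hGii : ∀ x : ℝ, ε ≤ x → IntervalIntegrable G volume ε x := fun x hx => by
      rw [intervalIntegrable_iff_integrableOn_Ioc_of_le hx]
      exact hI'.mono_set (fun t ht => hε.trans ht.1)
    set w : ℝ → ℝ := fun x => u ε ^ β + β * (∫ s in ε..x, G s) - u x ^ β with hw
    have hwmono : MonotoneOn w (Set.Icc ε r) := by
      apply monotoneOn_of_hasDerivWithinAt_nonneg (convex_Icc ε r)
        (f' := fun x => 0 + β * G x - F x * β * u x ^ (β - 1))
      · -- continuity
        apply ContinuousOn.sub
        · apply continuousOn_const.add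
          apply continuousOn_const.mul
          have := intervalIntegral.continuousOn_primitive_interval'
            (hGii r hεr.le) (Set.left_mem_uIcc (a := ε) (b := r))
          rwa [Set.uIcc_of_le hεr.le] at this
        · apply ContinuousOn.rpow_const (hu_cont.mono ?_)
          · exact fun x hx => Or.inl (hupos x (hε.le.trans hx.1)).ne'
          · exact fun x hx => hε.le.trans hx.1
      · -- derivative
        intro x hx
        rw [interior_Icc] at hx ⊢
        have hx0 : 0 < x := hε.trans hx.1
        have hG' : HasDerivAt (fun y => ∫ s in ε..y, G s) (G x) x := by
          apply intervalIntegral.integral_hasDerivAt_right (hGii x hx.1.le)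
          · exact ContinuousAt.stronglyMeasurableAtFilter isOpen_Ioi
              (fun y hy => hG_ca y hy) x hx0
          · exact hG_ca x hx0
        have hu' : HasDerivAt u (F x) x := by
          have hprim : HasDerivAt (fun y => u ε + ∫ s in ε..y, F s) (F x) x := by
            apply HasDerivAt.const_add
            apply intervalIntegral.integral_hasDerivAt_right (hFii ε x hε hx.1.le)
            · exact ContinuousAt.stronglyMeasurableAtFilter isOpen_Ioi
                (fun y hy => hF_ca y hy) x hx0
            · exact hF_ca x hx0
          apply hprim.congr_of_eventuallyEq
          filter_upwards [isOpen_Ioi.mem_nhds hx.1] with y hy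
          exact hsplit ε y hε (le_of_lt hy)
        have hupow : HasDerivAt (fun y => u y ^ β) (F x * β * u x ^ (β - 1)) x :=
          hu'.rpow_const (Or.inl (hupos x hx0.le).ne')
        exact (((hasDerivAt_const x (u ε ^ β)).add (hG'.const_mul β)).sub
          hupow).hasDerivWithinAt
      · -- nonnegativity of the derivative
        intro x hx
        rw [interior_Icc] at hx
        have hx0 : 0 < x := hε.trans hx.1
        have hux : 0 < u x := hupos x hx0.le
        have h1 : F x * u x ^ (β - 1) ≤ G x := by
          calc F x * u x ^ (β - 1)
              ≤ (u x ^ (γ/k) * G x) * u x ^ (β - 1) :=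
                mul_le_mul_of_nonneg_right (hFG x hx0) (Real.rpow_nonneg hux.le _)
            _ = G x * (u x ^ (γ/k) * u x ^ (β - 1)) := by ring
            _ = G x * u x ^ (γ/k + (β - 1)) := by rw [← Real.rpow_add hux]
            _ = G x := by
                have : γ/k + (β - 1) = 0 := by
                  rw [hβdef]; field_simp; ring
                rw [this, Real.rpow_zero, mul_one]
        have h2 : F x * β * u x ^ (β - 1) ≤ β * G x := by
          have := mul_le_mul_of_nonneg_left h1 hβ0.le
          nlinarith [this]
        linarith
    have hwle := hwmono (Set.left_mem_Icc.2 hεr.le) (Set.right_mem_Icc.2 hεr.le) hεr.le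
    have hwε : w ε = 0 := by
      simp [hw, intervalIntegral.integral_same]
    have hGle : (∫ s in ε..r, G s) ≤ I := by
      rw [intervalIntegral.integral_of_le hεr.le, hIdef]
      apply setIntegral_mono_set hI'
      · rw [EventuallyLE]
        filter_upwards [ae_restrict_mem measurableSet_Ioi] with s hs
        exact hG_nn s (le_of_lt hs)
      · exact HasSubset.Subset.eventuallyLE (fun t ht => hε.trans ht.1)
    rw [hwε, hw] at hwle
    simp only at hwle
    nlinarith [hwle, mul_le_mul_of_nonneg_left hGle hβ0.le]
  -- conclude
  rcases eq_or_lt_of_le hr with hr0 | hr0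
  · -- r = 0
    rw [← hr0, hu0]
    have h1 : a = (a ^ β) ^ ((k:ℝ)/((k:ℝ)-γ)) := by
      have hmul : β * ((k:ℝ)/((k:ℝ)-γ)) = 1 := by
        have hkg : (k:ℝ) - γ ≠ 0 := sub_ne_zero.2 (by linarith)
        rw [hβdef]; field_simp
      rw [← Real.rpow_mul ha.le, hmul, Real.rpow_one]
    nth_rewrite 1 [h1]
    apply Real.rpow_le_rpow (Real.rpow_nonneg ha.le _) _ (div_nonneg hk0.le (by linarith))
    have := mul_nonneg hβ0.le hI_nn
    linarith
  · -- r > 0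
    have hβinv : (k:ℝ)/((k:ℝ)-γ) = 1/β := by
      rw [hβdef]; field_simp
    have hmain2 : ∀ ε : ℝ, ε ∈ Set.Ioo 0 r →
        u r ≤ (u ε ^ β + β * I) ^ ((k:ℝ)/((k:ℝ)-γ)) := by
      intro ε hε
      have h := key ε hε.1 hε.2
      have hur : u r = (u r ^ β) ^ ((1:ℝ)/β) := by
        rw [← Real.rpow_mul (hupos r hr).le, mul_one_div, div_self hβ0.ne', Real.rpow_one]
      rw [hβinv, hur]
      exact Real.rpow_le_rpow (Real.rpow_nonneg (hupos r hr).le _) h (one_div_nonneg.2 hβ0.le)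
    have htends : Tendsto (fun ε => (u ε ^ β + β * I) ^ ((k:ℝ)/((k:ℝ)-γ))) (𝓝[>] (0:ℝ))
        (𝓝 ((a ^ β + β * I) ^ ((k:ℝ)/((k:ℝ)-γ)))) := by
      have h1 : Tendsto u (𝓝[>] (0:ℝ)) (𝓝 a) := by
        have h := hu_cont 0 Set.self_mem_Ici
        rw [ContinuousWithinAt, hu0] at h
        exact h.mono_left (nhdsWithin_mono 0 Set.Ioi_subset_Ici_self)
      have h2 : ContinuousAt (fun x : ℝ => (x ^ β + β * I) ^ ((k:ℝ)/((k:ℝ)-γ))) a := by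
        apply ContinuousAt.rpow_const
        · exact (Real.continuousAt_rpow_const a β (Or.inl ha.ne')).add continuousAt_const
        · left
          have : 0 < a ^ β + β * I := by
            have := Real.rpow_pos_of_pos ha β
            nlinarith [hI_nn, hβ0]
          exact this.ne'
      exact h2.tendsto.comp h1
    apply ge_of_tendsto htends
    filter_upwards [Ioo_mem_nhdsGT_of_mem (Set.left_mem_Ico.2 hr0)] with ε hε
    exact hmain2 ε hε
end
end

section
/- Let n ≥ 3, 1 ≤ k ≤ n, 0 < γ < k, let b be a positive continuous function on [0, ∞), let a > 0, and let u : [0, ∞) → ℝ be a continuous nondecreasing function with u(0) = a satisfying u(r) = a + ∫_0^r ((n s^{k−n}/C_n^k) ∫_0^s t^{n−1} b(t) u(t)^γ dt)^{1/k} ds for all r ≥ 0. Then u(r) ≥ a + a^{γ/k} ∫_0^r ((n s^{k−n}/C_n^k) ∫_0^s t^{n−1} b(t) dt)^{1/k} ds for all r ≥ 0; in particular, if ∫_0^∞ ((n r^{k−n}/C_n^k) ∫_0^r s^{n−1} b(s) ds)^{1/k} dr = ∞, then u(r) → ∞ as r → ∞. -/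
open MeasureTheory Real Filter

noncomputable section

open Topology


open MeasureTheory Real Filter Set

noncomputable section

namespace KHessianBlowupAux

/-- Inner integral nonneg and upper bound. -/
lemma inner_nonneg {ψ : ℝ → ℝ} {r : ℝ} (hψc : ContinuousOn ψ (Set.Icc 0 r))
    (hψ0 : ∀ t ∈ Set.Icc (0:ℝ) r, 0 ≤ ψ t) {s : ℝ} (hs : s ∈ Set.Icc (0:ℝ) r) :
    0 ≤ ∫ t in (0:ℝ)..s, ψ t :=
  intervalIntegral.integral_nonneg hs.1 (fun t ht => hψ0 t ⟨ht.1, ht.2.trans hs.2⟩)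

lemma inner_le {n : ℕ} (hn : 1 ≤ n) {ψ : ℝ → ℝ} {r M : ℝ}
    (hψc : ContinuousOn ψ (Set.Icc 0 r))
    (hM : ∀ t ∈ Set.Icc (0:ℝ) r, ψ t ≤ M * t ^ (n-1)) {s : ℝ} (hs : s ∈ Set.Icc (0:ℝ) r) :
    (∫ t in (0:ℝ)..s, ψ t) ≤ M * s ^ n / n := by
  have hIcc : Set.Icc (0:ℝ) s ⊆ Set.Icc 0 r := Set.Icc_subset_Icc le_rfl hs.2
  have h1 : IntervalIntegrable ψ MeasureTheory.volume 0 s :=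
    (hψc.mono hIcc).intervalIntegrable_of_Icc hs.1
  have h2 : IntervalIntegrable (fun t => M * t ^ (n-1)) MeasureTheory.volume 0 s :=
    ((continuous_const.mul (continuous_pow _)).intervalIntegrable _ _)
  have := intervalIntegral.integral_mono_on hs.1 h1 h2 (fun t ht => hM t (hIcc ht))
  calc (∫ t in (0:ℝ)..s, ψ t) ≤ ∫ t in (0:ℝ)..s, M * t ^ (n-1) := this
    _ = M * s ^ n / n := by
        rw [intervalIntegral.integral_const_mul, integral_pow, Nat.sub_add_cancel hn]
        have hcast : ((n-1:ℕ):ℝ) + 1 = n := by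
          rw [Nat.cast_sub hn]; push_cast; ring
        rw [hcast, zero_pow (by omega : n ≠ 0), sub_zero, mul_div_assoc]

lemma phi_base_nonneg (n k : ℕ) {ψ : ℝ → ℝ} {r : ℝ}
    (hψc : ContinuousOn ψ (Set.Icc 0 r)) (hψ0 : ∀ t ∈ Set.Icc (0:ℝ) r, 0 ≤ ψ t)
    {s : ℝ} (hs : s ∈ Set.Icc (0:ℝ) r) :
    0 ≤ (n : ℝ) * s ^ ((k : ℝ) - n) / (n.choose k) * ∫ t in (0:ℝ)..s, ψ t :=
  mul_nonneg (div_nonneg (mul_nonneg (Nat.cast_nonneg n) (Real.rpow_nonneg hs.1 _))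
    (Nat.cast_nonneg _)) (inner_nonneg hψc hψ0 hs)

lemma phi_le (n k : ℕ) (hn : 1 ≤ n) (hk1 : 1 ≤ k) (hkn : k ≤ n) {ψ : ℝ → ℝ} {r M : ℝ}
    (hψc : ContinuousOn ψ (Set.Icc 0 r))
    (hM : ∀ t ∈ Set.Icc (0:ℝ) r, ψ t ≤ M * t ^ (n-1))
    (hψ0 : ∀ t ∈ Set.Icc (0:ℝ) r, 0 ≤ ψ t)
    {s : ℝ} (hs : s ∈ Set.Ioc (0:ℝ) r) :
    ((n : ℝ) * s ^ ((k : ℝ) - n) / (n.choose k) * ∫ t in (0:ℝ)..s, ψ t) ^ ((1:ℝ)/k)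
      ≤ (M / (n.choose k)) ^ ((1:ℝ)/k) * s := by
  have hC : (0:ℝ) < n.choose k := by exact_mod_cast Nat.choose_pos hkn
  have hs0 : 0 < s := hs.1
  have hsI : s ∈ Set.Icc (0:ℝ) r := ⟨hs0.le, hs.2⟩
  have hn0 : (0:ℝ) < n := by exact_mod_cast hn
  have hk0 : (0:ℝ) < k := by exact_mod_cast hk1
  have hc0 : 0 ≤ (n:ℝ) * s ^ ((k:ℝ)-n) / (n.choose k) :=
    div_nonneg (mul_nonneg (Nat.cast_nonneg n) (Real.rpow_nonneg hs0.le _)) hC.le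
  have hM0 : 0 ≤ M := by
    have h1 := hψ0 0 ⟨le_rfl, hsI.2.trans' hs0.le⟩
    have h2 := hM 0 ⟨le_rfl, hsI.2.trans' hs0.le⟩
    nlinarith [pow_pos hs0 (n-1), hψ0 s hsI, hM s hsI, pow_nonneg hs0.le (n-1),
      (hψ0 s hsI).trans (hM s hsI)]
  have hbase : (n : ℝ) * s ^ ((k : ℝ) - n) / (n.choose k) * ∫ t in (0:ℝ)..s, ψ t
      ≤ M / (n.choose k) * s ^ ((k:ℝ)) := by
    have h1 : (n : ℝ) * s ^ ((k : ℝ) - n) / (n.choose k) * ∫ t in (0:ℝ)..s, ψ t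
        ≤ (n : ℝ) * s ^ ((k : ℝ) - n) / (n.choose k) * (M * s ^ n / n) :=
      mul_le_mul_of_nonneg_left (inner_le hn hψc hM hsI) hc0
    refine h1.trans (le_of_eq ?_)
    have hsk : s ^ ((k:ℝ) - n) * s ^ ((n:ℕ):ℝ) = s ^ ((k:ℝ)) := by
      rw [← Real.rpow_add hs0, sub_add_cancel]
    calc (n : ℝ) * s ^ ((k : ℝ) - n) / (n.choose k) * (M * s ^ n / n)
        = M / (n.choose k) * (s ^ ((k:ℝ)-n) * s ^ ((n:ℕ):ℝ)) := by
          rw [Real.rpow_natCast s n]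
          field_simp
      _ = M / (n.choose k) * s ^ ((k:ℝ)) := by rw [hsk]
  have h2 := Real.rpow_le_rpow (phi_base_nonneg n k hψc hψ0 hsI) hbase
    (by positivity : (0:ℝ) ≤ 1/k)
  refine h2.trans (le_of_eq ?_)
  rw [Real.mul_rpow (by positivity) (Real.rpow_nonneg hs0.le _),
    ← Real.rpow_mul hs0.le, mul_one_div, div_self (ne_of_gt hk0), Real.rpow_one]

lemma phi_intervalIntegrable (n k : ℕ) (hn : 1 ≤ n) (hk1 : 1 ≤ k) (hkn : k ≤ n)
    {ψ : ℝ → ℝ} {r M : ℝ} (hr : 0 ≤ r)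
    (hψc : ContinuousOn ψ (Set.Icc 0 r)) (hψ0 : ∀ t ∈ Set.Icc (0:ℝ) r, 0 ≤ ψ t)
    (hM : ∀ t ∈ Set.Icc (0:ℝ) r, ψ t ≤ M * t ^ (n-1)) :
    IntervalIntegrable (fun s => ((n : ℝ) * s ^ ((k : ℝ) - n) / (n.choose k) *
      ∫ t in (0:ℝ)..s, ψ t) ^ ((1 : ℝ) / k)) MeasureTheory.volume 0 r := by
  rw [intervalIntegrable_iff_integrableOn_Ioc_of_le hr]
  rcases eq_or_lt_of_le hr with h0 | h0
  · rw [← h0, Set.Ioc_self]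
    exact MeasureTheory.integrableOn_empty
  have hM0 : 0 ≤ M / (n.choose k) := by
    have h1 := (hψ0 r ⟨hr, le_rfl⟩).trans (hM r ⟨hr, le_rfl⟩)
    have h2 : (0:ℝ) < r ^ (n-1) := pow_pos h0 _
    have hC : (0:ℝ) < n.choose k := by exact_mod_cast Nat.choose_pos hkn
    have hMn : 0 ≤ M := by nlinarith [h1, h2]
    exact div_nonneg hMn hC.le
  have hI : ContinuousOn (fun s => ∫ t in (0:ℝ)..s, ψ t) (Set.Icc 0 r) := by
    have h := intervalIntegral.continuousOn_primitive_interval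
      (a := (0:ℝ)) (b := r) (f := ψ) (μ := MeasureTheory.volume) ?_
    · rwa [Set.uIcc_of_le hr] at h
    · rw [Set.uIcc_of_le hr]; exact hψc.integrableOn_Icc
  have hcont : ContinuousOn (fun s => ((n : ℝ) * s ^ ((k : ℝ) - n) / (n.choose k) *
      ∫ t in (0:ℝ)..s, ψ t) ^ ((1 : ℝ) / k)) (Set.Ioc 0 r) := by
    apply ContinuousOn.rpow_const
    · exact ((continuousOn_const.mul
        ((continuousOn_id).rpow_const (fun x hx => Or.inl (ne_of_gt hx.1)))).div_const _).mul
        (hI.mono Set.Ioc_subset_Icc_self)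
    · intro x hx; right; positivity
  refine ⟨hcont.aestronglyMeasurable measurableSet_Ioc, ?_⟩
  apply MeasureTheory.HasFiniteIntegral.restrict_of_bounded
    (C := (M / (n.choose k)) ^ ((1:ℝ)/k) * r) measure_Ioc_lt_top
  rw [MeasureTheory.ae_restrict_iff' measurableSet_Ioc]
  refine MeasureTheory.ae_of_all _ (fun s hs => ?_)
  have h0 := phi_base_nonneg n k hψc hψ0 ⟨hs.1.le, hs.2⟩
  rw [Real.norm_eq_abs, abs_of_nonneg (Real.rpow_nonneg h0 _)]
  refine (phi_le n k hn hk1 hkn hψc hM hψ0 hs).trans ?_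
  exact mul_le_mul_of_nonneg_left hs.2 (Real.rpow_nonneg hM0 _)

lemma iUnion_Ioc_nat : (⋃ i : ℕ, Set.Ioc (i:ℝ) (i+1)) = Set.Ioi 0 := by
  ext x
  simp only [Set.mem_iUnion, Set.mem_Ioc, Set.mem_Ioi]
  constructor
  · rintro ⟨i, h1, _⟩; exact lt_of_le_of_lt (Nat.cast_nonneg i) h1
  · intro hx
    have h1 : 1 ≤ ⌈x⌉₊ := Nat.one_le_ceil_iff.mpr hx
    have h2 : (⌈x⌉₊:ℝ) < x + 1 := Nat.ceil_lt_add_one hx.le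
    have h3 := Nat.le_ceil x
    refine ⟨⌈x⌉₊ - 1, ?_, ?_⟩ <;> rw [Nat.cast_sub h1] <;> push_cast <;> linarith

lemma lint_Ioc_eq_sum (f : ℝ → ENNReal) (m : ℕ) :
    ∫⁻ s in Set.Ioc (0:ℝ) m, f s = ∑ i ∈ Finset.range m, ∫⁻ s in Set.Ioc (i:ℝ) (i+1), f s := by
  induction m with
  | zero => simp
  | succ m ih =>
    rw [Finset.sum_range_succ, ← ih]
    push_cast
    rw [← Set.Ioc_union_Ioc_eq_Ioc (Nat.cast_nonneg m) (by linarith [Nat.cast_nonneg (α := ℝ) m]),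
      MeasureTheory.lintegral_union measurableSet_Ioc (Set.Ioc_disjoint_Ioc_of_le le_rfl)]

lemma pairwise_disjoint_Ioc_nat :
    Pairwise (Function.onFun Disjoint fun i : ℕ => Set.Ioc (i:ℝ) (i+1)) := by
  intro i j hij
  rw [Function.onFun, Set.Ioc_disjoint_Ioc]
  rcases hij.lt_or_gt with h | h
  · calc min ((i:ℝ)+1) ((j:ℝ)+1) ≤ (i:ℝ)+1 := min_le_left _ _
      _ ≤ (j:ℝ) := by exact_mod_cast Nat.succ_le_of_lt h
      _ ≤ max (i:ℝ) (j:ℝ) := le_max_right _ _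
  · calc min ((i:ℝ)+1) ((j:ℝ)+1) ≤ (j:ℝ)+1 := min_le_right _ _
      _ ≤ (i:ℝ) := by exact_mod_cast Nat.succ_le_of_lt h
      _ ≤ max (i:ℝ) (j:ℝ) := le_max_left _ _
end KHessianBlowupAux


/-- Lower bound for solutions of the integral equation:
`u(r) ≥ a + a^{γ/k} ∫_0^r ((n s^{k-n}/C_n^k) ∫_0^s t^{n-1} b(t) dt)^{1/k} ds`;
in particular, if `∫_0^∞ ((n r^{k-n}/C_n^k) ∫_0^r s^{n-1} b(s) ds)^{1/k} dr = ∞`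
then `u(r) → ∞` as `r → ∞`. -/
theorem lower_bound_and_blowup_of_solution
    (n k : ℕ) (hn : 3 ≤ n) (hk1 : 1 ≤ k) (hkn : k ≤ n)
    (γ : ℝ) (hγ0 : 0 < γ) (hγk : γ < k)
    (b : ℝ → ℝ) (hb_cont : ContinuousOn b (Set.Ici 0)) (hb_pos : ∀ r : ℝ, 0 ≤ r → 0 < b r)
    (a : ℝ) (ha : 0 < a)
    (u : ℝ → ℝ) (hu_cont : ContinuousOn u (Set.Ici 0)) (hu_mono : MonotoneOn u (Set.Ici 0))
    (hu0 : u 0 = a)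
    (hu_eq : ∀ r : ℝ, 0 ≤ r → u r = a + ∫ s in (0:ℝ)..r,
      ((n : ℝ) * s ^ ((k : ℝ) - n) / (n.choose k) *
        ∫ t in (0:ℝ)..s, t ^ (n - 1) * b t * u t ^ γ) ^ ((1 : ℝ) / k)) :
    (∀ r : ℝ, 0 ≤ r →
      a + a ^ (γ / k) * ∫ s in (0:ℝ)..r,
        ((n : ℝ) * s ^ ((k : ℝ) - n) / (n.choose k) *
          ∫ t in (0:ℝ)..s, t ^ (n - 1) * b t) ^ ((1 : ℝ) / k) ≤ u r) ∧
    ((∫⁻ r in Set.Ioi (0:ℝ), ENNReal.ofReal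
        (((n : ℝ) * r ^ ((k : ℝ) - n) / (n.choose k) *
          ∫ s in (0:ℝ)..r, s ^ (n - 1) * b s) ^ ((1 : ℝ) / k))) = ⊤ →
      Tendsto u atTop atTop) := by
  have hC : (0:ℝ) < n.choose k := by exact_mod_cast Nat.choose_pos hkn
  have hn1 : 1 ≤ n := by omega
  have hau : ∀ t : ℝ, 0 ≤ t → a ≤ u t := fun t ht => by
    rw [← hu0]; exact hu_mono Set.self_mem_Ici ht ht
  have hu_pos : ∀ t : ℝ, 0 ≤ t → 0 < u t := fun t ht => lt_of_lt_of_le ha (hau t ht)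
  -- continuity and nonnegativity of the inner integrands
  have hψGc : ∀ r : ℝ, ContinuousOn (fun t => t ^ (n-1) * b t) (Set.Icc 0 r) := fun r =>
    (continuous_pow _).continuousOn.mul (hb_cont.mono Set.Icc_subset_Ici_self)
  have huγc : ContinuousOn (fun t => u t ^ γ) (Set.Ici 0) :=
    hu_cont.rpow_const (fun t _ => Or.inr hγ0.le)
  have hψFc : ∀ r : ℝ, ContinuousOn (fun t => t ^ (n-1) * b t * u t ^ γ) (Set.Icc 0 r) :=
    fun r => (hψGc r).mul (huγc.mono Set.Icc_subset_Ici_self)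
  have hψG0 : ∀ r : ℝ, ∀ t ∈ Set.Icc (0:ℝ) r, 0 ≤ t ^ (n-1) * b t := fun r t ht =>
    mul_nonneg (pow_nonneg ht.1 _) (hb_pos t ht.1).le
  have hψF0 : ∀ r : ℝ, ∀ t ∈ Set.Icc (0:ℝ) r, 0 ≤ t ^ (n-1) * b t * u t ^ γ := fun r t ht =>
    mul_nonneg (hψG0 r t ht) (Real.rpow_nonneg (hu_pos t ht.1).le _)
  -- bounds of the form ψ t ≤ M * t^(n-1)
  have hbndG : ∀ r : ℝ, ∃ M : ℝ, ∀ t ∈ Set.Icc (0:ℝ) r, t ^ (n-1) * b t ≤ M * t ^ (n-1) := by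
    intro r
    obtain ⟨M, hMb⟩ := (isCompact_Icc (a := (0:ℝ)) (b := r)).exists_bound_of_continuousOn
      (hb_cont.mono Set.Icc_subset_Ici_self)
    refine ⟨M, fun t ht => ?_⟩
    have h1 : b t ≤ M := (le_abs_self _).trans (by simpa [Real.norm_eq_abs] using hMb t ht)
    calc t ^ (n-1) * b t ≤ t ^ (n-1) * M :=
          mul_le_mul_of_nonneg_left h1 (pow_nonneg ht.1 _)
      _ = M * t ^ (n-1) := mul_comm _ _
  have hbndF : ∀ r : ℝ, ∃ M : ℝ,
      ∀ t ∈ Set.Icc (0:ℝ) r, t ^ (n-1) * b t * u t ^ γ ≤ M * t ^ (n-1) := by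
    intro r
    obtain ⟨M, hMb⟩ := (isCompact_Icc (a := (0:ℝ)) (b := r)).exists_bound_of_continuousOn
      ((hb_cont.mono Set.Icc_subset_Ici_self).mul (huγc.mono Set.Icc_subset_Ici_self))
    refine ⟨M, fun t ht => ?_⟩
    have h1 : b t * u t ^ γ ≤ M := (le_abs_self _).trans
      (by have := hMb t ht; rwa [Real.norm_eq_abs] at this)
    calc t ^ (n-1) * b t * u t ^ γ = t ^ (n-1) * (b t * u t ^ γ) := by ring
      _ ≤ t ^ (n-1) * M := mul_le_mul_of_nonneg_left h1 (pow_nonneg ht.1 _)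
      _ = M * t ^ (n-1) := mul_comm _ _
  -- interval integrability of both outer integrands
  have hIntG : ∀ r : ℝ, 0 ≤ r → IntervalIntegrable
      (fun s => ((n : ℝ) * s ^ ((k : ℝ) - n) / (n.choose k) *
        ∫ t in (0:ℝ)..s, t ^ (n - 1) * b t) ^ ((1 : ℝ) / k)) MeasureTheory.volume 0 r := by
    intro r hr
    obtain ⟨M, hM⟩ := hbndG r
    exact KHessianBlowupAux.phi_intervalIntegrable n k hn1 hk1 hkn hr (hψGc r) (hψG0 r) hM
  have hIntF : ∀ r : ℝ, 0 ≤ r → IntervalIntegrable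
      (fun s => ((n : ℝ) * s ^ ((k : ℝ) - n) / (n.choose k) *
        ∫ t in (0:ℝ)..s, t ^ (n - 1) * b t * u t ^ γ) ^ ((1 : ℝ) / k))
      MeasureTheory.volume 0 r := by
    intro r hr
    obtain ⟨M, hM⟩ := hbndF r
    exact KHessianBlowupAux.phi_intervalIntegrable n k hn1 hk1 hkn hr (hψFc r) (hψF0 r) hM
  -- pointwise comparison of the two outer integrands
  have hpt : ∀ s : ℝ, 0 ≤ s →
      a ^ (γ/k) * ((n : ℝ) * s ^ ((k : ℝ) - n) / (n.choose k) *
        ∫ t in (0:ℝ)..s, t ^ (n - 1) * b t) ^ ((1 : ℝ) / k)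
      ≤ ((n : ℝ) * s ^ ((k : ℝ) - n) / (n.choose k) *
        ∫ t in (0:ℝ)..s, t ^ (n - 1) * b t * u t ^ γ) ^ ((1 : ℝ) / k) := by
    intro s hs0
    have hinner : a ^ γ * (∫ t in (0:ℝ)..s, t ^ (n-1) * b t)
        ≤ ∫ t in (0:ℝ)..s, t ^ (n-1) * b t * u t ^ γ := by
      rw [← intervalIntegral.integral_const_mul]
      apply intervalIntegral.integral_mono_on hs0
      · exact ((hψGc s).intervalIntegrable_of_Icc hs0).const_mul _
      · exact (hψFc s).intervalIntegrable_of_Icc hs0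
      · intro t ht
        have h1 : a ^ γ ≤ u t ^ γ := Real.rpow_le_rpow ha.le (hau t ht.1) hγ0.le
        calc a ^ γ * (t ^ (n-1) * b t) = (t ^ (n-1) * b t) * a ^ γ := mul_comm _ _
          _ ≤ (t ^ (n-1) * b t) * u t ^ γ :=
              mul_le_mul_of_nonneg_left h1 (hψG0 s t ht)
    have hc0 : 0 ≤ (n:ℝ) * s ^ ((k:ℝ)-n) / (n.choose k) :=
      div_nonneg (mul_nonneg (Nat.cast_nonneg n) (Real.rpow_nonneg hs0 _)) hC.le
    have hGb : 0 ≤ (n : ℝ) * s ^ ((k : ℝ) - n) / (n.choose k) *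
        ∫ t in (0:ℝ)..s, t ^ (n - 1) * b t :=
      KHessianBlowupAux.phi_base_nonneg n k (hψGc s) (hψG0 s) ⟨hs0, le_rfl⟩
    have hbase : a ^ γ * ((n:ℝ) * s ^ ((k:ℝ)-n) / (n.choose k) *
        ∫ t in (0:ℝ)..s, t ^ (n-1) * b t)
        ≤ (n:ℝ) * s ^ ((k:ℝ)-n) / (n.choose k) *
          ∫ t in (0:ℝ)..s, t ^ (n-1) * b t * u t ^ γ := by
      have := mul_le_mul_of_nonneg_left hinner hc0
      calc a ^ γ * ((n:ℝ) * s ^ ((k:ℝ)-n) / (n.choose k) *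
            ∫ t in (0:ℝ)..s, t ^ (n-1) * b t)
          = (n:ℝ) * s ^ ((k:ℝ)-n) / (n.choose k) *
            (a ^ γ * ∫ t in (0:ℝ)..s, t ^ (n-1) * b t) := by ring
        _ ≤ _ := this
    have h2 := Real.rpow_le_rpow (mul_nonneg (Real.rpow_nonneg ha.le γ) hGb) hbase
      (by positivity : (0:ℝ) ≤ 1/k)
    rwa [Real.mul_rpow (Real.rpow_nonneg ha.le γ) hGb, ← Real.rpow_mul ha.le,
      mul_one_div] at h2
  -- Part 1
  have hmain : ∀ r : ℝ, 0 ≤ r →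
      a + a ^ (γ / k) * ∫ s in (0:ℝ)..r,
        ((n : ℝ) * s ^ ((k : ℝ) - n) / (n.choose k) *
          ∫ t in (0:ℝ)..s, t ^ (n - 1) * b t) ^ ((1 : ℝ) / k) ≤ u r := by
    intro r hr
    rw [hu_eq r hr, ← intervalIntegral.integral_const_mul]
    have hle := intervalIntegral.integral_mono_on hr ((hIntG r hr).const_mul (a ^ (γ/k)))
      (hIntF r hr) (fun s hs => hpt s hs.1)
    linarith
  refine ⟨hmain, ?_⟩
  -- Part 2
  intro htop
  set fE : ℝ → ENNReal := fun s => ENNReal.ofReal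
    (((n : ℝ) * s ^ ((k : ℝ) - n) / (n.choose k) *
      ∫ t in (0:ℝ)..s, t ^ (n - 1) * b t) ^ ((1 : ℝ) / k)) with hfE
  have hsum : ∑' i : ℕ, ∫⁻ s in Set.Ioc (i:ℝ) (i+1), fE s = ⊤ := by
    rw [← MeasureTheory.lintegral_iUnion (fun i => measurableSet_Ioc)
      KHessianBlowupAux.pairwise_disjoint_Ioc_nat, KHessianBlowupAux.iUnion_Ioc_nat]
    exact htop
  have htend := ENNReal.tendsto_nat_tsum (fun i : ℕ => ∫⁻ s in Set.Ioc (i:ℝ) (i+1), fE s)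
  rw [hsum] at htend
  have hLtend : Tendsto (fun m : ℕ => ∫⁻ s in Set.Ioc (0:ℝ) m, fE s) atTop (𝓝 ⊤) := by
    simpa only [KHessianBlowupAux.lint_Ioc_eq_sum fE] using htend
  rw [tendsto_atTop]
  intro M
  have hc : 0 < a ^ (γ/k) := Real.rpow_pos_of_pos ha _
  set X : ℝ := max ((M - a) / a ^ (γ/k)) 0 with hX
  obtain ⟨m, hm⟩ := (hLtend.eventually
    (lt_mem_nhds (show ENNReal.ofReal X < ⊤ from ENNReal.ofReal_lt_top))).exists
  have hm0 : (0:ℝ) ≤ m := Nat.cast_nonneg m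
  have hGInt : MeasureTheory.IntegrableOn
      (fun s => ((n : ℝ) * s ^ ((k : ℝ) - n) / (n.choose k) *
        ∫ t in (0:ℝ)..s, t ^ (n - 1) * b t) ^ ((1 : ℝ) / k)) (Set.Ioc (0:ℝ) m)
      MeasureTheory.volume :=
    (intervalIntegrable_iff_integrableOn_Ioc_of_le hm0).mp (hIntG m hm0)
  have hJ : ENNReal.ofReal (∫ s in Set.Ioc (0:ℝ) (m:ℝ),
      ((n : ℝ) * s ^ ((k : ℝ) - n) / (n.choose k) *
        ∫ t in (0:ℝ)..s, t ^ (n - 1) * b t) ^ ((1 : ℝ) / k))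
      = ∫⁻ s in Set.Ioc (0:ℝ) (m:ℝ), fE s := by
    refine MeasureTheory.ofReal_integral_eq_lintegral_ofReal hGInt ?_
    filter_upwards [MeasureTheory.ae_restrict_mem measurableSet_Ioc] with s hs
    refine Real.rpow_nonneg ?_ _
    exact KHessianBlowupAux.phi_base_nonneg n k (hψGc s) (hψG0 s) ⟨hs.1.le, le_rfl⟩
  rw [← hJ] at hm
  have hXlt : X < ∫ s in Set.Ioc (0:ℝ) (m:ℝ),
      ((n : ℝ) * s ^ ((k : ℝ) - n) / (n.choose k) *
        ∫ t in (0:ℝ)..s, t ^ (n - 1) * b t) ^ ((1 : ℝ) / k) :=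
    (ENNReal.ofReal_lt_ofReal_iff_of_nonneg (le_max_right _ _)).mp hm
  rw [← intervalIntegral.integral_of_le hm0] at hXlt
  have h5 : (M - a) / a ^ (γ/k) < ∫ s in (0:ℝ)..(m:ℝ),
      ((n : ℝ) * s ^ ((k : ℝ) - n) / (n.choose k) *
        ∫ t in (0:ℝ)..s, t ^ (n - 1) * b t) ^ ((1 : ℝ) / k) :=
    lt_of_le_of_lt (le_max_left _ _) hXlt
  rw [div_lt_iff₀ hc] at h5
  have h6 := hmain (m:ℝ) hm0
  filter_upwards [eventually_ge_atTop (m:ℝ)] with r hrm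
  have hr0 : (0:ℝ) ≤ r := le_trans hm0 hrm
  have hum : u (m:ℝ) ≤ u r := hu_mono hm0 hr0 hrm
  nlinarith [h5, h6, hum, hc.le]
end
end
end

section
/- Let n ≥ 3, 1 ≤ k ≤ n, 0 < γ < k, and let b₁, b₂ be continuous functions on [0, ∞) with b₂(r) ≥ b₁(r) ≥ 0 for all r. Suppose u₁ is a positive entire solution of C_{n−1}^{k−1} u₁''(u₁'/r)^{k−1} + C_{n−1}^k (u₁'/r)^k = b₁(r) u₁^γ on [0, ∞) with u₁'(0) = 0, u₁(0) = α₁ > 0, and u₂ is a positive entire solution of C_{n−1}^{k−1} u₂''(u₂'/r)^{k−1} + C_{n−1}^k (u₂'/r)^k = b₂(r) u₂^γ on [0, ∞) with u₂'(0) = 0, u₂(0) = α₂ ≥ α₁. Then u₂(r) ≥ u₁(r) for all r ∈ [0, ∞). -/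
open MeasureTheory Real Filter

noncomputable section

private lemma keyAlg (j m : ℕ) (A B C n r p q E : ℝ) (hC : C ≠ 0) (hn : n ≠ 0) (hr : r ≠ 0)
    (hode : A * q * (p / r) ^ j + B * (p / r) ^ (j + 1) = E)
    (hA : n * A = (j + 1 : ℝ) * C) (hB : n * B = (m : ℝ) * C) :
    (m : ℝ) * r ^ (m - 1) * p ^ (j + 1) + r ^ m * (((j : ℝ) + 1) * p ^ j * q)
      = (n / C) * r ^ (m + j) * E := by
  rw [← hode]
  rcases m with _ | m'
  · have hB0 : B = 0 := by
      have h := hB; simp at h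
      exact h.resolve_left hn
    subst hB0
    simp only [Nat.cast_zero, zero_mul, pow_zero, one_mul, add_zero, zero_add]
    simp only [div_pow]
    field_simp
    linear_combination (-(p ^ j * q)) * hA
  · simp only [Nat.cast_succ, Nat.succ_sub_one]
    simp only [div_pow]
    field_simp
    linear_combination (norm := (push_cast; ring))
      (-(q * p ^ j * r ^ (m' + 2 * j + 2))) * hA - (p ^ (j + 1) * r ^ (m' + 2 * j + 1)) * hB

/-- **Lemma 3.2 (comparison of initial values and weights).** If `u₁`, `u₂` are positive
entire solutions on `[0,∞)` of the radial Cauchy problems with weights `b₁ ≤ b₂` and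
initial values `α₁ ≤ α₂`, then `u₂ ≥ u₁` on `[0,∞)`.
(Solutions of the radial Cauchy problem are `C¹` up to `0` and nondecreasing, since they
satisfy `u'(r) = ((n r^{k-n}/C_n^k) ∫_0^r s^{n-1} b u^γ)^{1/k} ≥ 0`.) -/
theorem radial_comparison_of_initial_values
    (n k : ℕ) (hn : 3 ≤ n) (hk1 : 1 ≤ k) (hkn : k ≤ n)
    (γ : ℝ) (hγ0 : 0 < γ) (hγk : γ < k)
    (b₁ b₂ : ℝ → ℝ)
    (hb₁_cont : ContinuousOn b₁ (Set.Ici 0)) (hb₂_cont : ContinuousOn b₂ (Set.Ici 0))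
    (hb₁_nonneg : ∀ r : ℝ, 0 ≤ r → 0 ≤ b₁ r)
    (hb₁₂ : ∀ r : ℝ, 0 ≤ r → b₁ r ≤ b₂ r)
    (α₁ α₂ : ℝ) (hα₁ : 0 < α₁) (hα₁₂ : α₁ ≤ α₂)
    (u₁ u₂ : ℝ → ℝ)
    (hu₁_pos : ∀ r : ℝ, 0 ≤ r → 0 < u₁ r) (hu₂_pos : ∀ r : ℝ, 0 ≤ r → 0 < u₂ r)
    (hu₁_cont : ContinuousOn u₁ (Set.Ici 0)) (hu₂_cont : ContinuousOn u₂ (Set.Ici 0))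
    (hu₁_cont' : ContinuousOn (deriv u₁) (Set.Ici 0))
    (hu₂_cont' : ContinuousOn (deriv u₂) (Set.Ici 0))
    (hu₁_incr : ∀ r : ℝ, 0 ≤ r → 0 ≤ deriv u₁ r)
    (hu₂_incr : ∀ r : ℝ, 0 ≤ r → 0 ≤ deriv u₂ r)
    (hu₁_diff : ∀ r : ℝ, 0 < r → DifferentiableAt ℝ u₁ r ∧ DifferentiableAt ℝ (deriv u₁) r)
    (hu₂_diff : ∀ r : ℝ, 0 < r → DifferentiableAt ℝ u₂ r ∧ DifferentiableAt ℝ (deriv u₂) r)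
    (hu₁_0 : u₁ 0 = α₁) (hu₂_0 : u₂ 0 = α₂)
    (hu₁'_0 : deriv u₁ 0 = 0) (hu₂'_0 : deriv u₂ 0 = 0)
    (hu₁_ode : ∀ r : ℝ, 0 < r →
      ((n - 1).choose (k - 1) : ℝ) * deriv (deriv u₁) r * (deriv u₁ r / r) ^ (k - 1) +
        ((n - 1).choose k : ℝ) * (deriv u₁ r / r) ^ k = b₁ r * u₁ r ^ γ)
    (hu₂_ode : ∀ r : ℝ, 0 < r →
      ((n - 1).choose (k - 1) : ℝ) * deriv (deriv u₂) r * (deriv u₂ r / r) ^ (k - 1) +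
        ((n - 1).choose k : ℝ) * (deriv u₂ r / r) ^ k = b₂ r * u₂ r ^ γ) :
    ∀ r : ℝ, 0 ≤ r → u₁ r ≤ u₂ r := by
  obtain ⟨j, rfl⟩ : ∃ j, k = j + 1 := ⟨k - 1, by omega⟩
  simp only [Nat.add_sub_cancel] at hu₁_ode hu₂_ode
  set m : ℕ := n - (j + 1) with hm
  have hb₂_nonneg : ∀ r : ℝ, 0 ≤ r → 0 ≤ b₂ r := fun r hr =>
    le_trans (hb₁_nonneg r hr) (hb₁₂ r hr)
  -- binomial identities
  have hn0 : (n : ℝ) ≠ 0 := Nat.cast_ne_zero.mpr (by omega)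
  have hCpos : (0 : ℝ) < (n.choose (j + 1) : ℝ) := by
    exact_mod_cast Nat.choose_pos hkn
  have hnA : (n : ℝ) * ((n - 1).choose j : ℝ) = ((j : ℝ) + 1) * (n.choose (j + 1) : ℝ) := by
    have h := Nat.add_one_mul_choose_eq (n - 1) j
    have hn1 : n - 1 + 1 = n := by omega
    rw [hn1] at h
    have h2 : n * ((n - 1).choose j) = (j + 1) * n.choose (j + 1) := by
      rw [h, Nat.mul_comm]
    exact_mod_cast h2
  have hPascal : (n.choose (j + 1) : ℝ)
      = ((n - 1).choose j : ℝ) + ((n - 1).choose (j + 1) : ℝ) := by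
    have h := Nat.choose_succ_succ (n - 1) j
    have hn1 : n - 1 + 1 = n := by omega
    simp only [Nat.succ_eq_add_one] at h
    rw [hn1] at h
    exact_mod_cast h
  have hmcast : ((m : ℕ) : ℝ) = (n : ℝ) - ((j : ℝ) + 1) := by
    rw [hm]; push_cast [hkn]; ring
  have hnB : (n : ℝ) * ((n - 1).choose (j + 1) : ℝ) = (m : ℝ) * (n.choose (j + 1) : ℝ) := by
    have h : (n : ℝ) * ((n - 1).choose (j + 1) : ℝ)
        = (n : ℝ) * (n.choose (j + 1) : ℝ) - (n : ℝ) * ((n - 1).choose j : ℝ) := by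
      rw [hPascal]; ring
    rw [h, hnA, hmcast]; ring
  -- the key derivative identity
  have key : ∀ (b u : ℝ → ℝ),
      (∀ r : ℝ, 0 < r → DifferentiableAt ℝ u r ∧ DifferentiableAt ℝ (deriv u) r) →
      (∀ r : ℝ, 0 < r → ((n - 1).choose j : ℝ) * deriv (deriv u) r * (deriv u r / r) ^ j +
          ((n - 1).choose (j + 1) : ℝ) * (deriv u r / r) ^ (j + 1) = b r * u r ^ γ) →
      ∀ r : ℝ, 0 < r → HasDerivAt (fun x => x ^ m * deriv u x ^ (j + 1))
        (((n : ℝ) / (n.choose (j + 1) : ℝ)) * r ^ (n - 1) * (b r * u r ^ γ)) r := by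
    intro b u hdiff hode r hr
    have H := (hasDerivAt_pow m r).mul ((hdiff r hr).2.hasDerivAt.pow (j + 1))
    have halg := keyAlg j m ((n - 1).choose j : ℝ) ((n - 1).choose (j + 1) : ℝ)
      (n.choose (j + 1) : ℝ) n r (deriv u r) (deriv (deriv u) r) (b r * u r ^ γ)
      hCpos.ne' hn0 hr.ne' (hode r hr) hnA hnB
    rw [show m + j = n - 1 by omega] at halg
    refine H.congr_deriv ?_
    rw [← halg]
    simp only [Nat.add_sub_cancel, Pi.pow_apply]
    push_cast
    ring
  -- main comparison for each l > 1
  have main : ∀ l : ℝ, 1 < l → ∀ t : ℝ, 0 ≤ t → u₁ t ≤ l * u₂ t := by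
    intro l hl
    by_contra hcon
    push_neg at hcon
    obtain ⟨t₀, ht₀, hbad⟩ := hcon
    set φ : ℝ → ℝ := fun t => l * u₂ t - u₁ t with hφ
    set T : Set ℝ := {t : ℝ | 0 ≤ t ∧ φ t ≤ 0} with hT
    have hTne : T.Nonempty := ⟨t₀, ht₀, by simp only [hφ]; linarith⟩
    have hTbdd : BddBelow T := ⟨0, fun x hx => hx.1⟩
    have hφcont : ContinuousOn φ (Set.Ici 0) :=
      (continuousOn_const.mul hu₂_cont).sub hu₁_cont
    have hTclosed : IsClosed T := by
      have : T = Set.Ici 0 ∩ φ ⁻¹' Set.Iic 0 := by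
        ext x; simp [hT, Set.mem_setOf_eq, and_comm]
      rw [this]
      exact hφcont.preimage_isClosed_of_isClosed isClosed_Ici isClosed_Iic
    set r₀ : ℝ := sInf T with hr₀
    have hr₀T : r₀ ∈ T := hTclosed.csInf_mem hTne hTbdd
    have hr₀0 : 0 ≤ r₀ := hr₀T.1
    have hφ0 : 0 < φ 0 := by
      simp only [hφ, hu₂_0, hu₁_0]
      nlinarith
    have hr₀pos : 0 < r₀ := by
      rcases lt_or_eq_of_le hr₀0 with h | h
      · exact h
      · exfalso
        have h2 := hr₀T.2
        rw [← h] at h2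
        linarith
    have hlt : ∀ t : ℝ, 0 ≤ t → t < r₀ → u₁ t ≤ l * u₂ t := by
      intro t ht htlt
      by_contra hc
      push_neg at hc
      have : t ∈ T := ⟨ht, by simp only [hφ]; linarith⟩
      exact absurd (csInf_le hTbdd this) (by linarith)
    have hIcc : Set.Icc (0 : ℝ) r₀ ⊆ Set.Ici 0 := Set.Icc_subset_Ici_self
    have hlnonneg : (0 : ℝ) ≤ l := by linarith
    -- monotonicity of h := l^(j+1) * G₂ - G₁ on [0, r₀]
    set g₁ : ℝ → ℝ := fun t => t ^ m * deriv u₁ t ^ (j + 1) with hg₁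
    set g₂ : ℝ → ℝ := fun t => t ^ m * deriv u₂ t ^ (j + 1) with hg₂
    have hg₁cont : ContinuousOn g₁ (Set.Icc 0 r₀) :=
      ((continuous_pow m).continuousOn).mul ((hu₁_cont'.mono hIcc).pow (j + 1))
    have hg₂cont : ContinuousOn g₂ (Set.Icc 0 r₀) :=
      ((continuous_pow m).continuousOn).mul ((hu₂_cont'.mono hIcc).pow (j + 1))
    set h : ℝ → ℝ := fun t => l ^ (j + 1) * g₂ t - g₁ t with hh
    have hmono : MonotoneOn h (Set.Icc 0 r₀) := by
      apply monotoneOn_of_deriv_nonneg (convex_Icc 0 r₀)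
      · exact (continuousOn_const.mul hg₂cont).sub hg₁cont
      · intro x hx
        rw [interior_Icc] at hx
        exact ((((key b₂ u₂ hu₂_diff hu₂_ode x hx.1).const_mul (l ^ (j + 1))).sub
          (key b₁ u₁ hu₁_diff hu₁_ode x hx.1)).differentiableAt).differentiableWithinAt
      · intro x hx
        rw [interior_Icc] at hx
        have H := ((key b₂ u₂ hu₂_diff hu₂_ode x hx.1).const_mul (l ^ (j + 1))).sub
          (key b₁ u₁ hu₁_diff hu₁_ode x hx.1)
        rw [show deriv h x = _ from H.deriv]
        have hx0 : 0 ≤ x := hx.1.le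
        have hcx : 0 ≤ ((n : ℝ) / (n.choose (j + 1) : ℝ)) * x ^ (n - 1) := by positivity
        have hineq : b₁ x * u₁ x ^ γ ≤ l ^ (j + 1) * (b₂ x * u₂ x ^ γ) := by
          have h1 : u₁ x ^ γ ≤ (l * u₂ x) ^ γ :=
            Real.rpow_le_rpow (hu₁_pos x hx0).le (hlt x hx0 hx.2) hγ0.le
          have h2 : (l * u₂ x) ^ γ = l ^ γ * u₂ x ^ γ :=
            Real.mul_rpow hlnonneg (hu₂_pos x hx0).le
          have h3 : l ^ γ ≤ l ^ ((j + 1 : ℕ) : ℝ) :=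
            Real.rpow_le_rpow_of_exponent_le hl.le (by exact_mod_cast hγk.le)
          have h4 : l ^ (((j + 1 : ℕ)) : ℝ) = l ^ (j + 1) := Real.rpow_natCast l (j + 1)
          have h5 : u₁ x ^ γ ≤ l ^ (j + 1) * u₂ x ^ γ := by
            rw [← h4]
            calc u₁ x ^ γ ≤ (l * u₂ x) ^ γ := h1
              _ = l ^ γ * u₂ x ^ γ := h2
              _ ≤ l ^ ((j + 1 : ℕ) : ℝ) * u₂ x ^ γ := by
                  apply mul_le_mul_of_nonneg_right h3 (Real.rpow_nonneg (hu₂_pos x hx0).le γ)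
          calc b₁ x * u₁ x ^ γ ≤ b₂ x * (l ^ (j + 1) * u₂ x ^ γ) := by
                apply mul_le_mul (hb₁₂ x hx0) h5 (Real.rpow_nonneg (hu₁_pos x hx0).le γ)
                  (hb₂_nonneg x hx0)
            _ = l ^ (j + 1) * (b₂ x * u₂ x ^ γ) := by ring
        have h6 := mul_le_mul_of_nonneg_left hineq hcx
        have h7 : l ^ (j + 1) * (((n : ℝ) / (n.choose (j + 1) : ℝ)) * x ^ (n - 1) *
            (b₂ x * u₂ x ^ γ)) = ((n : ℝ) / (n.choose (j + 1) : ℝ)) * x ^ (n - 1) *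
            (l ^ (j + 1) * (b₂ x * u₂ x ^ γ)) := by ring
        rw [h7]
        linarith
    have hh0 : h 0 = 0 := by
      simp only [hh, hg₁, hg₂, hu₁'_0, hu₂'_0]
      simp [zero_pow (Nat.succ_ne_zero j)]
    have hd : ∀ x ∈ Set.Ioo 0 r₀, deriv u₁ x ≤ l * deriv u₂ x := by
      intro x hx
      have hxIcc : x ∈ Set.Icc 0 r₀ := ⟨hx.1.le, hx.2.le⟩
      have h0Icc : (0 : ℝ) ∈ Set.Icc 0 r₀ := ⟨le_refl 0, hr₀0⟩
      have := hmono h0Icc hxIcc hx.1.le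
      rw [hh0] at this
      have hxm : (0 : ℝ) < x ^ m := pow_pos hx.1 m
      have hpow : deriv u₁ x ^ (j + 1) ≤ (l * deriv u₂ x) ^ (j + 1) := by
        have h8 : x ^ m * deriv u₁ x ^ (j + 1) ≤ x ^ m * (l ^ (j + 1) * deriv u₂ x ^ (j + 1)) := by
          simp only [hh, hg₁, hg₂] at this
          nlinarith
        have h9 := (mul_le_mul_iff_right₀ hxm).mp h8
        rw [mul_pow]
        exact h9
      exact le_of_pow_le_pow_left₀ (Nat.succ_ne_zero j)
        (mul_nonneg hlnonneg (hu₂_incr x hx.1.le)) hpow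
    have hφmono : MonotoneOn φ (Set.Icc 0 r₀) := by
      apply monotoneOn_of_deriv_nonneg (convex_Icc 0 r₀)
      · exact ((continuousOn_const.mul hu₂_cont).sub hu₁_cont).mono hIcc
      · intro x hx
        rw [interior_Icc] at hx
        exact (((hu₂_diff x hx.1).1.hasDerivAt.const_mul l).sub
          (hu₁_diff x hx.1).1.hasDerivAt).differentiableAt.differentiableWithinAt
      · intro x hx
        rw [interior_Icc] at hx
        have H := ((hu₂_diff x hx.1).1.hasDerivAt.const_mul l).sub
          (hu₁_diff x hx.1).1.hasDerivAt
        rw [show deriv φ x = _ from H.deriv]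
        have := hd x hx
        linarith
    have hfinal := hφmono ⟨le_refl 0, hr₀0⟩ ⟨hr₀0, le_refl r₀⟩ hr₀0
    have : φ r₀ ≤ 0 := hr₀T.2
    linarith
  -- conclude by letting l → 1
  intro r hr
  by_contra hc
  push_neg at hc
  have hu₂r : 0 < u₂ r := hu₂_pos r hr
  set l : ℝ := (1 + u₁ r / u₂ r) / 2 with hl
  have hl1 : 1 < l := by
    rw [hl]
    have : 1 < u₁ r / u₂ r := (one_lt_div hu₂r).mpr hc
    linarith
  have := main l hl1 r hr
  have hlu : l * u₂ r < u₁ r := by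
    rw [hl]
    have h1 : (1 + u₁ r / u₂ r) / 2 * u₂ r = (u₂ r + u₁ r) / 2 := by
      field_simp
    rw [h1]
    linarith
  linarith
end
end

section
/- Let n ≥ 3, 1 ≤ k ≤ n, 0 < γ < k, let b be a positive continuous function on [0, ∞), and let u be a positive entire solution on [0, ∞) of C_{n−1}^{k−1} u''(u'/r)^{k−1} + C_{n−1}^k (u'/r)^k = b(r) u^γ with u'(0) = 0. Define ū(r) := ∫_0^r ((n s^{k−n}/C_n^k) ∫_0^s t^{n−1} b(t) dt)^{1/k} ds, the radial solution of S_k(D²ū) = b(r) with ū(0) = 0, ū'(0) = 0. Then u(r) ≤ 2^{γ/(k−γ)} (u(0) + ū(r)^{k/(k−γ)}) for all r ≥ 0. -/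
open MeasureTheory Real Filter

noncomputable section

lemma my_two_rpow_ineq {a c p : ℝ} (ha : 0 ≤ a) (hc : 0 ≤ c) (hp : 1 ≤ p) :
    (a + c) ^ p ≤ 2 ^ (p - 1) * (a ^ p + c ^ p) := by
  have hconv := (_root_.convexOn_rpow hp).2 (Set.mem_Ici.mpr ha) (Set.mem_Ici.mpr hc)
    (by norm_num : (0:ℝ) ≤ 1/2) (by norm_num : (0:ℝ) ≤ 1/2) (by norm_num)
  simp only [smul_eq_mul] at hconv
  have h2 : (a + c) ^ p = 2 ^ p * ((1/2) * a + (1/2) * c) ^ p := by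
    rw [← Real.mul_rpow (by norm_num) (by positivity)]
    ring_nf
  have h3 : (2:ℝ) ^ p * ((1/2) * a + (1/2) * c) ^ p ≤ 2 ^ p * ((1/2) * a ^ p + (1/2) * c ^ p) :=
    mul_le_mul_of_nonneg_left hconv (by positivity)
  have h4 : (2:ℝ) ^ p * ((1/2) * a ^ p + (1/2) * c ^ p) = 2 ^ (p-1) * (a ^ p + c ^ p) := by
    rw [Real.rpow_sub (by norm_num : (0:ℝ) < 2), Real.rpow_one]
    ring
  linarith

lemma my_primitive_continuousOn {f : ℝ → ℝ} (hf : ContinuousOn f (Set.Ici 0)) :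
    ContinuousOn (fun x => ∫ t in (0:ℝ)..x, f t) (Set.Ici 0) := by
  intro x hx
  have hx0 : (0:ℝ) ≤ x := hx
  have h1 : ContinuousOn (fun y => ∫ t in (0:ℝ)..y, f t) (Set.uIcc 0 (x+1)) := by
    apply intervalIntegral.continuousOn_primitive_interval
    rw [Set.uIcc_of_le (by linarith)]
    exact (hf.mono (Set.Icc_subset_Ici_self)).integrableOn_Icc
  rw [Set.uIcc_of_le (by linarith)] at h1
  have h2 := h1 x ⟨hx0, by linarith⟩
  apply h2.mono_of_mem_nhdsWithin
  rw [← Set.Ici_inter_Iic]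
  exact Filter.inter_mem self_mem_nhdsWithin
    (mem_nhdsWithin_of_mem_nhds (Iic_mem_nhds (by linarith)))

lemma my_primitive_hasDerivAt {f : ℝ → ℝ} (hf : ContinuousOn f (Set.Ici 0)) {x : ℝ}
    (hx : 0 < x) : HasDerivAt (fun y => ∫ t in (0:ℝ)..y, f t) (f x) x := by
  apply intervalIntegral.integral_hasDerivAt_right
  · apply ContinuousOn.intervalIntegrable
    rw [Set.uIcc_of_le hx.le]
    exact hf.mono (Set.Icc_subset_Ici_self)
  · exact ⟨Set.Ioi 0, Ioi_mem_nhds hx,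
      (hf.mono Set.Ioi_subset_Ici_self).aestronglyMeasurable measurableSet_Ioi⟩
  · exact (hf.mono Set.Ioi_subset_Ici_self).continuousAt (Ioi_mem_nhds hx)

set_option maxHeartbeats 1600000 in
/-- **Lemma 3.3.** If `u` is a positive entire radial solution of `S_k(D²u) = b(r) u^γ`,
then `u(r) ≤ 2^{γ/(k-γ)} (u(0) + ū(r)^{k/(k-γ)})`, where
`ū(r) = ∫_0^r ((n s^{k-n}/C_n^k) ∫_0^s t^{n-1} b(t) dt)^{1/k} ds` is the positive entire
radial solution of `S_k(D²ū) = b(r)` with `ū(0) = 0`, `ū'(0) = 0`. -/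
theorem upper_bound_by_pure_weight_solution
    (n k : ℕ) (hn : 3 ≤ n) (hk1 : 1 ≤ k) (hkn : k ≤ n)
    (γ : ℝ) (hγ0 : 0 < γ) (hγk : γ < k)
    (b : ℝ → ℝ) (hb_cont : ContinuousOn b (Set.Ici 0)) (hb_pos : ∀ r : ℝ, 0 ≤ r → 0 < b r)
    (u : ℝ → ℝ)
    (hu_pos : ∀ r : ℝ, 0 ≤ r → 0 < u r)
    (hu_cont : ContinuousOn u (Set.Ici 0))
    (hu_cont' : ContinuousOn (deriv u) (Set.Ici 0))
    (hu_diff : ∀ r : ℝ, 0 < r → DifferentiableAt ℝ u r ∧ DifferentiableAt ℝ (deriv u) r)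
    (hu'_0 : deriv u 0 = 0)
    (hu_ode : ∀ r : ℝ, 0 < r →
      ((n - 1).choose (k - 1) : ℝ) * deriv (deriv u) r * (deriv u r / r) ^ (k - 1) +
        ((n - 1).choose k : ℝ) * (deriv u r / r) ^ k = b r * u r ^ γ) :
    ∀ r : ℝ, 0 ≤ r → u r ≤ 2 ^ (γ / ((k : ℝ) - γ)) *
      (u 0 + (∫ s in (0:ℝ)..r,
        ((n : ℝ) * s ^ ((k : ℝ) - n) / (n.choose k) *
          ∫ t in (0:ℝ)..s, t ^ (n - 1) * b t) ^ ((1 : ℝ) / k)) ^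
            ((k : ℝ) / ((k : ℝ) - γ))) := by
  have hk0 : (0:ℝ) < k := by exact_mod_cast hk1
  have hn0 : (0:ℝ) < n := by
    have : (0:ℕ) < n := by omega
    exact_mod_cast this
  have hkn' : (k:ℝ) ≤ n := by exact_mod_cast hkn
  have hkne : k ≠ 0 := by omega
  have hkγ : (0:ℝ) < (k:ℝ) - γ := sub_pos.mpr hγk
  have hC : (0:ℝ) < (n.choose k : ℝ) := by exact_mod_cast Nat.choose_pos hkn
  have hexp_pos : 0 < γ / ((k:ℝ) - γ) := div_pos hγ0 hkγ
  have h2e : (1:ℝ) ≤ 2 ^ (γ/((k:ℝ)-γ)) := Real.one_le_rpow one_le_two hexp_pos.le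
  -- continuity of integrands
  have hbu_cont : ContinuousOn (fun t => t ^ (n-1) * (b t * u t ^ γ)) (Set.Ici 0) := by
    apply ContinuousOn.mul (continuous_pow (n-1)).continuousOn
    exact hb_cont.mul (hu_cont.rpow_const (fun x hx => Or.inl (hu_pos x hx).ne'))
  have htb_cont : ContinuousOn (fun t => t ^ (n-1) * b t) (Set.Ici 0) :=
    ContinuousOn.mul (continuous_pow (n-1)).continuousOn hb_cont
  set Ib : ℝ → ℝ := fun s => ∫ t in (0:ℝ)..s, t ^ (n-1) * b t with hIbdef
  set I : ℝ → ℝ := fun s => ∫ t in (0:ℝ)..s, t ^ (n-1) * (b t * u t ^ γ) with hIdef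
  set g : ℝ → ℝ := fun s => ((n : ℝ) * s ^ ((k : ℝ) - n) / (n.choose k) * Ib s) ^ ((1 : ℝ) / k)
    with hgdef
  have hIb_cont : ContinuousOn Ib (Set.Ici 0) := my_primitive_continuousOn htb_cont
  have hI_cont : ContinuousOn I (Set.Ici 0) := my_primitive_continuousOn hbu_cont
  -- binomial identities
  have hb1 : (k:ℝ) * (n.choose k) = (n:ℝ) * ((n-1).choose (k-1)) := by
    have h := Nat.add_one_mul_choose_eq (n-1) (k-1)
    simp only [Nat.succ_eq_add_one, Nat.sub_add_cancel (show 1 ≤ n by omega),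
      Nat.sub_add_cancel (show 1 ≤ k by omega)] at h
    have h2 : (n:ℝ) * ((n-1).choose (k-1)) = ((n.choose k) : ℝ) * k := by
      exact_mod_cast congrArg (Nat.cast (R := ℝ)) h
    linarith
  have hb2 : ((n:ℝ) - k) * (n.choose k) = (n:ℝ) * ((n-1).choose k) := by
    have h := Nat.choose_succ_succ (n-1) (k-1)
    simp only [Nat.succ_eq_add_one, Nat.sub_add_cancel (show 1 ≤ n by omega),
      Nat.sub_add_cancel (show 1 ≤ k by omega)] at h
    have hp : ((n.choose k) : ℝ) = ((n-1).choose (k-1) : ℝ) + ((n-1).choose k : ℝ) := by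
      exact_mod_cast congrArg (Nat.cast (R := ℝ)) h
    linear_combination (n:ℝ) * hp - hb1
  -- the fundamental integral identity
  have key : ∀ x : ℝ, 0 < x →
      ((n.choose k : ℝ)) * ((x:ℝ)^(n-k) * (deriv u x)^k) = (n:ℝ) * I x := by
    intro R hR
    set F : ℝ → ℝ := fun x =>
      ((n.choose k : ℝ)) * (x^(n-k) * (deriv u x)^k) - (n:ℝ) * I x with hFdef
    have hFderiv : ∀ x ∈ Set.Ioo 0 R, HasDerivAt F 0 x := by
      intro x hx
      obtain ⟨hx0, hxR⟩ := hx
      have hxne : x ≠ 0 := hx0.ne'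
      have hud' : DifferentiableAt ℝ (deriv u) x := (hu_diff x hx0).2
      have h1 := hasDerivAt_pow (n-k) x
      have h2 : HasDerivAt (fun y => (deriv u y) ^ k)
          ((k:ℝ) * (deriv u x)^(k-1) * deriv (deriv u) x) x := hud'.hasDerivAt.pow k
      have h4 := (h1.mul h2).const_mul ((n.choose k : ℝ))
      have h5 : HasDerivAt I (x^(n-1)*(b x * u x^γ)) x := my_primitive_hasDerivAt hbu_cont hx0
      have h6 := h4.sub (h5.const_mul (n:ℝ))
      refine HasDerivAt.congr_deriv h6 (Eq.symm ?_)
      have ode := hu_ode x hx0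
      set U := deriv u x with hU
      set U2 := deriv (deriv u) x with hU2
      set B := b x * u x ^ γ with hB
      set c1 := (((n-1).choose (k-1)) : ℝ)
      set c2 := (((n-1).choose k) : ℝ)
      set C := ((n.choose k) : ℝ)
      have ek : U ^ k = U^(k-1) * U := by
        conv_lhs => rw [← Nat.sub_add_cancel hk1]; rw [pow_succ]
      have ekx : x ^ k = x^(k-1) * x := by
        conv_lhs => rw [← Nat.sub_add_cancel hk1]; rw [pow_succ]
      have ode' : c1 * U2 * U^(k-1) * x + c2 * (U^(k-1) * U) = B * (x^(k-1) * x) := by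
        rw [div_pow, div_pow, ek] at ode
        field_simp at ode
        rw [ekx] at ode
        refine mul_left_cancel₀ (show (x^(k-1):ℝ) ≠ 0 by positivity) ?_
        linear_combination ode
      have hM1 : ((n-k:ℕ):ℝ) * x^(n-k-1) * (x^(k-1) * x) = ((n-k:ℕ):ℝ) * x^(n-1) := by
        rcases Nat.eq_or_lt_of_le hkn with h|h
        · simp [h]
        · have hh : x^(n-k-1) * (x^(k-1) * x) = x^(n-1) := by
            rw [← pow_succ, ← pow_add]
            congr 1
            omega
          rw [mul_assoc, hh]
      have hM2 : x^(n-k) * (x^(k-1) * x) = x^(n-1) * x := by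
        rw [← pow_succ, ← pow_add, ← pow_succ]
        congr 1
        omega
      have hcast : ((n-k:ℕ):ℝ) = (n:ℝ) - k := by
        push_cast [Nat.cast_sub hkn]; ring
      rw [ek]
      refine mul_left_cancel₀ (show (x^(k-1) * x : ℝ) ≠ 0 by positivity) ?_
      linear_combination (-((n:ℝ)*x^(n-1))) * ode' + (-(C*U^(k-1)*U)) * hM1
        + (-(C*(k:ℝ)*U^(k-1)*U2)) * hM2 + (-(U^(k-1)*U2*x^(n-1)*x)) * hb1
        + (-(U^(k-1)*U*x^(n-1))) * hb2 + (-(C*U^(k-1)*U*x^(n-1))) * hcast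
    have hFcont : ContinuousOn F (Set.Icc 0 R) := by
      apply ContinuousOn.sub
      · exact continuousOn_const.mul (((continuous_pow (n-k)).continuousOn).mul
          ((hu_cont'.mono Set.Icc_subset_Ici_self).pow k))
      · exact continuousOn_const.mul (hI_cont.mono Set.Icc_subset_Ici_self)
    have hdiff : DifferentiableOn ℝ F (interior (Set.Icc 0 R)) := by
      rw [interior_Icc]
      exact fun x hx => ((hFderiv x hx).differentiableAt).differentiableWithinAt
    have m1 := monotoneOn_of_deriv_nonneg (convex_Icc 0 R) hFcont hdiff (by
      rw [interior_Icc]; intro x hx; rw [(hFderiv x hx).deriv])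
    have m2 := antitoneOn_of_deriv_nonpos (convex_Icc 0 R) hFcont hdiff (by
      rw [interior_Icc]; intro x hx; rw [(hFderiv x hx).deriv])
    have hF0 : F 0 = 0 := by
      simp [hFdef, hIdef, hu'_0, zero_pow hkne, intervalIntegral.integral_same]
    have hFR : F R = 0 := by
      have hle := m1 (Set.left_mem_Icc.mpr hR.le) (Set.right_mem_Icc.mpr hR.le) hR.le
      have hge := m2 (Set.left_mem_Icc.mpr hR.le) (Set.right_mem_Icc.mpr hR.le) hR.le
      rw [hF0] at hle hge
      linarith
    have : ((n.choose k : ℝ)) * (R^(n-k) * (deriv u R)^k) - (n:ℝ) * I R = 0 := hFR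
    linarith
  -- positivity of I
  have hI_pos : ∀ x : ℝ, 0 < x → 0 < I x := by
    intro x hx
    apply intervalIntegral.intervalIntegral_pos_of_pos_on
    · apply ContinuousOn.intervalIntegrable
      rw [Set.uIcc_of_le hx.le]
      exact hbu_cont.mono Set.Icc_subset_Ici_self
    · intro t ht
      exact mul_pos (pow_pos ht.1 _)
        (mul_pos (hb_pos t ht.1.le) (Real.rpow_pos_of_pos (hu_pos t ht.1.le) γ))
    · exact hx
  -- the derivative never vanishes on (0, ∞)
  have hu'ne : ∀ x : ℝ, 0 < x → deriv u x ≠ 0 := by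
    intro x hx h0
    have hk' := key x hx
    rw [h0, zero_pow hkne] at hk'
    simp only [mul_zero] at hk'
    have := hI_pos x hx
    nlinarith
  -- sign dichotomy
  have hsign : (∀ x : ℝ, 0 < x → 0 < deriv u x) ∨ (∀ x : ℝ, 0 < x → deriv u x < 0) := by
    by_contra hcon
    push_neg at hcon
    obtain ⟨⟨a, ha0, ha⟩, ⟨c, hc0, hc⟩⟩ := hcon
    have ha' : deriv u a < 0 := lt_of_le_of_ne ha (hu'ne a ha0)
    have hc' : 0 < deriv u c := lt_of_le_of_ne (by simpa using hc) (Ne.symm (hu'ne c hc0))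
    rcases le_total a c with hac | hca
    · obtain ⟨x, hxmem, hx0⟩ := intermediate_value_Icc hac
        (hu_cont'.mono (Set.Icc_subset_Ici_self.trans (Set.Ici_subset_Ici.mpr ha0.le))) ⟨ha'.le, hc'.le⟩
      exact hu'ne x (lt_of_lt_of_le ha0 hxmem.1) hx0
    · obtain ⟨x, hxmem, hx0⟩ := intermediate_value_Icc' hca
        (hu_cont'.mono (Set.Icc_subset_Ici_self.trans (Set.Ici_subset_Ici.mpr hc0.le))) ⟨ha'.le, hc'.le⟩
      exact hu'ne x (lt_of_lt_of_le hc0 hxmem.1) hx0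
  -- nonnegativity of g
  have hIb_nonneg : ∀ s : ℝ, 0 ≤ s → 0 ≤ Ib s := by
    intro s hs
    apply intervalIntegral.integral_nonneg hs
    intro t ht
    exact mul_nonneg (pow_nonneg ht.1 _) (hb_pos t ht.1).le
  have hg_nonneg : ∀ s : ℝ, 0 ≤ s → 0 ≤ g s := by
    intro s hs
    apply Real.rpow_nonneg
    have h1 : (0:ℝ) ≤ (n : ℝ) * s ^ ((k : ℝ) - n) / (n.choose k) :=
      div_nonneg (mul_nonneg hn0.le (Real.rpow_nonneg hs _)) hC.le
    exact mul_nonneg h1 (hIb_nonneg s hs)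
  intro r hr
  rcases hr.eq_or_lt with h0 | hr0
  · -- r = 0
    rw [← h0]
    rw [intervalIntegral.integral_same, Real.zero_rpow (by positivity : (k:ℝ)/((k:ℝ)-γ) ≠ 0)]
    nlinarith [hu_pos 0 le_rfl]
  -- r > 0 now
  have hub_nonneg : 0 ≤ ∫ s in (0:ℝ)..r, g s :=
    intervalIntegral.integral_nonneg hr0.le (fun s hs => hg_nonneg s hs.1)
  have hX_nonneg : 0 ≤ (∫ s in (0:ℝ)..r, g s) ^ ((k:ℝ)/((k:ℝ)-γ)) :=
    Real.rpow_nonneg hub_nonneg _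
  rcases hsign with hpos | hneg
  swap
  · -- negative derivative: u is decreasing, trivial bound
    have hanti : AntitoneOn u (Set.Ici 0) := by
      apply antitoneOn_of_deriv_nonpos (convex_Ici 0) hu_cont
      · rw [interior_Ici]
        exact fun x hx => ((hu_diff x hx).1).differentiableWithinAt
      · rw [interior_Ici]
        exact fun x hx => (hneg x hx).le
    have hur : u r ≤ u 0 := hanti Set.self_mem_Ici hr hr0.le
    nlinarith [hu_pos 0 le_rfl, mul_nonneg (sub_nonneg.mpr h2e)
      (add_nonneg (hu_pos 0 le_rfl).le hX_nonneg)]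
  -- main case: positive derivative
  have hu'_nonneg : ∀ x : ℝ, 0 ≤ x → 0 ≤ deriv u x := by
    intro x hx
    rcases hx.eq_or_lt with h | h
    · rw [← h, hu'_0]
    · exact (hpos x h).le
  have humono : MonotoneOn u (Set.Ici 0) := by
    apply monotoneOn_of_deriv_nonneg (convex_Ici 0) hu_cont
    · rw [interior_Ici]
      exact fun x hx => ((hu_diff x hx).1).differentiableWithinAt
    · rw [interior_Ici]
      exact fun x hx => (hpos x hx).le
  -- bound on b on [0, r]
  obtain ⟨Mb, hMb⟩ := (isCompact_Icc (a := (0:ℝ)) (b := r)).exists_bound_of_continuousOn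
    (hb_cont.mono Set.Icc_subset_Ici_self)
  have hMb0 : 0 ≤ Mb := le_trans (norm_nonneg _) (hMb 0 (Set.left_mem_Icc.mpr hr0.le))
  -- (g s)^k formula
  have hg_pow : ∀ s : ℝ, 0 ≤ s →
      (g s)^k = (n : ℝ) * s ^ ((k : ℝ) - n) / (n.choose k) * Ib s := by
    intro s hs
    have hE : (0:ℝ) ≤ (n : ℝ) * s ^ ((k : ℝ) - n) / (n.choose k) * Ib s :=
      mul_nonneg (div_nonneg (mul_nonneg hn0.le (Real.rpow_nonneg hs _)) hC.le) (hIb_nonneg s hs)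
    have hgs : g s = ((n : ℝ) * s ^ ((k : ℝ) - n) / (n.choose k) * Ib s) ^ ((1:ℝ)/k) := rfl
    rw [hgs, ← Real.rpow_natCast (((n : ℝ) * s ^ ((k : ℝ) - n) / (n.choose k) * Ib s) ^ ((1:ℝ)/k)) k,
      ← Real.rpow_mul hE, one_div_mul_cancel hk0.ne', Real.rpow_one]
  -- bound on g on (0, r]
  have hg_bound : ∀ s ∈ Set.Ioc (0:ℝ) r, g s ≤ (Mb / (n.choose k) * r^k) ^ ((1:ℝ)/k) := by
    intro s hs
    obtain ⟨hs0, hsr⟩ := hs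
    have hIb_le : Ib s ≤ Mb * s^n / n := by
      have h1 : Ib s ≤ ∫ t in (0:ℝ)..s, t^(n-1) * Mb := by
        apply intervalIntegral.integral_mono_on hs0.le
        · apply ContinuousOn.intervalIntegrable
          rw [Set.uIcc_of_le hs0.le]
          exact htb_cont.mono (Set.Icc_subset_Ici_self)
        · apply ContinuousOn.intervalIntegrable
          exact ((continuous_pow (n-1)).mul continuous_const).continuousOn
        · intro t ht
          apply mul_le_mul_of_nonneg_left _ (pow_nonneg ht.1 _)
          exact le_trans (le_abs_self _) (hMb t (Set.Icc_subset_Icc_right hsr ht))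
      have h2 : ∫ t in (0:ℝ)..s, t^(n-1) * Mb = Mb * s^n / n := by
        rw [intervalIntegral.integral_mul_const, integral_pow]
        have hsub : n - 1 + 1 = n := by omega
        have hc : ((n-1:ℕ):ℝ) = (n:ℝ) - 1 := by
          have := Nat.cast_sub (show 1 ≤ n by omega) (R := ℝ)
          simpa using this
        rw [hsub, hc, zero_pow (show n ≠ 0 by omega)]
        field_simp
        have := hn0.ne'; ring_nf; field_simp
      linarith
    have hsk : s ^ ((k:ℝ) - (n:ℝ)) * s^n = s^k := by
      rw [← Real.rpow_natCast s n, ← Real.rpow_add hs0, sub_add_cancel, Real.rpow_natCast]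
    have hgk_le : (g s)^k ≤ Mb / (n.choose k) * r^k := by
      rw [hg_pow s hs0.le]
      have h3 : (n : ℝ) * s ^ ((k : ℝ) - n) / (n.choose k) * Ib s ≤
          (n : ℝ) * s ^ ((k : ℝ) - n) / (n.choose k) * (Mb * s^n / n) := by
        apply mul_le_mul_of_nonneg_left hIb_le
        exact div_nonneg (mul_nonneg hn0.le (Real.rpow_nonneg hs0.le _)) hC.le
      have h4 : (n : ℝ) * s ^ ((k : ℝ) - n) / (n.choose k) * (Mb * s^n / n) =
          Mb / (n.choose k) * s^k := by
        rw [← hsk]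
        field_simp
      have h5 : Mb / (n.choose k) * s^k ≤ Mb / (n.choose k) * r^k := by
        apply mul_le_mul_of_nonneg_left (pow_le_pow_left₀ hs0.le hsr k)
        positivity
      linarith
    have hround : g s = ((g s)^k) ^ ((1:ℝ)/k) := by
      rw [← Real.rpow_natCast (g s) k, ← Real.rpow_mul (hg_nonneg s hs0.le),
        mul_one_div, div_self hk0.ne', Real.rpow_one]
    rw [hround]
    exact Real.rpow_le_rpow (pow_nonneg (hg_nonneg s hs0.le) k) hgk_le (by positivity)
  -- continuity of g on (0, ∞)
  have hg_cont : ContinuousOn g (Set.Ioi 0) := by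
    apply ContinuousOn.rpow_const
    · apply ContinuousOn.mul
      · apply ContinuousOn.div_const
        apply ContinuousOn.mul continuousOn_const
        exact fun x hx => (Real.continuousAt_rpow_const x _ (Or.inl (ne_of_gt hx))).continuousWithinAt
      · exact hIb_cont.mono Set.Ioi_subset_Ici_self
    · exact fun x hx => Or.inr (by positivity)
  -- integrability of g on [0, r]
  have hg_int : IntervalIntegrable g volume 0 r := by
    rw [intervalIntegrable_iff_integrableOn_Ioc_of_le hr0.le]
    refine ⟨(hg_cont.mono Set.Ioc_subset_Ioi_self).aestronglyMeasurable measurableSet_Ioc, ?_⟩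
    apply HasFiniteIntegral.restrict_of_bounded (C := (Mb / (n.choose k) * r^k) ^ ((1:ℝ)/k))
      (measure_Ioc_lt_top)
    rw [ae_restrict_iff' measurableSet_Ioc]
    apply ae_of_all
    intro s hs
    rw [Real.norm_eq_abs, abs_of_nonneg (hg_nonneg s hs.1.le)]
    exact hg_bound s hs
  have hg_int' : ∀ x ∈ Set.Icc (0:ℝ) r, IntervalIntegrable g volume 0 x := by
    intro x hx
    apply hg_int.mono_set
    rw [Set.uIcc_of_le hx.1, Set.uIcc_of_le hr0.le]
    exact Set.Icc_subset_Icc_right hx.2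
  -- the comparison function ū
  have hub_cont : ContinuousOn (fun x => ∫ s in (0:ℝ)..x, g s) (Set.Icc 0 r) := by
    have := intervalIntegral.continuousOn_primitive_interval
      (a := (0:ℝ)) (b := r) (μ := volume) (f := g) ?_
    · rwa [Set.uIcc_of_le hr0.le] at this
    · rw [Set.uIcc_of_le hr0.le, integrableOn_Icc_iff_integrableOn_Ioc]
      rwa [intervalIntegrable_iff_integrableOn_Ioc_of_le hr0.le] at hg_int
  have hub_deriv : ∀ x ∈ Set.Ioo (0:ℝ) r, HasDerivAt (fun y => ∫ s in (0:ℝ)..y, g s) (g x) x := by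
    intro x hx
    apply intervalIntegral.integral_hasDerivAt_right (hg_int' x ⟨hx.1.le, hx.2.le⟩)
    · exact ⟨Set.Ioi 0, Ioi_mem_nhds hx.1, hg_cont.aestronglyMeasurable measurableSet_Ioi⟩
    · exact hg_cont.continuousAt (Ioi_mem_nhds hx.1)
  -- pointwise differential inequality : u' ≤ g * u^(γ/k)
  have hcomp : ∀ x ∈ Set.Ioo (0:ℝ) r, deriv u x ≤ g x * u x ^ (γ/(k:ℝ)) := by
    intro x hx
    obtain ⟨hx0, hxr⟩ := hx
    -- I x ≤ u x ^ γ * Ib x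
    have hIle : I x ≤ u x ^ γ * Ib x := by
      have h1 : I x ≤ ∫ t in (0:ℝ)..x, u x ^ γ * (t^(n-1) * b t) := by
        apply intervalIntegral.integral_mono_on hx0.le
        · apply ContinuousOn.intervalIntegrable
          rw [Set.uIcc_of_le hx0.le]
          exact hbu_cont.mono Set.Icc_subset_Ici_self
        · apply ContinuousOn.intervalIntegrable
          rw [Set.uIcc_of_le hx0.le]
          exact (continuousOn_const.mul (htb_cont.mono Set.Icc_subset_Ici_self))
        · intro t ht
          have hut : u t ≤ u x := humono ht.1 hx0.le ht.2
          have h2 : u t ^ γ ≤ u x ^ γ :=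
            Real.rpow_le_rpow (hu_pos t ht.1).le hut hγ0.le
          have h3 : (0:ℝ) ≤ t^(n-1) * b t := mul_nonneg (pow_nonneg ht.1 _) (hb_pos t ht.1).le
          calc t ^ (n-1) * (b t * u t ^ γ) = (t^(n-1) * b t) * u t ^ γ := by ring
          _ ≤ (t^(n-1) * b t) * u x ^ γ := mul_le_mul_of_nonneg_left h2 h3
          _ = u x ^ γ * (t^(n-1) * b t) := by ring
      rw [intervalIntegral.integral_const_mul] at h1
      exact h1
    -- (deriv u x)^k ≤ (g x)^k * u x ^ γ
    have hPQ : x ^ ((k:ℝ)-(n:ℝ)) * (x^(n-k) : ℝ) = 1 := by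
      rw [← Real.rpow_natCast x (n-k), ← Real.rpow_add hx0, Nat.cast_sub hkn]
      rw [show (k:ℝ) - n + ((n:ℝ) - k) = 0 by ring, Real.rpow_zero]
    have hUk : (deriv u x)^k = (n:ℝ) * x ^ ((k:ℝ)-(n:ℝ)) / (n.choose k) * I x := by
      have hCC : (n.choose k : ℝ) * ((n.choose k : ℝ))⁻¹ = 1 := mul_inv_cancel₀ hC.ne'
      linear_combination (x^((k:ℝ)-(n:ℝ)) * ((n.choose k : ℝ))⁻¹) * (key x hx0)
        - ((deriv u x)^k) * hPQ
        - (x^((k:ℝ)-(n:ℝ)) * (x^(n-k):ℝ) * (deriv u x)^k) * hCC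
    have hUk_le : (deriv u x)^k ≤ (g x)^k * u x ^ γ := by
      rw [hUk, hg_pow x hx0.le]
      have hcoef : (0:ℝ) ≤ (n:ℝ) * x ^ ((k:ℝ)-(n:ℝ)) / (n.choose k) :=
        div_nonneg (mul_nonneg hn0.le (Real.rpow_nonneg hx0.le _)) hC.le
      calc (n:ℝ) * x ^ ((k:ℝ)-(n:ℝ)) / (n.choose k) * I x
          ≤ (n:ℝ) * x ^ ((k:ℝ)-(n:ℝ)) / (n.choose k) * (u x ^ γ * Ib x) :=
            mul_le_mul_of_nonneg_left hIle hcoef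
        _ = (n:ℝ) * x ^ ((k:ℝ)-(n:ℝ)) / (n.choose k) * Ib x * u x ^ γ := by ring
    -- take k-th roots
    have hru : deriv u x = ((deriv u x)^k) ^ ((1:ℝ)/k) := by
      rw [← Real.rpow_natCast (deriv u x) k, ← Real.rpow_mul (hpos x hx0).le,
        mul_one_div, div_self hk0.ne', Real.rpow_one]
    rw [hru]
    have h7 : (((deriv u x)^k)) ^ ((1:ℝ)/k) ≤ ((g x)^k * u x ^ γ) ^ ((1:ℝ)/k) :=
      Real.rpow_le_rpow (pow_nonneg (hpos x hx0).le k) hUk_le (by positivity)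
    have h8 : ((g x)^k * u x ^ γ) ^ ((1:ℝ)/k) = g x * u x ^ (γ/(k:ℝ)) := by
      rw [Real.mul_rpow (pow_nonneg (hg_nonneg x hx0.le) k) (Real.rpow_nonneg (hu_pos x hx0.le).le γ)]
      congr 1
      · rw [← Real.rpow_natCast (g x) k, ← Real.rpow_mul (hg_nonneg x hx0.le),
          mul_one_div, div_self hk0.ne', Real.rpow_one]
      · rw [← Real.rpow_mul (hu_pos x hx0.le).le, mul_one_div]
    rw [← h8]
    exact h7
  -- set up W and show it is monotone
  set q : ℝ := ((k:ℝ)-γ)/(k:ℝ) with hqdef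
  have hq0 : 0 < q := div_pos hkγ hk0
  set W : ℝ → ℝ := fun x => (∫ s in (0:ℝ)..x, g s) - (k:ℝ)/((k:ℝ)-γ) * u x ^ q with hWdef
  have hW_cont : ContinuousOn W (Set.Icc 0 r) := by
    apply hub_cont.sub
    apply ContinuousOn.mul continuousOn_const
    exact (hu_cont.mono Set.Icc_subset_Ici_self).rpow_const
      (fun x hx => Or.inl (hu_pos x hx.1).ne')
  have hW_deriv : ∀ x ∈ Set.Ioo (0:ℝ) r, ∃ d, HasDerivAt W d x ∧ 0 ≤ d := by
    intro x hx
    have h8 : HasDerivAt (fun y => u y ^ q) (deriv u x * q * u x ^ (q - 1)) x :=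
      HasDerivAt.rpow_const ((hu_diff x hx.1).1.hasDerivAt) (Or.inl (hu_pos x hx.1.le).ne')
    have h9 := (hub_deriv x hx).sub (h8.const_mul ((k:ℝ)/((k:ℝ)-γ)))
    refine ⟨_, h9, ?_⟩
    have hqq : (k:ℝ)/((k:ℝ)-γ) * q = 1 := by
      rw [hqdef]
      field_simp
    have hc : (k:ℝ)/((k:ℝ)-γ) * (deriv u x * q * u x ^ (q - 1)) =
        u x ^ (q-1) * deriv u x := by
      linear_combination (deriv u x * u x ^ (q - 1)) * hqq
    rw [hc]
    have hq1 : q - 1 = -(γ/(k:ℝ)) := by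
      rw [hqdef]
      field_simp
      ring
    have hipos : 0 < u x ^ (γ/(k:ℝ)) := Real.rpow_pos_of_pos (hu_pos x hx.1.le) _
    have h10 : u x ^ (q-1) * deriv u x ≤ g x := by
      rw [hq1, Real.rpow_neg (hu_pos x hx.1.le).le]
      rw [inv_mul_le_iff₀ hipos]
      exact (hcomp x hx).trans_eq (mul_comm _ _)
    linarith
  have hWdiff : DifferentiableOn ℝ W (interior (Set.Icc 0 r)) := by
    rw [interior_Icc]
    intro x hx
    obtain ⟨d, hd, _⟩ := hW_deriv x hx
    exact hd.differentiableAt.differentiableWithinAt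
  have hWmono := monotoneOn_of_deriv_nonneg (convex_Icc 0 r) hW_cont hWdiff (by
    rw [interior_Icc]
    intro x hx
    obtain ⟨d, hd, hd0⟩ := hW_deriv x hx
    rw [hd.deriv]
    exact hd0)
  have hW0r : W 0 ≤ W r :=
    hWmono (Set.left_mem_Icc.mpr hr0.le) (Set.right_mem_Icc.mpr hr0.le) hr0.le
  have hW0 : W 0 = - ((k:ℝ)/((k:ℝ)-γ) * u 0 ^ q) := by
    simp [hWdef, intervalIntegral.integral_same]
  set Ub : ℝ := ∫ s in (0:ℝ)..r, g s with hUbdef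
  have hineq1 : (k:ℝ)/((k:ℝ)-γ) * u r ^ q ≤ (k:ℝ)/((k:ℝ)-γ) * u 0 ^ q + Ub := by
    have h := hW0r
    rw [hW0] at h
    have hWr : W r = Ub - (k:ℝ)/((k:ℝ)-γ) * u r ^ q := rfl
    rw [hWr] at h
    linarith
  have hineq2 : u r ^ q ≤ u 0 ^ q + Ub := by
    have h1 : u r ^ q ≤ u 0 ^ q + ((k:ℝ)-γ)/(k:ℝ) * Ub := by
      calc u r ^ q = (((k:ℝ)-γ)/k) * ((k:ℝ)/((k:ℝ)-γ) * u r ^ q) := by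
            field_simp
        _ ≤ (((k:ℝ)-γ)/k) * ((k:ℝ)/((k:ℝ)-γ) * u 0 ^ q + Ub) :=
            mul_le_mul_of_nonneg_left hineq1 (by positivity)
        _ = u 0 ^ q + ((k:ℝ)-γ)/(k:ℝ) * Ub := by
            field_simp
    have hle1 : ((k:ℝ)-γ)/(k:ℝ) ≤ 1 := by
      rw [div_le_one hk0]
      linarith
    nlinarith [hub_nonneg]
  set p : ℝ := (k:ℝ)/((k:ℝ)-γ) with hpdef
  have hp1 : 1 ≤ p := by
    rw [hpdef, le_div_iff₀ hkγ]
    linarith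
  have hqp : q * p = 1 := by
    rw [hqdef, hpdef]
    field_simp
  have hfin1 : u r = (u r ^ q) ^ p := by
    rw [← Real.rpow_mul (hu_pos r hr).le, hqp, Real.rpow_one]
  have hfin2 : (u r ^ q) ^ p ≤ (u 0 ^ q + Ub) ^ p :=
    Real.rpow_le_rpow (Real.rpow_nonneg (hu_pos r hr).le q) hineq2 (by positivity)
  have hfin3 : (u 0 ^ q + Ub) ^ p ≤ 2 ^ (p - 1) * ((u 0 ^ q) ^ p + Ub ^ p) :=
    my_two_rpow_ineq (Real.rpow_nonneg (hu_pos 0 le_rfl).le q) hub_nonneg hp1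
  have hfin4 : (u 0 ^ q) ^ p = u 0 := by
    rw [← Real.rpow_mul (hu_pos 0 le_rfl).le, hqp, Real.rpow_one]
  have hfin5 : p - 1 = γ / ((k:ℝ) - γ) := by
    rw [hpdef, div_sub_one hkγ.ne']
    congr 1
    ring
  rw [← hfin5, ← hfin4]
  linarith [hfin1, hfin2, hfin3]
end
end

section
/- Let n ≥ 3, 1 ≤ k ≤ n, 0 < γ < k, let b be a nonnegative continuous function on [0, ∞), and let w be a positive entire solution on [0, ∞) of C_{n−1}^{k−1} w''(w'/r)^{k−1} + C_{n−1}^k (w'/r)^k = b(r) w^γ with w'(0) = 0 and w(0) = β ≥ 1. Then for all r ≥ 0, w(r) ≤ (β^{(k−γ)/k} + ((k−γ)/k) ∫_0^r ((n s^{k−n}/C_n^k) ∫_0^s t^{n−1} b(t) dt)^{1/k} ds)^{k/(k−γ)}. -/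
open MeasureTheory Real Filter

noncomputable section

lemma alg (n k : ℕ) (hk1 : 1 ≤ k) (hkn : k ≤ n) (x W' W'' Bw : ℝ) (hx : 0 < x)
    (hode : ((n-1).choose (k-1) : ℝ) * W'' * (W'/x)^(k-1) + ((n-1).choose k : ℝ) * (W'/x)^k = Bw) :
    ((n-k : ℕ) : ℝ) * x^(n-k-1) * W'^k + x^(n-k) * ((k:ℝ) * W'^(k-1) * W'') =
      (n:ℝ)/(n.choose k) * (x^(n-1) * Bw) := by
  obtain ⟨j, rfl⟩ : ∃ j, k = j + 1 := ⟨k - 1, by omega⟩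
  obtain ⟨m, rfl⟩ : ∃ m, n = j + 1 + m := ⟨n - (j+1), by omega⟩
  have hxne : x ≠ 0 := hx.ne'
  have hCpos : 0 < ((j+1+m).choose (j+1) : ℝ) := by
    exact_mod_cast Nat.choose_pos (by omega)
  have hCne : ((j+1+m).choose (j+1) : ℝ) ≠ 0 := hCpos.ne'
  have e1 : j + 1 + m - (j+1) = m := by omega
  have e2 : j + 1 + m - (j+1) - 1 = m - 1 := by omega
  have e3 : j + 1 + m - 1 = j + m := by omega
  have e4 : j + 1 - 1 = j := by omega
  simp only [e1, e2, e3, e4] at hode ⊢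
  have hid1 : ((j+m).choose j : ℝ) = ((j+1):ℝ) * ((j+1+m).choose (j+1) : ℝ) / ((j+1+m):ℝ) := by
    have h' : (j+m+1) * ((j+m).choose j) = ((j+m+1).choose (j+1)) * (j+1) := by
      simpa [Nat.succ_eq_add_one] using Nat.add_one_mul_choose_eq (j+m) j
    have hc : j + m + 1 = j + 1 + m := by omega
    rw [hc] at h'
    have h'' : ((j+1+m):ℝ) * ((j+m).choose j : ℝ) = ((j+1+m).choose (j+1) : ℝ) * ((j+1):ℝ) := by
      exact_mod_cast h'
    field_simp
    linarith
  have hid2 : ((j+m).choose (j+1) : ℝ) =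
      ((j+1+m).choose (j+1) : ℝ) - ((j+m).choose j : ℝ) := by
    have h' : (j+m+1).choose (j+1) = (j+m).choose j + (j+m).choose (j+1) :=
      Nat.choose_succ_succ' (j+m) j
    have hc : j + m + 1 = j + 1 + m := by omega
    rw [hc] at h'
    have : ((j+1+m).choose (j+1) : ℝ) = ((j+m).choose j : ℝ) + ((j+m).choose (j+1) : ℝ) := by
      exact_mod_cast h'
    linarith
  rw [← hode, hid2, hid1]
  rcases m with _ | m'
  · push_cast
    field_simp
    simp only [div_pow]
    field_simp
    ring
  · have e5 : m' + 1 - 1 = m' := by omega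
    rw [e5]
    push_cast
    field_simp
    simp only [div_pow]
    field_simp
    ring


/-- **Estimate (3.10) for the supersolution.** A positive entire radial solution `w` of
`S_k(D²w) = b(r) w^γ` with `w(0) = β ≥ 1` satisfies
`w(r) ≤ (β^{(k-γ)/k} + ((k-γ)/k) ∫_0^r ((n s^{k-n}/C_n^k) ∫_0^s t^{n-1} b(t) dt)^{1/k} ds)^{k/(k-γ)}`. -/
theorem supersolution_growth_estimate
    (n k : ℕ) (hn : 3 ≤ n) (hk1 : 1 ≤ k) (hkn : k ≤ n)
    (γ : ℝ) (hγ0 : 0 < γ) (hγk : γ < k)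
    (b : ℝ → ℝ) (hb_cont : ContinuousOn b (Set.Ici 0)) (hb_nonneg : ∀ r : ℝ, 0 ≤ r → 0 ≤ b r)
    (β : ℝ) (hβ : 1 ≤ β)
    (w : ℝ → ℝ)
    (hw_pos : ∀ r : ℝ, 0 ≤ r → 0 < w r)
    (hw_cont : ContinuousOn w (Set.Ici 0))
    (hw_cont' : ContinuousOn (deriv w) (Set.Ici 0))
    (hw_diff : ∀ r : ℝ, 0 < r → DifferentiableAt ℝ w r ∧ DifferentiableAt ℝ (deriv w) r)
    (hw_0 : w 0 = β) (hw'_0 : deriv w 0 = 0)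
    (hw_ode : ∀ r : ℝ, 0 < r →
      ((n - 1).choose (k - 1) : ℝ) * deriv (deriv w) r * (deriv w r / r) ^ (k - 1) +
        ((n - 1).choose k : ℝ) * (deriv w r / r) ^ k = b r * w r ^ γ) :
    ∀ r : ℝ, 0 ≤ r → w r ≤
      (β ^ (((k : ℝ) - γ) / k) + (((k : ℝ) - γ) / k) *
        ∫ s in (0:ℝ)..r,
          ((n : ℝ) * s ^ ((k : ℝ) - n) / (n.choose k) *
            ∫ t in (0:ℝ)..s, t ^ (n - 1) * b t) ^ ((1 : ℝ) / k)) ^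
        ((k : ℝ) / ((k : ℝ) - γ)) := by
  intro r hr
  have hkR : (0:ℝ) < k := by exact_mod_cast hk1
  have hkne : (k:ℝ) ≠ 0 := hkR.ne'
  have hCpos : (0:ℝ) < (n.choose k : ℝ) := by exact_mod_cast Nat.choose_pos hkn
  have hβ0 : (0:ℝ) < β := lt_of_lt_of_le one_pos hβ
  set f : ℝ → ℝ := fun s =>
      ((n : ℝ) * s ^ ((k : ℝ) - n) / (n.choose k) *
        ∫ t in (0:ℝ)..s, t ^ (n - 1) * b t) ^ ((1 : ℝ) / k) with hfdef
  set α : ℝ := ((k : ℝ) - γ) / k with hαdef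
  have hα0 : 0 < α := div_pos (by linarith) hkR
  have hαne : α ≠ 0 := hα0.ne'
  have h1α : 1 - α = γ / k := by rw [hαdef]; field_simp; ring
  -- primitives
  set H : ℝ → ℝ := fun s => ∫ t in (0:ℝ)..s, t ^ (n - 1) * b t with hHdef
  set G : ℝ → ℝ := fun s => ∫ t in (0:ℝ)..s, t ^ (n - 1) * b t * w t ^ γ with hGdef
  have hfH : ∀ s : ℝ, f s =
      ((n : ℝ) * s ^ ((k : ℝ) - n) / (n.choose k) * H s) ^ ((1 : ℝ) / k) := fun s => rfl
  -- continuity of integrands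
  have hq0_cont : ContinuousOn (fun t : ℝ => t ^ (n - 1) * b t) (Set.Ici 0) :=
    (continuous_pow (n-1)).continuousOn.mul hb_cont
  have hq1_cont : ContinuousOn (fun t : ℝ => t ^ (n - 1) * b t * w t ^ γ) (Set.Ici 0) :=
    hq0_cont.mul (hw_cont.rpow_const (fun t ht => Or.inl (hw_pos t ht).ne'))
  have hq0_int : ∀ x : ℝ, 0 ≤ x →
      IntervalIntegrable (fun t : ℝ => t ^ (n - 1) * b t) volume 0 x := by
    intro x hx
    apply (hq0_cont.mono _).intervalIntegrable
    rw [Set.uIcc_of_le hx]; exact Set.Icc_subset_Ici_self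
  have hq1_int : ∀ x : ℝ, 0 ≤ x →
      IntervalIntegrable (fun t : ℝ => t ^ (n - 1) * b t * w t ^ γ) volume 0 x := by
    intro x hx
    apply (hq1_cont.mono _).intervalIntegrable
    rw [Set.uIcc_of_le hx]; exact Set.Icc_subset_Ici_self
  -- nonnegativity of primitives
  have hq0_nonneg : ∀ t : ℝ, 0 ≤ t → 0 ≤ t ^ (n - 1) * b t := by
    intro t ht; exact mul_nonneg (pow_nonneg ht _) (hb_nonneg t ht)
  have hq1_nonneg : ∀ t : ℝ, 0 ≤ t → 0 ≤ t ^ (n - 1) * b t * w t ^ γ := by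
    intro t ht; exact mul_nonneg (hq0_nonneg t ht) (Real.rpow_nonneg (hw_pos t ht).le _)
  have hH_nonneg : ∀ s : ℝ, 0 ≤ s → 0 ≤ H s := by
    intro s hs
    exact intervalIntegral.integral_nonneg hs (fun u hu => hq0_nonneg u hu.1)
  have hG_nonneg : ∀ s : ℝ, 0 ≤ s → 0 ≤ G s := by
    intro s hs
    exact intervalIntegral.integral_nonneg hs (fun u hu => hq1_nonneg u hu.1)
  -- derivative of H
  have hmono0 : Set.Ioi (0:ℝ) ⊆ Set.Ici 0 := Set.Ioi_subset_Ici_self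
  have hH_deriv : ∀ s : ℝ, 0 < s → HasDerivAt H (s ^ (n-1) * b s) s := by
    intro s hs
    have hmeas := (hq0_cont.mono hmono0).stronglyMeasurableAtFilter (μ := volume) isOpen_Ioi s hs
    have hca : ContinuousAt (fun t : ℝ => t ^ (n-1) * b t) s :=
      (hq0_cont.mono hmono0).continuousAt (Ioi_mem_nhds hs)
    exact intervalIntegral.integral_hasDerivAt_right (hq0_int s hs.le) hmeas hca
  have hH_contAt : ∀ s : ℝ, 0 < s → ContinuousAt H s := fun s hs => (hH_deriv s hs).continuousAt
  -- key integral identity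
  have key : ∀ s : ℝ, 0 ≤ s →
      (s:ℝ)^(n-k) * (deriv w s)^k = (n:ℝ)/(n.choose k) * G s := by
    intro s hs
    rcases eq_or_lt_of_le hs with rfl | hs0
    · rw [hw'_0, zero_pow (by omega : k ≠ 0), mul_zero]
      rw [hGdef]
      simp
    · have hcontP : ContinuousOn (fun x : ℝ => x^(n-k) * deriv w x ^ k) (Set.Icc 0 s) :=
        ((continuous_pow (n-k)).continuousOn).mul
          ((hw_cont'.mono Set.Icc_subset_Ici_self).pow k)
      have hderiv : ∀ x ∈ Set.Ioo (0:ℝ) s,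
          HasDerivWithinAt (fun x : ℝ => x^(n-k) * deriv w x ^ k)
            ((n:ℝ)/(n.choose k) * (x ^ (n-1) * (b x * w x ^ γ))) (Set.Ioi x) x := by
        intro x hx
        have hx0 : 0 < x := hx.1
        have h1 : HasDerivAt (fun y : ℝ => y ^ (n-k)) ((↑(n-k)) * x^(n-k-1)) x :=
          hasDerivAt_pow _ _
        have h2 : HasDerivAt (fun y => deriv w y ^ k)
            ((k:ℝ) * deriv w x ^ (k-1) * deriv (deriv w) x) x :=
          ((hw_diff x hx0).2.hasDerivAt).pow k
        have h3 := h1.mul h2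
        have halg := alg n k hk1 hkn x (deriv w x) (deriv (deriv w) x)
          (b x * w x ^ γ) hx0 (hw_ode x hx0)
        rw [← halg]
        exact h3.hasDerivWithinAt
      have hint : IntervalIntegrable
          (fun x : ℝ => (n:ℝ)/(n.choose k) * (x ^ (n-1) * (b x * w x ^ γ))) volume 0 s := by
        have := (hq1_int s hs).const_mul ((n:ℝ)/(n.choose k))
        simpa [mul_assoc] using this
      have heq := intervalIntegral.integral_eq_sub_of_hasDeriv_right_of_le hs hcontP hderiv hint
      rw [intervalIntegral.integral_const_mul] at heq
      have hP0 : (0:ℝ)^(n-k) * deriv w 0 ^ k = 0 := by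
        rw [hw'_0, zero_pow (by omega : k ≠ 0), mul_zero]
      rw [hP0, sub_zero] at heq
      rw [← heq]
      congr 1
      rw [hGdef]
      simp only [mul_assoc]
  have key2 : ∀ s : ℝ, 0 < s →
      (deriv w s)^k = (n:ℝ) * s ^ ((k:ℝ) - n) / (n.choose k) * G s := by
    intro s hs
    have h1 := key s hs.le
    have h2 : s ^ ((k:ℝ) - n) * (s:ℝ)^(n-k) = 1 := by
      rw [← Real.rpow_natCast s (n-k), ← Real.rpow_add hs, Nat.cast_sub hkn]
      rw [show (k:ℝ) - n + ((n:ℝ) - k) = 0 from by ring, Real.rpow_zero]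
    calc deriv w s ^ k = (s ^ ((k:ℝ)-n) * (s:ℝ)^(n-k)) * deriv w s ^ k := by
          rw [h2, one_mul]
      _ = s ^ ((k:ℝ)-n) * ((s:ℝ)^(n-k) * deriv w s ^ k) := by ring
      _ = s ^ ((k:ℝ)-n) * ((n:ℝ)/(n.choose k) * G s) := by rw [h1]
      _ = (n:ℝ) * s ^ ((k:ℝ) - n) / (n.choose k) * G s := by ring
  have hwk_nonneg : ∀ s : ℝ, 0 < s → 0 ≤ (deriv w s)^k := by
    intro s hs
    rw [key2 s hs]
    have : (0:ℝ) ≤ s ^ ((k:ℝ) - n) := Real.rpow_nonneg hs.le _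
    have := hG_nonneg s hs.le
    positivity
  -- continuity of f on Ioi 0
  have hf_contAt : ∀ s : ℝ, 0 < s → ContinuousAt f s := by
    intro s hs
    have h1 : ContinuousAt (fun x : ℝ => x ^ ((k:ℝ) - n)) s :=
      Real.continuousAt_rpow_const s _ (Or.inl hs.ne')
    have hca : ContinuousAt (fun x : ℝ => (n:ℝ) * x ^ ((k:ℝ) - n) / (n.choose k) * H x) s :=
      ((continuousAt_const.mul h1).div_const _).mul (hH_contAt s hs)
    exact hca.rpow_const (Or.inr (by positivity))
  -- interval integrability of f
  have hf_nonneg : ∀ s : ℝ, 0 ≤ s → 0 ≤ f s := by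
    intro s hs
    rw [hfH s]
    apply Real.rpow_nonneg
    have h1 : (0:ℝ) ≤ s ^ ((k:ℝ) - n) := Real.rpow_nonneg hs _
    have h2 := hH_nonneg s hs
    positivity
  have hf_int : ∀ x : ℝ, 0 ≤ x → IntervalIntegrable f volume 0 x := by
    intro x hx
    rw [intervalIntegrable_iff_integrableOn_Ioc_of_le hx]
    obtain ⟨B, hB⟩ := (isCompact_Icc : IsCompact (Set.Icc (0:ℝ) x)).exists_bound_of_continuousOn
      (hb_cont.mono Set.Icc_subset_Ici_self)
    set B' : ℝ := max B 1 with hB'def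
    have hB'1 : (1:ℝ) ≤ B' := le_max_right _ _
    have hB'0 : (0:ℝ) < B' := lt_of_lt_of_le one_pos hB'1
    have hbase : ∀ s : ℝ, s ∈ Set.Ioc (0:ℝ) x →
        (n : ℝ) * s ^ ((k : ℝ) - n) / (n.choose k) * H s
          ≤ (n:ℝ) / (n.choose k) * x ^ ((k:ℝ)) * B' := by
      intro s hsmem
      obtain ⟨hs0, hsx⟩ := hsmem
      have hHb : H s ≤ s ^ (n-1) * B' * s := by
        have hnorm : ∀ t ∈ Set.uIoc (0:ℝ) s, ‖t ^ (n-1) * b t‖ ≤ s ^ (n-1) * B' := by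
          intro t ht
          rw [Set.uIoc_of_le hs0.le] at ht
          rw [norm_mul, norm_pow, Real.norm_eq_abs, Real.norm_eq_abs,
            abs_of_nonneg ht.1.le]
          have h1 : t ^ (n-1) ≤ s ^ (n-1) := pow_le_pow_left₀ ht.1.le ht.2 _
          have h2 : |b t| ≤ B' := le_trans (by
            have := hB t ⟨ht.1.le, ht.2.trans hsx⟩
            simpa [Real.norm_eq_abs] using this) (le_max_left _ _)
          have h3 : (0:ℝ) ≤ t ^ (n-1) := pow_nonneg ht.1.le _
          calc t ^ (n-1) * |b t| ≤ t ^ (n-1) * B' := mul_le_mul_of_nonneg_left h2 h3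
            _ ≤ s ^ (n-1) * B' := mul_le_mul_of_nonneg_right h1 hB'0.le
        have := intervalIntegral.norm_integral_le_of_norm_le_const hnorm
        rw [sub_zero, abs_of_nonneg hs0.le] at this
        calc H s ≤ |H s| := le_abs_self _
          _ = ‖∫ t in (0:ℝ)..s, t ^ (n-1) * b t‖ := by rw [Real.norm_eq_abs]
          _ ≤ s ^ (n-1) * B' * s := this
      have hcoef : (0:ℝ) ≤ (n : ℝ) * s ^ ((k : ℝ) - n) / (n.choose k) := by
        have : (0:ℝ) ≤ s ^ ((k:ℝ) - n) := Real.rpow_nonneg hs0.le _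
        positivity
      calc (n : ℝ) * s ^ ((k : ℝ) - n) / (n.choose k) * H s
          ≤ (n : ℝ) * s ^ ((k : ℝ) - n) / (n.choose k) * (s ^ (n-1) * B' * s) :=
            mul_le_mul_of_nonneg_left hHb hcoef
        _ = (n:ℝ) / (n.choose k) * (s ^ ((k:ℝ) - n) * (s:ℝ)^(n:ℕ)) * B' := by
            rw [show (s:ℝ) ^ (n-1) * B' * s = s ^ (n-1) * s * B' from by ring,
              ← pow_succ, show n - 1 + 1 = n from by omega]
            ring
        _ = (n:ℝ) / (n.choose k) * s ^ ((k:ℝ)) * B' := by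
            rw [← Real.rpow_natCast s n, ← Real.rpow_add hs0,
              show (k:ℝ) - n + (n:ℝ) = (k:ℝ) from by ring]
        _ ≤ (n:ℝ) / (n.choose k) * x ^ ((k:ℝ)) * B' := by
            have hsk : s ^ ((k:ℝ)) ≤ x ^ ((k:ℝ)) :=
              Real.rpow_le_rpow hs0.le hsx hkR.le
            have h4 : (0:ℝ) ≤ (n:ℝ) / (n.choose k) := by positivity
            exact mul_le_mul_of_nonneg_right (mul_le_mul_of_nonneg_left hsk h4) hB'0.le
    set M : ℝ := ((n:ℝ) / (n.choose k) * x ^ ((k:ℝ)) * B') ^ ((1:ℝ)/k) with hMdef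
    have hfM : ∀ s : ℝ, s ∈ Set.Ioc (0:ℝ) x → ‖f s‖ ≤ M := by
      intro s hsmem
      rw [Real.norm_eq_abs, abs_of_nonneg (hf_nonneg s hsmem.1.le), hfH s, hMdef]
      apply Real.rpow_le_rpow _ (hbase s hsmem) (by positivity)
      have h1 : (0:ℝ) ≤ s ^ ((k:ℝ) - n) := Real.rpow_nonneg hsmem.1.le _
      have h2 := hH_nonneg s hsmem.1.le
      positivity
    constructor
    · have hcont : ContinuousOn f (Set.Ioc 0 x) :=
        fun s hs => (hf_contAt s hs.1).continuousWithinAt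
      exact hcont.aestronglyMeasurable measurableSet_Ioc
    · apply MeasureTheory.HasFiniteIntegral.of_bounded (C := M)
      rw [ae_restrict_iff' measurableSet_Ioc]
      filter_upwards with s hs
      exact hfM s hs
  -- primitive of f
  set F : ℝ → ℝ := fun x => ∫ s in (0:ℝ)..x, f s with hFdef
  have hF_nonneg : ∀ x : ℝ, 0 ≤ x → 0 ≤ F x := by
    intro x hx
    exact intervalIntegral.integral_nonneg hx (fun u hu => hf_nonneg u hu.1)
  have hF_mono : ∀ x y : ℝ, 0 ≤ x → x ≤ y → F x ≤ F y := by
    intro x y hx hxy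
    have h1 := hf_int x hx
    have h2 := hf_int y (hx.trans hxy)
    have h3 : IntervalIntegrable f volume x y := h1.symm.trans h2
    have : F y = F x + ∫ s in x..y, f s :=
      (intervalIntegral.integral_add_adjacent_intervals h1 h3).symm
    rw [this]
    have : 0 ≤ ∫ s in x..y, f s :=
      intervalIntegral.integral_nonneg hxy (fun u hu => hf_nonneg u (hx.trans hu.1))
    linarith
  have hF_cont : ∀ X : ℝ, 0 ≤ X → ContinuousOn F (Set.Icc 0 X) := by
    intro X hX
    have hint : IntegrableOn f (Set.uIcc 0 X) volume := by
      rw [Set.uIcc_of_le hX]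
      exact (intervalIntegrable_iff_integrableOn_Icc_of_le hX).mp (hf_int X hX)
    have := intervalIntegral.continuousOn_primitive_interval hint
    rwa [Set.uIcc_of_le hX] at this
  have hF_deriv : ∀ s : ℝ, 0 < s → HasDerivAt F (f s) s := by
    intro s hs
    have hmeas := ContinuousAt.stronglyMeasurableAtFilter (μ := volume) isOpen_Ioi
      (fun x hx => hf_contAt x hx) s hs
    exact intervalIntegral.integral_hasDerivAt_right (hf_int s hs.le) hmeas (hf_contAt s hs)
  have hF0 : F 0 = 0 := intervalIntegral.integral_same
  -- the main comparison
  have main : ∀ ε : ℝ, 0 < ε → ∀ x : ℝ, 0 ≤ x →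
      w x ≤ ((β + ε) ^ α + α * F x) ^ (1/α) := by
    intro ε hε
    by_contra hcon
    push_neg at hcon
    obtain ⟨x0, hx00, hx0'⟩ := hcon
    set Φ : ℝ → ℝ := fun x => ((β + ε) ^ α + α * F x) ^ (1/α) with hΦdef
    have hβε : (0:ℝ) < β + ε := by linarith
    have hA_pos : ∀ x : ℝ, 0 ≤ x → 0 < (β + ε) ^ α + α * F x := fun x hx =>
      add_pos_of_pos_of_nonneg (Real.rpow_pos_of_pos hβε _)
        (mul_nonneg hα0.le (hF_nonneg x hx))
    have hΦ_pos : ∀ x : ℝ, 0 ≤ x → 0 < Φ x := fun x hx =>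
      Real.rpow_pos_of_pos (hA_pos x hx) _
    have hΦ0 : Φ 0 = β + ε := by
      show ((β + ε) ^ α + α * F 0) ^ (1/α) = β + ε
      rw [hF0, mul_zero, add_zero, ← Real.rpow_mul hβε.le, mul_one_div_cancel hαne,
        Real.rpow_one]
    have hΦ_cont : ∀ X : ℝ, 0 ≤ X → ContinuousOn Φ (Set.Icc 0 X) := by
      intro X hX
      exact (continuousOn_const.add (continuousOn_const.mul (hF_cont X hX))).rpow_const
        (fun x hx => Or.inr (by positivity))
    have hΦ_contIci : ContinuousOn Φ (Set.Ici 0) := by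
      intro x hx
      have h1 : ContinuousWithinAt Φ (Set.Icc 0 (x+1)) x :=
        (hΦ_cont (x+1) (by linarith [Set.mem_Ici.mp hx])) x ⟨hx, by linarith⟩
      apply h1.mono_of_mem_nhdsWithin
      rw [show Set.Icc (0:ℝ) (x+1) = Set.Ici 0 ∩ Set.Iic (x+1) from (Set.Ici_inter_Iic).symm]
      exact Filter.inter_mem self_mem_nhdsWithin
        (mem_nhdsWithin_of_mem_nhds (Iic_mem_nhds (by linarith)))
    have hΦ_mono : ∀ x y : ℝ, 0 ≤ x → x ≤ y → Φ x ≤ Φ y := by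
      intro x y hx hxy
      apply Real.rpow_le_rpow (hA_pos x hx).le _ (by positivity)
      have := hF_mono x y hx hxy
      nlinarith
    set S : Set ℝ := {x : ℝ | 0 ≤ x ∧ Φ x ≤ w x} with hSdef
    have hS_closed : IsClosed S := by
      have hset : S = Set.Ici 0 ∩ (fun x => w x - Φ x) ⁻¹' (Set.Ici 0) := by
        ext x
        simp only [hSdef, Set.mem_setOf_eq, Set.mem_inter_iff, Set.mem_preimage,
          Set.mem_Ici, sub_nonneg]
      rw [hset]
      exact ContinuousOn.preimage_isClosed_of_isClosed (hw_cont.sub hΦ_contIci)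
        isClosed_Ici isClosed_Ici
    have hS_ne : S.Nonempty := ⟨x0, hx00, hx0'.le⟩
    have hS_bdd : BddBelow S := ⟨0, fun x hx => hx.1⟩
    set T := sInf S with hTdef
    have hTS : T ∈ S := hS_closed.csInf_mem hS_ne hS_bdd
    have hT0 : 0 ≤ T := hTS.1
    have hTpos : 0 < T := by
      rcases hT0.lt_or_eq with h | h
      · exact h
      · exfalso
        have h2 := hTS.2
        rw [← h, hΦ0, hw_0] at h2
        linarith
    have hlt : ∀ t : ℝ, 0 ≤ t → t < T → w t < Φ t := by
      intro t ht htT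
      by_contra hc
      push_neg at hc
      exact absurd (csInf_le hS_bdd ⟨ht, hc⟩) (not_le.mpr htT)
    have hψ : ∀ x ∈ Set.Ioo (0:ℝ) T, HasDerivAt (fun y => Φ y - w y)
        (f x * ((β + ε) ^ α + α * F x) ^ (1/α - 1) - deriv w x) x := by
      intro x hx
      have hAx := hA_pos x hx.1.le
      have hA : HasDerivAt (fun y => (β + ε) ^ α + α * F y) (α * f x) x :=
        ((hF_deriv x hx.1).const_mul α).const_add _
      have hΦd : HasDerivAt Φ ((α * f x) * (1/α) * ((β + ε) ^ α + α * F x) ^ (1/α - 1)) x :=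
        hA.rpow_const (Or.inl hAx.ne')
      have heq : (α * f x) * (1/α) * ((β + ε) ^ α + α * F x) ^ (1/α - 1)
          = f x * ((β + ε) ^ α + α * F x) ^ (1/α - 1) := by
        field_simp
      rw [heq] at hΦd
      exact hΦd.sub (hw_diff x hx.1).1.hasDerivAt
    have hcomp : ∀ x ∈ Set.Ioo (0:ℝ) T,
        deriv w x ≤ f x * ((β + ε) ^ α + α * F x) ^ (1/α - 1) := by
      intro x hx
      have hx0 : 0 < x := hx.1
      have hΦx := hΦ_pos x hx0.le
      have hGle : G x ≤ H x * Φ x ^ γ := by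
        have hmono' : ∀ t ∈ Set.Icc (0:ℝ) x,
            t^(n-1) * b t * w t ^ γ ≤ t^(n-1) * b t * Φ x ^ γ := by
          intro t ht
          apply mul_le_mul_of_nonneg_left _ (hq0_nonneg t ht.1)
          apply Real.rpow_le_rpow (hw_pos t ht.1).le _ hγ0.le
          calc w t ≤ Φ t := (hlt t ht.1 (lt_of_le_of_lt ht.2 hx.2)).le
            _ ≤ Φ x := hΦ_mono t x ht.1 ht.2
        calc G x ≤ ∫ t in (0:ℝ)..x, t^(n-1) * b t * Φ x ^ γ :=
              intervalIntegral.integral_mono_on hx0.le (hq1_int x hx0.le)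
                ((hq0_int x hx0.le).mul_const _) hmono'
          _ = H x * Φ x ^ γ := by rw [intervalIntegral.integral_mul_const]
      have hbase_nonneg : (0:ℝ) ≤ (n:ℝ) * x ^ ((k:ℝ)-n) / (n.choose k) * H x := by
        have h1 : (0:ℝ) ≤ x ^ ((k:ℝ) - n) := Real.rpow_nonneg hx0.le _
        have h2 := hH_nonneg x hx0.le
        positivity
      have h1 : deriv w x ≤ ((deriv w x)^k) ^ ((1:ℝ)/k) := by
        rcases le_or_gt (deriv w x) 0 with h | h
        · exact h.trans (Real.rpow_nonneg (hwk_nonneg x hx0) _)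
        · have heq : ((deriv w x)^k) ^ ((1:ℝ)/k) = deriv w x := by
            rw [← Real.rpow_natCast (deriv w x) k, ← Real.rpow_mul h.le,
              mul_one_div_cancel hkne, Real.rpow_one]
          rw [heq]
      have h2 : ((deriv w x)^k) ^ ((1:ℝ)/k)
          ≤ ((n:ℝ) * x ^ ((k:ℝ)-n) / (n.choose k) * (H x * Φ x ^ γ)) ^ ((1:ℝ)/k) := by
        apply Real.rpow_le_rpow (hwk_nonneg x hx0) _ (by positivity)
        rw [key2 x hx0]
        apply mul_le_mul_of_nonneg_left hGle
        have h1' : (0:ℝ) ≤ x ^ ((k:ℝ) - n) := Real.rpow_nonneg hx0.le _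
        positivity
      have h3 : ((n:ℝ) * x ^ ((k:ℝ)-n) / (n.choose k) * (H x * Φ x ^ γ)) ^ ((1:ℝ)/k)
          = f x * Φ x ^ (γ/k) := by
        rw [show (n:ℝ) * x ^ ((k:ℝ)-n) / (n.choose k) * (H x * Φ x ^ γ)
            = ((n:ℝ) * x ^ ((k:ℝ)-n) / (n.choose k) * H x) * Φ x ^ γ from by ring]
        rw [Real.mul_rpow hbase_nonneg (Real.rpow_nonneg hΦx.le _)]
        rw [← hfH x, ← Real.rpow_mul hΦx.le, mul_one_div]
      have h4 : Φ x ^ (γ/k) = ((β + ε) ^ α + α * F x) ^ (1/α - 1) := by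
        show (((β + ε) ^ α + α * F x) ^ (1/α)) ^ (γ/k) = _
        rw [← Real.rpow_mul (hA_pos x hx0.le).le]
        congr 1
        rw [← h1α]
        field_simp
      calc deriv w x ≤ ((deriv w x)^k) ^ ((1:ℝ)/k) := h1
        _ ≤ ((n:ℝ) * x ^ ((k:ℝ)-n) / (n.choose k) * (H x * Φ x ^ γ)) ^ ((1:ℝ)/k) := h2
        _ = f x * Φ x ^ (γ/k) := h3
        _ = f x * ((β + ε) ^ α + α * F x) ^ (1/α - 1) := by rw [h4]
    have hmonoψ : MonotoneOn (fun y => Φ y - w y) (Set.Icc 0 T) := by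
      apply monotoneOn_of_deriv_nonneg (convex_Icc 0 T)
      · exact (hΦ_cont T hT0).sub (hw_cont.mono Set.Icc_subset_Ici_self)
      · intro x hx
        rw [interior_Icc] at hx
        exact (hψ x hx).differentiableAt.differentiableWithinAt
      · intro x hx
        rw [interior_Icc] at hx
        rw [(hψ x hx).deriv]
        have := hcomp x hx
        linarith
    have hmm := hmonoψ ⟨le_refl 0, hT0⟩ ⟨hT0, le_refl T⟩ hT0
    simp only [hΦ0, hw_0] at hmm
    have hTS2 := hTS.2
    linarith
  -- pass to the limit ε → 0⁺
  have hexp : (k : ℝ) / ((k:ℝ) - γ) = 1/α := by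
    rw [hαdef]; field_simp
  rw [hexp]
  have hlim : Tendsto (fun ε : ℝ => ((β + ε) ^ α + α * F r) ^ (1/α)) (nhdsWithin 0 (Set.Ioi 0))
      (nhds ((β ^ α + α * F r) ^ (1/α))) := by
    have hc : ContinuousAt (fun ε : ℝ => ((β + ε) ^ α + α * F r) ^ (1/α)) 0 := by
      have h1 : ContinuousAt (fun ε : ℝ => β + ε) 0 := by fun_prop
      have h2 : ContinuousAt (fun ε : ℝ => (β + ε) ^ α) 0 :=
        h1.rpow_const (Or.inl (by simpa using hβ0.ne'))
      have h3 : ContinuousAt (fun ε : ℝ => (β + ε) ^ α + α * F r) 0 := h2.add continuousAt_const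
      exact h3.rpow_const (Or.inr (by positivity))
    have := hc.tendsto
    simp only [add_zero] at this
    exact this.mono_left nhdsWithin_le_nhds
  refine ge_of_tendsto hlim ?_
  filter_upwards [self_mem_nhdsWithin] with ε hε
  exact main ε hε r hr
end
end

section
/- Let n ≥ 3 and 1 ≤ k ≤ n be integers and let b be a nonnegative continuous function on [0, ∞). If ∫_0^∞ r b(r)^{1/k} dr = ∞, then ∫_0^∞ ((n r^{k−n}/C_n^k) ∫_0^r s^{n−1} b(s) ds)^{1/k} dr = ∞. -/
open MeasureTheory Real Filter

noncomputable section

open Set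
open scoped ENNReal NNReal Topology

lemma young (k : ℕ) (hk : 1 ≤ k) {a M : ℝ} (ha : 0 ≤ a) (hM : 0 < M) :
    a ^ ((1:ℝ)/k) ≤ M ^ ((1:ℝ)/k) + a * M ^ ((1:ℝ)/k - 1) := by
  have hk0 : (0:ℝ) < k := by exact_mod_cast hk
  have h1k : (0:ℝ) < 1/k := by positivity
  have h1k1 : (1:ℝ)/k ≤ 1 := by
    rw [div_le_one hk0]; exact_mod_cast hk
  rcases le_or_gt a M with h | h
  · have : a ^ ((1:ℝ)/k) ≤ M ^ ((1:ℝ)/k) := Real.rpow_le_rpow ha h h1k.le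
    nlinarith [Real.rpow_nonneg hM.le ((1:ℝ)/k - 1), mul_nonneg ha (Real.rpow_nonneg hM.le ((1:ℝ)/k - 1))]
  · have ha0 : 0 < a := hM.trans h
    have : a ^ ((1:ℝ)/k) = a * a ^ ((1:ℝ)/k - 1) := by
      nth_rewrite 2 [← Real.rpow_one a]
      rw [← Real.rpow_add ha0]
      ring_nf
    rw [this]
    have h2 : a ^ ((1:ℝ)/k - 1) ≤ M ^ ((1:ℝ)/k - 1) :=
      Real.rpow_le_rpow_of_nonpos hM h.le (by linarith)
    nlinarith [Real.rpow_nonneg hM.le ((1:ℝ)/k)]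

lemma rpow_two_bound {e R t : ℝ} (he : e ≤ 1) (hR : 0 < R) (ht : R ≤ t) (ht2 : t ≤ 2*R) :
    t ^ e ≤ 2 * R ^ e := by
  rcases le_or_gt 0 e with h | h
  · calc t ^ e ≤ (2*R) ^ e := Real.rpow_le_rpow (hR.le.trans ht) ht2 h
    _ = 2 ^ e * R ^ e := Real.mul_rpow (by norm_num) hR.le
    _ ≤ 2 * R ^ e := by
        have : (2:ℝ) ^ e ≤ 2 ^ (1:ℝ) := Real.rpow_le_rpow_of_exponent_le one_le_two he
        rw [Real.rpow_one] at this
        exact mul_le_mul_of_nonneg_right this (Real.rpow_nonneg hR.le e)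
  · have : t ^ e ≤ R ^ e := Real.rpow_le_rpow_of_nonpos hR ht h.le
    nlinarith [Real.rpow_nonneg hR.le e]

lemma hInt (n : ℕ) (b : ℝ → ℝ) (hb_cont : ContinuousOn b (Set.Ici 0))
    {x y : ℝ} (hx : 0 ≤ x) (hxy : x ≤ y) :
    IntervalIntegrable (fun s => s ^ (n-1) * b s) volume x y := by
  apply ContinuousOn.intervalIntegrable
  have hsub : Set.uIcc x y ⊆ Set.Ici 0 := by
    rw [Set.uIcc_of_le hxy]
    exact fun s hs => le_trans hx hs.1
  exact ((continuousOn_pow (n-1)).mono (Set.subset_univ _)).mul (hb_cont.mono hsub)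

lemma Fmono (n : ℕ) (b : ℝ → ℝ) (hb_cont : ContinuousOn b (Set.Ici 0))
    (hb_nonneg : ∀ r : ℝ, 0 ≤ r → 0 ≤ b r) {x y : ℝ} (hx : 0 ≤ x) (hxy : x ≤ y) :
    (∫ s in (0:ℝ)..x, s ^ (n-1) * b s) ≤ ∫ s in (0:ℝ)..y, s ^ (n-1) * b s := by
  rw [← intervalIntegral.integral_add_adjacent_intervals (hInt n b hb_cont le_rfl hx)
    (hInt n b hb_cont hx hxy)]
  have : 0 ≤ ∫ s in x..y, s ^ (n-1) * b s :=
    intervalIntegral.integral_nonneg hxy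
      (fun u hu => mul_nonneg (pow_nonneg (hx.trans hu.1) _) (hb_nonneg u (hx.trans hu.1)))
  linarith

lemma Fnonneg (n : ℕ) (b : ℝ → ℝ) (hb_cont : ContinuousOn b (Set.Ici 0))
    (hb_nonneg : ∀ r : ℝ, 0 ≤ r → 0 ≤ b r) {x : ℝ} (hx : 0 ≤ x) :
    0 ≤ ∫ s in (0:ℝ)..x, s ^ (n-1) * b s := by
  have := Fmono n b hb_cont hb_nonneg le_rfl hx
  simpa using this

lemma iUnion_dyadic (a : ℝ) (ha : 0 < a) :
    (⋃ j : ℕ, Set.Ioc (a * 2^j) (a * 2^(j+1))) = Set.Ioi a := by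
  ext x
  simp only [Set.mem_iUnion, Set.mem_Ioc, Set.mem_Ioi]
  constructor
  · rintro ⟨j, h1, _⟩
    have : a ≤ a * 2^j := le_mul_of_one_le_right ha.le (one_le_pow₀ one_le_two)
    linarith
  · intro hx
    have hex : ∃ m : ℕ, x ≤ a * 2^(m+1) := by
      obtain ⟨m, hm⟩ := pow_unbounded_of_one_lt (x/a) (one_lt_two : (1:ℝ) < 2)
      refine ⟨m, ?_⟩
      rw [div_lt_iff₀ ha] at hm
      have h2 : (2:ℝ)^(m+1) = 2 * 2^m := by ring
      nlinarith [pow_pos (zero_lt_two : (0:ℝ) < 2) m]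
    refine ⟨Nat.find hex, ?_, Nat.find_spec hex⟩
    rcases Nat.eq_zero_or_pos (Nat.find hex) with h0 | hpos
    · rw [h0]; simpa using hx
    · obtain ⟨j', hj'⟩ := Nat.exists_eq_succ_of_ne_zero hpos.ne'
      have := Nat.find_min hex (m := j') (by omega)
      rw [hj']
      push_neg at this
      simpa using this

lemma dyadic_disj (a : ℝ) (ha : 0 < a) (m : ℕ) :
    Pairwise (Function.onFun Disjoint (fun j : ℕ => Set.Ioc (a * 2^(j+m)) (a * 2^(j+m+1)))) := by
  have key : ∀ i j : ℕ, i < j →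
      Disjoint (Set.Ioc (a * 2^(i+m)) (a * 2^(i+m+1))) (Set.Ioc (a * 2^(j+m)) (a * 2^(j+m+1))) := by
    intro i j h
    apply Set.Ioc_disjoint_Ioc.2
    have : a * 2^(i+m+1) ≤ a * 2^(j+m) :=
      mul_le_mul_of_nonneg_left (pow_le_pow_right₀ one_le_two (by omega)) ha.le
    exact le_trans (min_le_left _ _) (le_trans this (le_max_right _ _))
  intro i j hij
  rcases hij.lt_or_gt with h | h
  · exact key i j h
  · exact (key j i h).symm

set_option maxHeartbeats 1000000 in
lemma dyadic_est (n k : ℕ) (hn : 3 ≤ n) (hk1 : 1 ≤ k) (hkn : k ≤ n)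
    (b : ℝ → ℝ) (hb_cont : ContinuousOn b (Set.Ici 0))
    (hb_nonneg : ∀ r : ℝ, 0 ≤ r → 0 ≤ b r)
    {R : ℝ} (hR : 1 ≤ R)
    (hF2 : 0 < ∫ s in (0:ℝ)..(2*R), s ^ (n-1) * b s) :
    (∫⁻ t in Set.Ioc R (2*R), ENNReal.ofReal (t * b t ^ ((1:ℝ)/k))) ≤
      ENNReal.ofReal (2 * ((n:ℝ)/(n.choose k)) ^ (-(1:ℝ)/k) * 4 ^ (((n:ℝ)-k)/k)) *
      ∫⁻ u in Set.Ioc (2*R) (4*R), ENNReal.ofReal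
        (((n : ℝ) * u ^ ((k : ℝ) - n) / (n.choose k) *
          ∫ s in (0:ℝ)..u, s ^ (n - 1) * b s) ^ ((1 : ℝ) / k)) := by
  have hR0 : (0:ℝ) < R := zero_lt_one.trans_le hR
  have hk0 : (0:ℝ) < k := by exact_mod_cast hk1
  have hkne : (k:ℝ) ≠ 0 := hk0.ne'
  have hn1 : (1:ℝ) ≤ (n:ℝ) := by exact_mod_cast le_trans (by norm_num) hn
  have hknr : (k:ℝ) ≤ (n:ℝ) := by exact_mod_cast hkn
  set c : ℝ := (n:ℝ)/(n.choose k) with hc_def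
  have hch : (0:ℝ) < (n.choose k : ℝ) := by exact_mod_cast Nat.choose_pos hkn
  have hc : 0 < c := div_pos (by linarith) hch
  set F2 : ℝ := ∫ s in (0:ℝ)..(2*R), s ^ (n-1) * b s with hF2_def
  set e : ℝ := ((k:ℝ) - n + 1)/k with he_def
  set M : ℝ := F2 / R with hM_def
  have hM : 0 < M := div_pos hF2 hR0
  have hcast : ((n-1 : ℕ):ℝ) = (n:ℝ) - 1 := by
    have h1 : 1 ≤ n := by omega
    push_cast [Nat.cast_sub h1]; ring
  have he1 : e ≤ 1 := by
    rw [he_def, div_le_one hk0]; linarith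
  -- pointwise upper bound
  have hpoint : ∀ t ∈ Set.Ioc R (2*R), t * b t ^ ((1:ℝ)/k) ≤
      2*R^e * (M^((1:ℝ)/k) + t^(n-1) * b t * M^((1:ℝ)/k - 1)) := by
    intro t ht
    have ht0 : 0 < t := hR0.trans ht.1
    have hbt : 0 ≤ b t := hb_nonneg t ht0.le
    have ha : (0:ℝ) ≤ t^(n-1) * b t := mul_nonneg (pow_nonneg ht0.le _) hbt
    have hy := young k hk1 ha hM
    have h2 : (t^(n-1) * b t) ^ ((1:ℝ)/k) = t ^ (((n:ℝ)-1)/k) * b t ^ ((1:ℝ)/k) := by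
      rw [Real.mul_rpow (pow_nonneg ht0.le _) hbt, ← Real.rpow_natCast t (n-1),
        ← Real.rpow_mul ht0.le, hcast, mul_one_div]
    have h1 : t ^ e * t ^ (((n:ℝ)-1)/k) = t := by
      rw [← Real.rpow_add ht0, show e + ((n:ℝ)-1)/k = 1 by rw [he_def]; field_simp; ring,
        Real.rpow_one]
    have hsplit : t * b t ^ ((1:ℝ)/k) = t ^ e * (t^(n-1) * b t) ^ ((1:ℝ)/k) := by
      rw [h2, ← mul_assoc, h1]
    rw [hsplit]
    calc t ^ e * (t^(n-1) * b t) ^ ((1:ℝ)/k)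
        ≤ t ^ e * (M^((1:ℝ)/k) + t^(n-1) * b t * M^((1:ℝ)/k - 1)) :=
          mul_le_mul_of_nonneg_left hy (Real.rpow_nonneg ht0.le e)
      _ ≤ 2*R^e * (M^((1:ℝ)/k) + t^(n-1) * b t * M^((1:ℝ)/k - 1)) := by
          apply mul_le_mul_of_nonneg_right (rpow_two_bound he1 hR0 ht.1.le ht.2)
          have := Real.rpow_nonneg hM.le ((1:ℝ)/k)
          have := mul_nonneg ha (Real.rpow_nonneg hM.le ((1:ℝ)/k - 1))
          linarith
  set G : ℝ → ℝ := fun t => 2*R^e * (M^((1:ℝ)/k) + t^(n-1) * b t * M^((1:ℝ)/k - 1)) with hG_def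
  have hsub : Set.Icc R (2*R) ⊆ Set.Ici 0 := fun s hs => le_trans hR0.le hs.1
  have hG_cont : ContinuousOn G (Set.Icc R (2*R)) := by
    apply continuousOn_const.mul
    apply continuousOn_const.add
    exact (((continuous_pow (n-1)).continuousOn).mul (hb_cont.mono hsub)).mul continuousOn_const
  have hG_int : IntegrableOn G (Set.Ioc R (2*R)) volume :=
    (hG_cont.integrableOn_Icc).mono_set Set.Ioc_subset_Icc_self
  have hG_nn : 0 ≤ᵐ[volume.restrict (Set.Ioc R (2*R))] G := by
    refine (ae_restrict_iff' measurableSet_Ioc).2 (ae_of_all _ fun t ht => ?_)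
    have ht0 : 0 < t := hR0.trans ht.1
    have hbt : 0 ≤ b t := hb_nonneg t ht0.le
    have h1 := Real.rpow_nonneg hM.le ((1:ℝ)/k)
    have h2 := mul_nonneg (mul_nonneg (pow_nonneg ht0.le (n-1)) hbt)
      (Real.rpow_nonneg hM.le ((1:ℝ)/k - 1))
    have h3 := Real.rpow_nonneg hR0.le e
    simp only [hG_def, Pi.zero_apply]
    nlinarith
  have hstep1 : (∫⁻ t in Set.Ioc R (2*R), ENNReal.ofReal (t * b t ^ ((1:ℝ)/k))) ≤
      ∫⁻ t in Set.Ioc R (2*R), ENNReal.ofReal (G t) :=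
    setLIntegral_mono' measurableSet_Ioc fun t ht => ENNReal.ofReal_le_ofReal (hpoint t ht)
  have hstep2 : (∫⁻ t in Set.Ioc R (2*R), ENNReal.ofReal (G t)) =
      ENNReal.ofReal (∫ t in Set.Ioc R (2*R), G t) :=
    (ofReal_integral_eq_lintegral_ofReal hG_int hG_nn).symm
  -- compute / bound the real integral of G
  have hIoc_int : (∫ t in Set.Ioc R (2*R), t^(n-1) * b t) ≤ F2 := by
    have hRR : R ≤ 2*R := by linarith
    have hadd := intervalIntegral.integral_add_adjacent_intervals
      (hInt n b hb_cont le_rfl hR0.le) (hInt n b hb_cont hR0.le hRR)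
    have hFR : 0 ≤ ∫ s in (0:ℝ)..R, s ^ (n-1) * b s := Fnonneg n b hb_cont hb_nonneg hR0.le
    rw [← intervalIntegral.integral_of_le hRR]
    rw [hF2_def]
    linarith [hadd]
  have hh_int : IntegrableOn (fun t => t^(n-1) * b t) (Set.Ioc R (2*R)) volume :=
    (hInt n b hb_cont hR0.le (by linarith : R ≤ 2*R)).1
  have hGval : (∫ t in Set.Ioc R (2*R), G t) ≤ 2*R^e * (M^((1:ℝ)/k) * R + F2 * M^((1:ℝ)/k - 1)) := by
    have hvol : (volume (Set.Ioc R (2*R))).toReal = R := by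
      rw [Real.volume_Ioc, ENNReal.toReal_ofReal (by linarith)]; ring
    have : (∫ t in Set.Ioc R (2*R), G t) =
        2*R^e * (M^((1:ℝ)/k) * R + (∫ t in Set.Ioc R (2*R), t^(n-1) * b t) * M^((1:ℝ)/k - 1)) := by
      rw [hG_def]
      rw [MeasureTheory.integral_const_mul]
      congr 1
      rw [MeasureTheory.integral_add (show Integrable (fun _ : ℝ => M^((1:ℝ)/k)) (volume.restrict (Set.Ioc R (2*R))) from
          integrableOn_const measure_Ioc_lt_top.ne (by simp))
        (hh_int.mul_const _)]
      rw [MeasureTheory.integral_const, MeasureTheory.integral_mul_const,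
        measureReal_restrict_apply_univ, measureReal_def, hvol]
      simp [smul_eq_mul]
      ring
    rw [this]
    have hM1 : 0 ≤ M^((1:ℝ)/k - 1) := Real.rpow_nonneg hM.le _
    nlinarith [Real.rpow_nonneg hR0.le e, mul_le_mul_of_nonneg_right hIoc_int hM1,
      Real.rpow_nonneg hM.le ((1:ℝ)/k)]
  have halg : 2*R^e * (M^((1:ℝ)/k) * R + F2 * M^((1:ℝ)/k - 1)) =
      4 * (R ^ ((2*(k:ℝ)-n)/k) * F2 ^ ((1:ℝ)/k)) := by
    rw [hM_def, Real.div_rpow hF2.le hR0.le, Real.div_rpow hF2.le hR0.le,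
      Real.rpow_sub hF2, Real.rpow_sub hR0, Real.rpow_one, Real.rpow_one,
      show (2*(k:ℝ)-n)/k = e + 1 - 1/(k:ℝ) by rw [he_def]; field_simp; ring,
      Real.rpow_sub hR0, Real.rpow_add hR0, Real.rpow_one]
    have h1 : R ^ ((1:ℝ)/k) ≠ 0 := (Real.rpow_pos_of_pos hR0 _).ne'
    have h2 : R ^ e ≠ 0 := (Real.rpow_pos_of_pos hR0 _).ne'
    field_simp
    ring
  -- lower bound
  set β : ℝ := c * (4*R)^((k:ℝ)-(n:ℝ)) * F2 with hβ_def
  have h4R : (0:ℝ) < 4*R := by linarith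
  have hβ : 0 < β := by
    have := Real.rpow_pos_of_pos h4R ((k:ℝ)-(n:ℝ))
    positivity
  have hlow : ∀ u ∈ Set.Ioc (2*R) (4*R), ENNReal.ofReal (β^((1:ℝ)/k)) ≤
      ENNReal.ofReal (((n : ℝ) * u ^ ((k : ℝ) - n) / (n.choose k) *
        ∫ s in (0:ℝ)..u, s ^ (n - 1) * b s) ^ ((1 : ℝ) / k)) := by
    intro u hu
    have hu0 : 0 < u := by nlinarith [hu.1]
    apply ENNReal.ofReal_le_ofReal
    apply Real.rpow_le_rpow hβ.le ?_ (by positivity)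
    have h4 : (4*R)^((k:ℝ)-(n:ℝ)) ≤ u^((k:ℝ)-(n:ℝ)) :=
      Real.rpow_le_rpow_of_nonpos hu0 hu.2 (by linarith)
    have hFu : F2 ≤ ∫ s in (0:ℝ)..u, s ^ (n - 1) * b s :=
      Fmono n b hb_cont hb_nonneg (by linarith) hu.1.le
    have hrw : (n : ℝ) * u ^ ((k : ℝ) - n) / (n.choose k) *
        (∫ s in (0:ℝ)..u, s ^ (n - 1) * b s) =
        c * u ^ ((k : ℝ) - (n:ℝ)) * (∫ s in (0:ℝ)..u, s ^ (n - 1) * b s) := by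
      rw [hc_def]; ring
    rw [hrw, hβ_def]
    have hru : 0 ≤ u ^ ((k:ℝ)-(n:ℝ)) := (Real.rpow_pos_of_pos hu0 _).le
    have h1 : c * (4*R)^((k:ℝ)-(n:ℝ)) ≤ c * u^((k:ℝ)-(n:ℝ)) :=
      mul_le_mul_of_nonneg_left h4 hc.le
    have h2 : 0 ≤ c * u^((k:ℝ)-(n:ℝ)) := mul_nonneg hc.le hru
    exact mul_le_mul h1 hFu hF2.le h2
  have hlower : ENNReal.ofReal (β^((1:ℝ)/k) * (2*R)) ≤
      ∫⁻ u in Set.Ioc (2*R) (4*R), ENNReal.ofReal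
        (((n : ℝ) * u ^ ((k : ℝ) - n) / (n.choose k) *
          ∫ s in (0:ℝ)..u, s ^ (n - 1) * b s) ^ ((1 : ℝ) / k)) := by
    rw [ENNReal.ofReal_mul (Real.rpow_nonneg hβ.le _)]
    calc ENNReal.ofReal (β^((1:ℝ)/k)) * ENNReal.ofReal (2*R)
        = ENNReal.ofReal (β^((1:ℝ)/k)) * volume (Set.Ioc (2*R) (4*R)) := by
          rw [Real.volume_Ioc, show 4*R - 2*R = 2*R by ring]
      _ = ∫⁻ _ in Set.Ioc (2*R) (4*R), ENNReal.ofReal (β^((1:ℝ)/k)) :=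
          (setLIntegral_const _ _).symm
      _ ≤ _ := setLIntegral_mono' measurableSet_Ioc hlow
  -- combine
  have hconst : (4 * (R ^ ((2*(k:ℝ)-n)/k) * F2 ^ ((1:ℝ)/k)) : ℝ) =
      (2 * c ^ (-(1:ℝ)/k) * 4 ^ (((n:ℝ)-k)/k)) * (β^((1:ℝ)/k) * (2*R)) := by
    have hb1 : β^((1:ℝ)/k) =
        c^((1:ℝ)/k) * ((4:ℝ)^(((k:ℝ)-n)/k) * R^(((k:ℝ)-n)/k)) * F2^((1:ℝ)/k) := by
      rw [hβ_def, show (4*R:ℝ)^((k:ℝ)-(n:ℝ)) = 4^((k:ℝ)-(n:ℝ)) * R^((k:ℝ)-(n:ℝ)) from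
        Real.mul_rpow (by norm_num) hR0.le]
      rw [Real.mul_rpow (by positivity) hF2.le, Real.mul_rpow hc.le (by positivity),
        Real.mul_rpow (by positivity) (by positivity),
        ← Real.rpow_mul (by norm_num : (0:ℝ) ≤ 4), ← Real.rpow_mul hR0.le]
      ring_nf
    rw [hb1]
    rw [show (-(1:ℝ)/k) = -((1:ℝ)/k) by ring, Real.rpow_neg hc.le,
      show (((n:ℝ)-k)/k) = -(((k:ℝ)-n)/k) by ring,
      Real.rpow_neg (by norm_num : (0:ℝ) ≤ 4),
      show (2*(k:ℝ)-n)/k = ((k:ℝ)-n)/k + 1 by field_simp; ring,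
      Real.rpow_add hR0, Real.rpow_one]
    have hx1 : c^((1:ℝ)/k) ≠ 0 := (Real.rpow_pos_of_pos hc _).ne'
    have hx2 : (4:ℝ)^(((k:ℝ)-n)/k) ≠ 0 := (Real.rpow_pos_of_pos (by norm_num) _).ne'
    field_simp
    ring
  calc (∫⁻ t in Set.Ioc R (2*R), ENNReal.ofReal (t * b t ^ ((1:ℝ)/k)))
      ≤ ENNReal.ofReal (∫ t in Set.Ioc R (2*R), G t) := hstep1.trans (le_of_eq hstep2)
    _ ≤ ENNReal.ofReal (4 * (R ^ ((2*(k:ℝ)-n)/k) * F2 ^ ((1:ℝ)/k))) :=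
        ENNReal.ofReal_le_ofReal (by rw [← halg]; exact hGval)
    _ = ENNReal.ofReal ((2 * c ^ (-(1:ℝ)/k) * 4 ^ (((n:ℝ)-k)/k)) * (β^((1:ℝ)/k) * (2*R))) := by
        rw [hconst]
    _ = ENNReal.ofReal (2 * c ^ (-(1:ℝ)/k) * 4 ^ (((n:ℝ)-k)/k)) *
        ENNReal.ofReal (β^((1:ℝ)/k) * (2*R)) := ENNReal.ofReal_mul (by positivity)
    _ ≤ _ := mul_le_mul_right hlower _

set_option maxHeartbeats 1000000 in
/-- If `∫_0^∞ r b(r)^{1/k} dr = ∞` then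
`∫_0^∞ ((n r^{k-n}/C_n^k) ∫_0^r s^{n-1} b(s) ds)^{1/k} dr = ∞`. -/
theorem divergence_criterion_comparison
    (n k : ℕ) (hn : 3 ≤ n) (hk1 : 1 ≤ k) (hkn : k ≤ n)
    (b : ℝ → ℝ) (hb_cont : ContinuousOn b (Set.Ici 0))
    (hb_nonneg : ∀ r : ℝ, 0 ≤ r → 0 ≤ b r)
    (hdiv : (∫⁻ r in Set.Ioi (0:ℝ), ENNReal.ofReal (r * b r ^ ((1 : ℝ) / k))) = ⊤) :
    (∫⁻ r in Set.Ioi (0:ℝ), ENNReal.ofReal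
      (((n : ℝ) * r ^ ((k : ℝ) - n) / (n.choose k) *
        ∫ s in (0:ℝ)..r, s ^ (n - 1) * b s) ^ ((1 : ℝ) / k))) = ⊤ := by
  have hk0 : (0:ℝ) < k := by exact_mod_cast hk1
  have h1k : (0:ℝ) < 1/(k:ℝ) := by positivity
  -- step 1: b is somewhere positive
  have hbt : ∃ t1 : ℝ, 0 < t1 ∧ 0 < b t1 := by
    by_contra h
    push_neg at h
    have hzero : ∀ r ∈ Set.Ioi (0:ℝ), ENNReal.ofReal (r * b r ^ ((1:ℝ)/k)) = (fun _ : ℝ => (0:ℝ≥0∞)) r := by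
      intro r hr
      have h1 : b r = 0 := le_antisymm (h r hr) (hb_nonneg r (le_of_lt hr))
      rw [h1, Real.zero_rpow h1k.ne', mul_zero]
      simp
    rw [setLIntegral_congr_fun measurableSet_Ioi hzero, lintegral_zero] at hdiv
    exact ENNReal.zero_ne_top hdiv
  obtain ⟨t1, ht1, hbt1⟩ := hbt
  -- step 2: b bounded below near t1
  have hIci : Set.Ici (0:ℝ) ∈ 𝓝 t1 :=
    mem_of_superset (isOpen_Ioi.mem_nhds ht1) Set.Ioi_subset_Ici_self
  have hct : ContinuousAt b t1 := (hb_cont t1 (le_of_lt ht1)).continuousAt hIci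
  have hmem : b ⁻¹' {x | b t1 / 2 < x} ∈ 𝓝 t1 := hct (lt_mem_nhds (half_lt_self hbt1))
  obtain ⟨ε, hε, hball⟩ := Metric.mem_nhds_iff.1 hmem
  set δ : ℝ := ε/2 with hδ_def
  have hδ : 0 < δ := by positivity
  have hmb : ∀ s ∈ Set.Icc t1 (t1+δ), b t1 / 2 ≤ b s := by
    intro s hs
    have h1 : s ∈ Metric.ball t1 ε := by
      rw [Metric.mem_ball, Real.dist_eq, abs_lt]
      constructor <;> [linarith [hs.1]; linarith [hs.2]]
    exact (hball h1).le
  set A : ℝ := t1 + δ with hA_def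
  have hA0 : 0 < A := by positivity
  -- step 3: F positive beyond A
  have hFposA : ∀ x : ℝ, A ≤ x → 0 < ∫ s in (0:ℝ)..x, s^(n-1) * b s := by
    intro x hx
    have hmid : δ * (t1^(n-1) * (b t1/2)) ≤ ∫ s in t1..A, s^(n-1) * b s := by
      have hmono := intervalIntegral.integral_mono_on (by linarith : t1 ≤ A)
        (intervalIntegrable_const (c := t1^(n-1) * (b t1/2)))
        (hInt n b hb_cont ht1.le (by linarith))
        (fun s hs => by
          have hs0 : 0 ≤ s := le_trans ht1.le hs.1
          exact mul_le_mul (pow_le_pow_left₀ ht1.le hs.1 _) (hmb s hs)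
            (by positivity) (pow_nonneg hs0 _))
      rw [intervalIntegral.integral_const, smul_eq_mul] at hmono
      calc δ * (t1^(n-1) * (b t1/2)) = (A - t1) * (t1^(n-1) * (b t1/2)) := by
            rw [hA_def]; ring
        _ ≤ _ := hmono
    have h1 := intervalIntegral.integral_add_adjacent_intervals
      (hInt n b hb_cont le_rfl ht1.le) (hInt n b hb_cont ht1.le (by linarith : t1 ≤ A))
    have h2 : 0 ≤ ∫ s in (0:ℝ)..t1, s^(n-1) * b s := Fnonneg n b hb_cont hb_nonneg ht1.le
    have h3 := Fmono n b hb_cont hb_nonneg hA0.le hx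
    have hpos : 0 < δ * (t1^(n-1) * (b t1/2)) := by positivity
    linarith
  -- step 4: the starting point R₀ and finiteness below it
  set R₀ : ℝ := max 1 A with hR₀_def
  have hR₀1 : 1 ≤ R₀ := le_max_left _ _
  have hR₀A : A ≤ R₀ := le_max_right _ _
  have hR₀0 : 0 < R₀ := lt_of_lt_of_le one_pos hR₀1
  obtain ⟨C, hC⟩ := (isCompact_Icc : IsCompact (Set.Icc (0:ℝ) R₀)).exists_bound_of_continuousOn
    (hb_cont.mono (fun s hs => hs.1))
  have hC0 : 0 ≤ C := le_trans (norm_nonneg _) (hC 0 ⟨le_rfl, hR₀0.le⟩)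
  have hfin : (∫⁻ r in Set.Ioc (0:ℝ) R₀, ENNReal.ofReal (r * b r ^ ((1:ℝ)/k))) ≠ ⊤ := by
    have hble : ∀ r ∈ Set.Ioc (0:ℝ) R₀, ENNReal.ofReal (r * b r ^ ((1:ℝ)/k)) ≤
        ENNReal.ofReal (R₀ * C ^ ((1:ℝ)/k)) := by
      intro r hr
      apply ENNReal.ofReal_le_ofReal
      have hbr : 0 ≤ b r := hb_nonneg r hr.1.le
      have h1 : b r ^ ((1:ℝ)/k) ≤ C ^ ((1:ℝ)/k) :=
        Real.rpow_le_rpow hbr (le_trans (le_abs_self _) (hC r ⟨hr.1.le, hr.2⟩)) h1k.le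
      exact mul_le_mul hr.2 h1 (Real.rpow_nonneg hbr _) hR₀0.le
    have hcalc : (∫⁻ r in Set.Ioc (0:ℝ) R₀, ENNReal.ofReal (r * b r ^ ((1:ℝ)/k))) ≤
        ENNReal.ofReal (R₀ * C ^ ((1:ℝ)/k)) * volume (Set.Ioc (0:ℝ) R₀) := by
      calc _ ≤ ∫⁻ _ in Set.Ioc (0:ℝ) R₀, ENNReal.ofReal (R₀ * C ^ ((1:ℝ)/k)) :=
            setLIntegral_mono' measurableSet_Ioc hble
        _ = _ := setLIntegral_const _ _
    exact ne_top_of_le_ne_top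
      (ENNReal.mul_ne_top ENNReal.ofReal_ne_top measure_Ioc_lt_top.ne) hcalc
  have htail : (∫⁻ r in Set.Ioi R₀, ENNReal.ofReal (r * b r ^ ((1:ℝ)/k))) = ⊤ := by
    rw [show Set.Ioi (0:ℝ) = Set.Ioc 0 R₀ ∪ Set.Ioi R₀ from (Set.Ioc_union_Ioi_eq_Ioi hR₀0.le).symm,
      lintegral_union measurableSet_Ioi (Set.Ioc_disjoint_Ioi le_rfl)] at hdiv
    rcases ENNReal.add_eq_top.1 hdiv with h | h
    · exact absurd h hfin
    · exact h
  -- step 5: dyadic decomposition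
  have hdisj0 := dyadic_disj R₀ hR₀0 0
  simp only [Nat.add_zero] at hdisj0
  have hsum : (∑' j : ℕ, ∫⁻ r in Set.Ioc (R₀*2^j) (R₀*2^(j+1)),
      ENNReal.ofReal (r * b r ^ ((1:ℝ)/k))) = ⊤ := by
    rw [← lintegral_iUnion (fun _ => measurableSet_Ioc) hdisj0, iUnion_dyadic R₀ hR₀0]
    exact htail
  set K : ℝ≥0∞ := ENNReal.ofReal (2 * ((n:ℝ)/(n.choose k)) ^ (-(1:ℝ)/k) * 4 ^ (((n:ℝ)-k)/k)) with hK_def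
  have hjle : ∀ j : ℕ, (∫⁻ r in Set.Ioc (R₀*2^j) (R₀*2^(j+1)), ENNReal.ofReal (r * b r ^ ((1:ℝ)/k))) ≤
      K * ∫⁻ u in Set.Ioc (R₀*2^(j+1)) (R₀*2^(j+2)), ENNReal.ofReal
        (((n : ℝ) * u ^ ((k : ℝ) - n) / (n.choose k) *
          ∫ s in (0:ℝ)..u, s ^ (n - 1) * b s) ^ ((1 : ℝ) / k)) := by
    intro j
    have h2j : (1:ℝ) ≤ 2^j := one_le_pow₀ one_le_two
    have hRj : 1 ≤ R₀ * 2^j := by nlinarith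
    have hF2 : 0 < ∫ s in (0:ℝ)..(2*(R₀*2^j)), s^(n-1) * b s := by
      apply hFposA
      nlinarith
    have hest := dyadic_est n k hn hk1 hkn b hb_cont hb_nonneg hRj hF2
    rw [show 2*(R₀*2^j) = R₀*2^(j+1) by ring, show 4*(R₀*2^j) = R₀*2^(j+2) by ring] at hest
    exact hest
  have hdisj1 := dyadic_disj R₀ hR₀0 1
  have hsum2 : (∑' j : ℕ, ∫⁻ u in Set.Ioc (R₀*2^(j+1)) (R₀*2^(j+2)), ENNReal.ofReal
      (((n : ℝ) * u ^ ((k : ℝ) - n) / (n.choose k) *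
        ∫ s in (0:ℝ)..u, s ^ (n - 1) * b s) ^ ((1 : ℝ) / k))) ≤
      ∫⁻ u in Set.Ioi (0:ℝ), ENNReal.ofReal
        (((n : ℝ) * u ^ ((k : ℝ) - n) / (n.choose k) *
          ∫ s in (0:ℝ)..u, s ^ (n - 1) * b s) ^ ((1 : ℝ) / k)) := by
    have heq : ∀ j : ℕ, R₀*2^(j+1+1) = R₀*2^(j+2) := fun j => by ring
    rw [← lintegral_iUnion (fun _ => measurableSet_Ioc) hdisj1]
    apply lintegral_mono_set
    apply Set.iUnion_subset
    intro j x hx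
    have h2j : (1:ℝ) ≤ 2^(j+1) := one_le_pow₀ one_le_two
    have : 0 < R₀ * 2^(j+1) := by positivity
    exact lt_trans this hx.1
  -- conclude
  by_contra hne
  have hlt : (∫⁻ u in Set.Ioi (0:ℝ), ENNReal.ofReal
      (((n : ℝ) * u ^ ((k : ℝ) - n) / (n.choose k) *
        ∫ s in (0:ℝ)..u, s ^ (n - 1) * b s) ^ ((1 : ℝ) / k))) < ⊤ := lt_top_iff_ne_top.2 hne
  have htop : (⊤:ℝ≥0∞) ≤ K * ∫⁻ u in Set.Ioi (0:ℝ), ENNReal.ofReal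
      (((n : ℝ) * u ^ ((k : ℝ) - n) / (n.choose k) *
        ∫ s in (0:ℝ)..u, s ^ (n - 1) * b s) ^ ((1 : ℝ) / k)) := by
    calc (⊤:ℝ≥0∞) = _ := hsum.symm
      _ ≤ ∑' j : ℕ, K * ∫⁻ u in Set.Ioc (R₀*2^(j+1)) (R₀*2^(j+2)), ENNReal.ofReal
          (((n : ℝ) * u ^ ((k : ℝ) - n) / (n.choose k) *
            ∫ s in (0:ℝ)..u, s ^ (n - 1) * b s) ^ ((1 : ℝ) / k)) := ENNReal.tsum_le_tsum hjle
      _ = K * ∑' j : ℕ, ∫⁻ u in Set.Ioc (R₀*2^(j+1)) (R₀*2^(j+2)), ENNReal.ofReal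
          (((n : ℝ) * u ^ ((k : ℝ) - n) / (n.choose k) *
            ∫ s in (0:ℝ)..u, s ^ (n - 1) * b s) ^ ((1 : ℝ) / k)) := ENNReal.tsum_mul_left
      _ ≤ _ := mul_le_mul_right hsum2 _
  exact absurd htop (not_le_of_gt (ENNReal.mul_lt_top ENNReal.ofReal_lt_top hlt))
end
end
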